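/- arXiv:2211.09056 — 10 statements merged into one kernel-verified Lean document; each statement's English description precedes it below -/
import Mathlib

section
/- Let 𝔽 be a field with algebraic closure 𝔽̄ and let S(λ) = [[A(λ), B(λ)], [−C(λ), D(λ)]] ∈ 𝔽[λ]^{(n+p)×(n+m)} be a polynomial system matrix with state matrix A(λ) and transfer function matrix G(λ). Then A(λ) is unimodular if and only if S(λ) is minimal and G(λ) is a polynomial matrix (i.e., all entries of G(λ) ∈ 𝔽(λ)^{p×m} lie in 𝔽[λ]). -/
open Polynomial Matrix

set_option maxHeartbeats 1000000
set_option synthInstance.maxHeartbeats 1000000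

/-- The image of a polynomial matrix in the field of rational functions. -/
noncomputable def toRat {F : Type*} [Field F] {ι κ : Type*}
    (M : Matrix ι κ (Polynomial F)) : Matrix ι κ (RatFunc F) :=
  M.map (algebraMap (Polynomial F) (RatFunc F))

section ToRat
variable {F : Type*} [Field F] {ι κ σ : Type*}

lemma toRat_apply (M : Matrix ι κ (Polynomial F)) (i : ι) (j : κ) :
    toRat M i j = algebraMap (Polynomial F) (RatFunc F) (M i j) := rfl

lemma toRat_mul [Fintype κ] (M : Matrix ι κ (Polynomial F)) (N : Matrix κ σ (Polynomial F)) :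
    toRat (M * N) = toRat M * toRat N := Matrix.map_mul

lemma toRat_add (M N : Matrix ι κ (Polynomial F)) : toRat (M + N) = toRat M + toRat N := by
  ext i j; simp [toRat_apply, map_add]

lemma toRat_sub (M N : Matrix ι κ (Polynomial F)) : toRat (M - N) = toRat M - toRat N := by
  ext i j; simp [toRat_apply, map_sub]

lemma toRat_neg (M : Matrix ι κ (Polynomial F)) : toRat (-M) = -toRat M := by
  ext i j; simp [toRat_apply, map_neg]

lemma toRat_smul (r : Polynomial F) (M : Matrix ι κ (Polynomial F)) :
    toRat (r • M) = algebraMap (Polynomial F) (RatFunc F) r • toRat M := by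
  ext i j; simp [toRat_apply, Matrix.smul_apply, smul_eq_mul, _root_.map_mul]

lemma toRat_one [DecidableEq ι] : toRat (1 : Matrix ι ι (Polynomial F)) = 1 :=
  Matrix.map_one _ (map_zero _) (map_one _)

lemma toRat_inj {M N : Matrix ι κ (Polynomial F)} (h : toRat M = toRat N) : M = N := by
  refine Matrix.ext fun i j => ?_
  exact RatFunc.algebraMap_injective F (congrFun (congrFun h i) j)

lemma toRat_det [DecidableEq ι] [Fintype ι] (M : Matrix ι ι (Polynomial F)) :
    (toRat M).det = algebraMap (Polynomial F) (RatFunc F) M.det :=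
  ((algebraMap (Polynomial F) (RatFunc F)).map_det M).symm

lemma toRat_adjugate [DecidableEq ι] [Fintype ι] (M : Matrix ι ι (Polynomial F)) :
    (toRat M).adjugate = toRat M.adjugate :=
  ((algebraMap (Polynomial F) (RatFunc F)).map_adjugate M).symm

end ToRat

section Rank
variable {K : Type*} [Field K]

lemma rank_eq_iff_surj' {n : ℕ} {κ : Type*} [Fintype κ] (M : Matrix (Fin n) κ K) :
    M.rank = n ↔ Function.Surjective M.mulVecLin := by
  rw [← LinearMap.range_eq_top]
  constructor
  · intro h
    apply Submodule.eq_top_of_finrank_eq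
    rw [Matrix.rank] at h
    rw [h, Module.finrank_fin_fun]
  · intro h
    rw [Matrix.rank, h, finrank_top, Module.finrank_fin_fun]

lemma rank_fromColumns_of_isUnit {n m : ℕ} (A : Matrix (Fin n) (Fin n) K)
    (B : Matrix (Fin n) (Fin m) K) (h : IsUnit A.det) :
    (Matrix.fromCols A B).rank = n := by
  rw [rank_eq_iff_surj']
  intro w
  refine ⟨Sum.elim (A⁻¹ *ᵥ w) 0, ?_⟩
  rw [Matrix.mulVecLin_apply, Matrix.fromCols_mulVec_sumElim, Matrix.mulVec_mulVec,
    Matrix.mul_nonsing_inv _ h, Matrix.one_mulVec, Matrix.mulVec_zero, add_zero]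

lemma rank_fromRows_of_isUnit {n p : ℕ} (A : Matrix (Fin n) (Fin n) K)
    (C : Matrix (Fin p) (Fin n) K) (h : IsUnit A.det) :
    (Matrix.fromRows A C).rank = n := by
  rw [← Matrix.rank_transpose, Matrix.transpose_fromRows]
  exact rank_fromColumns_of_isUnit _ _ (by rwa [Matrix.det_transpose])

end Rank

lemma exists_rightInv_of_single' {n : ℕ} {κ : Type*} [Fintype κ] {R : Type*} [CommRing R]
    (M : Matrix (Fin n) κ R) (h : ∀ i : Fin n, ∃ v : κ → R, M *ᵥ v = Pi.single i 1) :
    ∃ X : Matrix κ (Fin n) R, M * X = 1 := by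
  choose w hw using h
  refine ⟨Matrix.of (fun k i => w i k), Matrix.ext fun a i => ?_⟩
  have := congrFun (hw i) a
  simpa [Matrix.mul_apply, Matrix.mulVec, dotProduct, Matrix.one_apply,
    Pi.single_apply] using this

/-- A polynomial matrix over an algebraically closed field that has full row rank at every
point has a polynomial right inverse. -/
lemma exists_right_inverse {K : Type*} [Field K] [IsAlgClosed K] {n : ℕ} {κ : Type*}
    [Fintype κ] [DecidableEq κ] (M : Matrix (Fin n) κ (Polynomial K))
    (h : ∀ x : K, (M.map (fun q => q.eval x)).rank = n) :
    ∃ X : Matrix κ (Fin n) (Polynomial K), M * X = 1 := by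
  classical
  let N : Submodule (Polynomial K) (Fin n → Polynomial K) := LinearMap.range M.mulVecLin
  let J : Ideal (Polynomial K) :=
    { carrier := {r | ∀ v : Fin n → Polynomial K, r • v ∈ N}
      add_mem' := fun {a b} ha hb v => by rw [add_smul]; exact N.add_mem (ha v) (hb v)
      zero_mem' := fun v => by rw [zero_smul]; exact N.zero_mem
      smul_mem' := fun c r hr v => by
        rw [smul_eq_mul, mul_smul]; exact N.smul_mem c (hr v) }
  have hdet : ∀ Y : Matrix κ (Fin n) (Polynomial K), (M * Y).det ∈ J := by
    intro Y v
    refine ⟨Y *ᵥ ((M * Y).adjugate *ᵥ v), ?_⟩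
    rw [Matrix.mulVecLin_apply, Matrix.mulVec_mulVec, Matrix.mulVec_mulVec,
      Matrix.mul_adjugate, Matrix.smul_mulVec, Matrix.one_mulVec]
  have hx : ∀ x : K, ∃ r ∈ J, Polynomial.eval x r = 1 := by
    intro x
    have hsurj := (rank_eq_iff_surj' _).mp (h x)
    have hsingle : ∀ i : Fin n, ∃ v : κ → K,
        (M.map (fun q => q.eval x)) *ᵥ v = Pi.single i 1 := fun i => by
      simpa only [Matrix.mulVecLin_apply] using hsurj (Pi.single i 1)
    obtain ⟨Y₀, hY₀⟩ := exists_rightInv_of_single' _ hsingle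
    refine ⟨(M * Y₀.map Polynomial.C).det, hdet _, ?_⟩
    have hmap : (M * Y₀.map Polynomial.C).map (fun q => q.eval x)
        = M.map (fun q => q.eval x) * Y₀ := by
      rw [show (fun q : Polynomial K => q.eval x) = ⇑(Polynomial.evalRingHom x) from rfl,
        Matrix.map_mul]
      congr 1
      refine Matrix.ext fun i j => ?_
      simp [Polynomial.coe_evalRingHom]
    have := (Polynomial.evalRingHom x).map_det (M * Y₀.map Polynomial.C)
    rw [show ⇑(Polynomial.evalRingHom x) = (fun q : Polynomial K => q.eval x) from rfl] at this
    rw [show Polynomial.eval x (M * Y₀.map Polynomial.C).det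
        = (fun q : Polynomial K => q.eval x) (M * Y₀.map Polynomial.C).det from rfl]
    rw [show ((fun q : Polynomial K => q.eval x) (M * Y₀.map Polynomial.C).det)
        = ((M * Y₀.map Polynomial.C).map (fun q => q.eval x)).det from this ▸ rfl]
    rw [hmap, hY₀, Matrix.det_one]
  have hJtop : J = ⊤ := by
    by_contra hne
    obtain ⟨g, hgJ, hgu⟩ : ∃ g, g ∈ J ∧ ¬ IsUnit g ∧
        ∀ r ∈ J, ∃ s, r = s * g := by
      obtain ⟨g, hg⟩ := (IsPrincipalIdealRing.principal J).principal
      refine ⟨g, ?_, ?_, ?_⟩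
      · rw [hg]; exact Submodule.mem_span_singleton_self g
      · intro hu
        exact hne (by rw [hg]; exact Ideal.span_singleton_eq_top.mpr hu)
      · intro r hr
        rw [hg, Submodule.mem_span_singleton] at hr
        obtain ⟨s, rfl⟩ := hr
        exact ⟨s, rfl⟩
    obtain ⟨hgu, hdvd⟩ := hgu
    have hdeg : g.degree ≠ 0 := fun hdeg =>
      hgu (Polynomial.isUnit_iff_degree_eq_zero.mpr hdeg)
    obtain ⟨x, hx0⟩ := IsAlgClosed.exists_root g hdeg
    obtain ⟨r, hrJ, hr1⟩ := hx x
    obtain ⟨s, rfl⟩ := hdvd r hrJ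
    rw [Polynomial.eval_mul, hx0.eq_zero, mul_zero] at hr1
    exact zero_ne_one hr1
  have hone : ∀ v : Fin n → Polynomial K, v ∈ N := by
    intro v
    have h1 : (1 : Polynomial K) ∈ J := hJtop ▸ Submodule.mem_top
    simpa using h1 v
  refine exists_rightInv_of_single' _ fun i => ?_
  obtain ⟨w, hw⟩ := hone (Pi.single i 1)
  exact ⟨w, by simpa only [Matrix.mulVecLin_apply] using hw⟩

/-- The transfer function matrix is the polynomial matrix `P` iff the corresponding
cleared-denominator identity holds at the level of polynomial matrices. -/
lemma key_iff {L : Type*} [Field L] {n p m : ℕ}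
    (A : Matrix (Fin n) (Fin n) (Polynomial L))
    (B : Matrix (Fin n) (Fin m) (Polynomial L))
    (C : Matrix (Fin p) (Fin n) (Polynomial L))
    (D P : Matrix (Fin p) (Fin m) (Polynomial L))
    (hA : A.det ≠ 0) :
    toRat D + toRat C * (toRat A)⁻¹ * toRat B = toRat P ↔
      C * A.adjugate * B = A.det • (P - D) := by
  set d : RatFunc L := algebraMap (Polynomial L) (RatFunc L) A.det with hd
  have hd0 : d ≠ 0 := fun h => hA (RatFunc.algebraMap_injective L (h.trans (map_zero _).symm))
  have hinv : (toRat A)⁻¹ = d⁻¹ • toRat A.adjugate := by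
    rw [Matrix.inv_def, toRat_det, toRat_adjugate, ← hd, Ring.inverse_eq_inv']
  have lhs_eq : toRat C * (toRat A)⁻¹ * toRat B = d⁻¹ • toRat (C * A.adjugate * B) := by
    rw [hinv, Matrix.mul_smul, Matrix.smul_mul, toRat_mul, toRat_mul]
  constructor
  · intro h
    have h2 : d⁻¹ • toRat (C * A.adjugate * B) = toRat P - toRat D := by
      rw [← lhs_eq, ← h]; abel
    have h3 : toRat (C * A.adjugate * B) = d • (toRat P - toRat D) :=
      (inv_smul_eq_iff₀ hd0).mp h2
    apply toRat_inj
    rw [h3, toRat_smul, ← hd, toRat_sub]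
  · intro h
    have h3 : toRat (C * A.adjugate * B) = d • (toRat P - toRat D) := by
      rw [h, toRat_smul, ← hd, toRat_sub]
    have h2 : d⁻¹ • toRat (C * A.adjugate * B) = toRat P - toRat D :=
      (inv_smul_eq_iff₀ hd0).mpr h3
    rw [lhs_eq, h2]
    abel

/-- Splitting a product against a `fromColumns` matrix. -/
lemma fromColumns_mul_eq {R : Type*} [CommRing R] {n₁ n₂ : Type*} [Fintype n₁] [Fintype n₂]
    {ι κ : Type*} [DecidableEq n₁] [DecidableEq n₂]
    (U : Matrix ι n₁ R) (V : Matrix ι n₂ R) (X : Matrix (n₁ ⊕ n₂) κ R) :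
    Matrix.fromCols U V * X
      = U * X.submatrix Sum.inl id + V * X.submatrix Sum.inr id := by
  have hX : X = Matrix.fromRows (X.submatrix Sum.inl id) (X.submatrix Sum.inr id) := by
    refine Matrix.ext fun i j => ?_
    cases i <;> rfl
  conv_lhs => rw [hX]
  rw [Matrix.fromCols_mul_fromRows]

/-- Mapping a polynomial matrix to the algebraic closure and evaluating is the same as
evaluating by `aeval`. -/
lemma map_map_eval {F : Type*} [Field F] {ι κ : Type*}
    (M : Matrix ι κ (Polynomial F)) (x : AlgebraicClosure F) :
    (M.map ⇑(Polynomial.mapRingHom (algebraMap F (AlgebraicClosure F)))).map (fun q => q.eval x)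
      = M.map (fun q => Polynomial.aeval x q) := by
  refine Matrix.ext fun i j => ?_
  simp [Matrix.map_apply, Polynomial.aeval_def, Polynomial.eval_map]

lemma fromColumns_map {R S : Type*} {n₁ n₂ ι : Type*}
    (U : Matrix ι n₁ R) (V : Matrix ι n₂ R) (f : R → S) :
    (Matrix.fromCols U V).map f = Matrix.fromCols (U.map f) (V.map f) := by
  refine Matrix.ext fun i j => ?_
  cases j <;> rfl

/-- For a polynomial system matrix `S = [[A, B], [-C, D]]` with regular state
matrix `A` and transfer function matrix `G = D + C A⁻¹ B`, the matrix `A` is unimodular if and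
only if `S` is minimal (rank `[A(λ₀) B(λ₀)] = rank [A(λ₀); -C(λ₀)] = n` for all `λ₀` in the
algebraic closure of `F`) and `G` is a polynomial matrix. -/
theorem stmt_1 {F : Type*} [Field F] {n p m : ℕ}
    (A : Matrix (Fin n) (Fin n) (Polynomial F))
    (B : Matrix (Fin n) (Fin m) (Polynomial F))
    (C : Matrix (Fin p) (Fin n) (Polynomial F))
    (D : Matrix (Fin p) (Fin m) (Polynomial F))
    (hA : A.det ≠ 0) :
    IsUnit A.det ↔
      ((∀ x : AlgebraicClosure F,
          (Matrix.fromCols (A.map (fun q => Polynomial.aeval x q))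
              (B.map (fun q => Polynomial.aeval x q))).rank = n ∧
          (Matrix.fromRows (A.map (fun q => Polynomial.aeval x q))
              ((-C).map (fun q => Polynomial.aeval x q))).rank = n) ∧
        (∀ i j, ∃ q : Polynomial F,
          (toRat D + toRat C * (toRat A)⁻¹ * toRat B) i j
            = algebraMap (Polynomial F) (RatFunc F) q)) := by
  constructor
  · -- unimodular implies minimal and polynomial transfer function
    intro hU
    constructor
    · intro x
      have hdx : IsUnit (A.map (fun q => Polynomial.aeval x q)).det := by
        have hh := (Polynomial.aeval x (R := F)).map_det A
        exact hh ▸ hU.map (Polynomial.aeval x)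
      exact ⟨rank_fromColumns_of_isUnit _ _ hdx, rank_fromRows_of_isUnit _ _ hdx⟩
    · have hA1 : A * A⁻¹ = 1 := Matrix.mul_nonsing_inv A hU
      have hinv : (toRat A)⁻¹ = toRat A⁻¹ :=
        Matrix.inv_eq_right_inv (by rw [← toRat_mul, hA1, toRat_one])
      intro i j
      refine ⟨(D + C * A⁻¹ * B) i j, ?_⟩
      rw [hinv, ← toRat_mul, ← toRat_mul, ← toRat_add]
      rfl
  · -- minimal and polynomial transfer function imply unimodular
    rintro ⟨hrank, hpoly⟩
    classical
    set K := AlgebraicClosure F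
    set φ : Polynomial F →+* Polynomial K := Polynomial.mapRingHom (algebraMap F K) with hφ
    have hφinj : Function.Injective φ :=
      Polynomial.map_injective _ (algebraMap F K).injective
    -- choose the polynomial matrix equal to G
    set P : Matrix (Fin p) (Fin m) (Polynomial F) :=
      Matrix.of (fun i j => (hpoly i j).choose) with hPdef
    have hP : toRat D + toRat C * (toRat A)⁻¹ * toRat B = toRat P :=
      Matrix.ext fun i j => (hpoly i j).choose_spec
    have hIdF : C * A.adjugate * B = A.det • (P - D) := (key_iff A B C D P hA).mp hP
    -- move everything to the algebraic closure
    set A' := A.map φ with hA'def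
    set B' := B.map φ
    set C' := C.map φ
    set D' := D.map φ
    set P' := P.map φ
    have hmapsmul : ∀ {a b : Type} (r : Polynomial F) (X : Matrix a b (Polynomial F)),
        (r • X).map φ = φ r • X.map φ := by
      intro a b r X
      refine Matrix.ext fun i j => ?_
      simp [Matrix.map_apply, Matrix.smul_apply, smul_eq_mul, _root_.map_mul]
    have hmapmul : ∀ {a b c : Type} [Fintype b] (X : Matrix a b (Polynomial F))
        (Y : Matrix b c (Polynomial F)), (X * Y).map φ = X.map φ * Y.map φ := by
      intro a b c _ X Y
      exact Matrix.map_mul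
    have hdetA' : A'.det = φ A.det := (φ.map_det A).symm
    have hA'0 : A'.det ≠ 0 := by
      rw [hdetA']
      exact fun h => hA (hφinj (h.trans (map_zero φ).symm))
    have hIdK : C' * A'.adjugate * B' = A'.det • (P' - D') := by
      have := congrArg (fun M : Matrix (Fin p) (Fin m) (Polynomial F) => M.map φ) hIdF
      rw [hmapmul, hmapmul, hmapsmul] at this
      have hadj : A.adjugate.map ⇑φ = A'.adjugate := by
        have h' := φ.map_adjugate A
        simpa only [RingHom.mapMatrix_apply] using h'
      rw [hadj] at this
      rw [this, hdetA']
      congr 1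
      refine Matrix.ext fun i j => ?_
      simp [P', D', Matrix.map_apply, Matrix.sub_apply, map_sub]
    have hPK : toRat D' + toRat C' * (toRat A')⁻¹ * toRat B' = toRat P' :=
      (key_iff A' B' C' D' P' hA'0).mpr hIdK
    -- right inverse for [A' B']
    obtain ⟨X, hX⟩ : ∃ X : Matrix (Fin n ⊕ Fin m) (Fin n) (Polynomial K),
        Matrix.fromCols A' B' * X = 1 := by
      apply exists_right_inverse
      intro x
      rw [fromColumns_map, map_map_eval, map_map_eval]
      exact (hrank x).1
    set X₁ := X.submatrix Sum.inl id
    set X₂ := X.submatrix Sum.inr id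
    have h1 : A' * X₁ + B' * X₂ = 1 := by rw [← fromColumns_mul_eq, hX]
    -- left inverse for [A'; -C']
    obtain ⟨Y, hY⟩ : ∃ Y : Matrix (Fin n ⊕ Fin p) (Fin n) (Polynomial K),
        Matrix.fromCols A'ᵀ ((-C).map ⇑φ)ᵀ * Y = 1 := by
      apply exists_right_inverse
      intro x
      rw [fromColumns_map]
      have e1 : (A'ᵀ).map (fun q => q.eval x) = (A.map (fun q => Polynomial.aeval x q))ᵀ := by
        rw [Matrix.transpose_map]
        exact congrArg Matrix.transpose (map_map_eval A x)
      have e2 : (((-C).map ⇑φ)ᵀ).map (fun q => q.eval x)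
          = ((-C).map (fun q => Polynomial.aeval x q))ᵀ := by
        rw [Matrix.transpose_map]
        exact congrArg Matrix.transpose (map_map_eval (-C) x)
      rw [e1, e2, ← Matrix.transpose_fromRows, Matrix.rank_transpose]
      exact (hrank x).2
    set Z := (Y.submatrix Sum.inl id)ᵀ
    set W := (Y.submatrix Sum.inr id)ᵀ
    have hnegC : ((-C).map ⇑φ) = -C' := by
      refine Matrix.ext fun i j => ?_
      simp [C', Matrix.map_apply, map_neg]
    have h2 : Z * A' - W * C' = 1 := by
      have hsplit : A'ᵀ * Y.submatrix Sum.inl id + ((-C).map ⇑φ)ᵀ * Y.submatrix Sum.inr id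
          = 1 := by
        rw [← fromColumns_mul_eq, hY]
      have hT := congrArg Matrix.transpose hsplit
      rw [Matrix.transpose_add, Matrix.transpose_mul, Matrix.transpose_mul,
        Matrix.transpose_transpose, Matrix.transpose_transpose, Matrix.transpose_one,
        hnegC] at hT
      calc Z * A' - W * C'
          = Z * A' + W * (-C') := by rw [Matrix.mul_neg, sub_eq_add_neg]
        _ = 1 := hT
    -- now pass to rational functions over K
    have hdet0 : (toRat A').det ≠ 0 := by
      rw [toRat_det]
      exact fun h => hA'0 (RatFunc.algebraMap_injective K (h.trans (map_zero _).symm))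
    have hdetU : IsUnit (toRat A').det := isUnit_iff_ne_zero.mpr hdet0
    have hAA : toRat A' * (toRat A')⁻¹ = 1 := Matrix.mul_nonsing_inv _ hdetU
    have hAA' : (toRat A')⁻¹ * toRat A' = 1 := Matrix.nonsing_inv_mul _ hdetU
    have h1t : toRat A' * toRat X₁ + toRat B' * toRat X₂ = 1 := by
      rw [← toRat_mul, ← toRat_mul, ← toRat_add, h1, toRat_one]
    have hCB : toRat C' * (toRat A')⁻¹ * toRat B' = toRat P' - toRat D' := by
      rw [← hPK]; abel
    set E := C' * X₁ + (P' - D') * X₂ with hEdef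
    have hCA : toRat C' * (toRat A')⁻¹ = toRat E := by
      have e1 : toRat C' * (toRat A')⁻¹ * (toRat A' * toRat X₁) = toRat C' * toRat X₁ := by
        rw [Matrix.mul_assoc (toRat C') _ _, ← Matrix.mul_assoc (toRat A')⁻¹ _ _, hAA',
          Matrix.one_mul]
      have e2 : toRat C' * (toRat A')⁻¹ * (toRat B' * toRat X₂)
          = (toRat P' - toRat D') * toRat X₂ := by
        rw [← Matrix.mul_assoc, hCB]
      calc toRat C' * (toRat A')⁻¹
          = toRat C' * (toRat A')⁻¹ * (toRat A' * toRat X₁ + toRat B' * toRat X₂) := by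
            rw [h1t, Matrix.mul_one]
        _ = toRat C' * toRat X₁ + (toRat P' - toRat D') * toRat X₂ := by
            rw [Matrix.mul_add, e1, e2]
        _ = toRat E := by rw [hEdef, toRat_add, toRat_mul, toRat_mul, toRat_sub]
    have hfin : (toRat A')⁻¹ = toRat (Z - W * E) := by
      have h2t : toRat Z * toRat A' - toRat W * toRat C' = 1 := by
        rw [← toRat_mul, ← toRat_mul, ← toRat_sub, h2, toRat_one]
      calc (toRat A')⁻¹ = 1 * (toRat A')⁻¹ := (Matrix.one_mul _).symm
        _ = (toRat Z * toRat A' - toRat W * toRat C') * (toRat A')⁻¹ := by rw [h2t]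
        _ = toRat Z * (toRat A' * (toRat A')⁻¹)
            - toRat W * (toRat C' * (toRat A')⁻¹) := by
            rw [Matrix.sub_mul, Matrix.mul_assoc, Matrix.mul_assoc]
        _ = toRat Z - toRat W * toRat E := by rw [hAA, Matrix.mul_one, hCA]
        _ = toRat (Z - W * E) := by rw [toRat_sub, toRat_mul]
    have hfinal : A' * (Z - W * E) = 1 := by
      apply toRat_inj
      rw [toRat_mul, ← hfin, hAA, toRat_one]
    have hu' : IsUnit A'.det := by
      have := congrArg Matrix.det hfinal
      rw [Matrix.det_mul, Matrix.det_one] at this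
      exact IsUnit.of_mul_eq_one _ this
    -- transfer unitality back to F
    rw [Polynomial.isUnit_iff_degree_eq_zero]
    rw [hdetA'] at hu'
    rw [Polynomial.isUnit_iff_degree_eq_zero] at hu'
    rwa [hφ, Polynomial.coe_mapRingHom,
      Polynomial.degree_map_eq_of_injective (algebraMap F K).injective] at hu'
end

section
/- Let 𝔽 be a field with algebraic closure 𝔽̄, let S(λ) = [[A(λ), B(λ)], [−C(λ), D(λ)]] ∈ 𝔽[λ]^{(n+p)×(n+m)} be a polynomial system matrix with unimodular state matrix A(λ) and polynomial transfer function matrix P(λ) ∈ 𝔽[λ]^{p×m}, and let λ₀ ∈ 𝔽̄. Then the linear map E_ℓ : 𝒩_ℓ(P(λ₀)) → 𝒩_ℓ(S(λ₀)) defined by E_ℓ(yᵀ) = yᵀ[C(λ₀)A(λ₀)⁻¹ I_p] (the row vector obtained by concatenating yᵀC(λ₀)A(λ₀)⁻¹ and yᵀ) is a bijection between the left nullspaces over 𝔽̄ of P(λ₀) and of S(λ₀). -/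
/-!
Write `w = (x, y)` for a row vector split along the blocks of `S = [[A, B], [-C, D]]`.
Then `wᵀ S = 0` says `xᵀ A = yᵀ C` and `xᵀ B + yᵀ D = 0`. Since `A` is invertible, the first
equation determines `x = yᵀ C A⁻¹`, and substituting it into the second turns it into
`yᵀ (D + C A⁻¹ B) = 0`. So `y ↦ (yᵀ C A⁻¹, y)` is inverse to `w ↦ y`. Evaluation at `λ₀` is a
ring homomorphism, so it commutes with inverting the unimodular `A`.
-/

open Polynomial Matrix

namespace Matrix

section RingHom

variable {R K : Type*} [CommRing R] [CommRing K] {n : Type*} [Fintype n] [DecidableEq n]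
  (f : R →+* K) {A : Matrix n n R}

theorem isUnit_det_map (hA : IsUnit A.det) : IsUnit (A.map f).det :=
  f.map_det A ▸ hA.map f

theorem map_nonsing_inv (hA : IsUnit A.det) : A⁻¹.map f = (A.map f)⁻¹ :=
  (inv_eq_right_inv <| by
    rw [← Matrix.map_mul, mul_nonsing_inv A hA, Matrix.map_one _ f.map_zero f.map_one]).symm

end RingHom

section LeftNullspace

variable {K : Type*} [CommRing K] {n p m : Type*} [Fintype n] [DecidableEq n] [Fintype p]
  {A : Matrix n n K} (B : Matrix n m K) (C : Matrix p n K) (D : Matrix p m K)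

theorem vecMul_fromBlocks_neg_eq_zero_iff (hA : IsUnit A.det) (w : n ⊕ p → K) :
    w ᵥ* fromBlocks A B (-C) D = 0 ↔
      w ∘ Sum.inl = w ∘ Sum.inr ᵥ* (C * A⁻¹) ∧ w ∘ Sum.inr ᵥ* (D + C * A⁻¹ * B) = 0 := by
  have hfirst_block : ∀ x y, x ᵥ* A + y ᵥ* -C = 0 ↔ x = y ᵥ* (C * A⁻¹) := by
    intro x y
    rw [vecMul_neg, add_neg_eq_zero]
    constructor
    · intro h
      rw [← vecMul_vecMul, ← h, vecMul_vecMul, mul_nonsing_inv A hA, vecMul_one]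
    · rintro rfl
      rw [vecMul_vecMul, Matrix.mul_assoc, nonsing_inv_mul A hA, Matrix.mul_one]
  rw [vecMul_fromBlocks, ← Sum.elim_zero_zero, Sum.elim_eq_iff, hfirst_block]
  refine and_congr_right fun h => ?_
  rw [h, vecMul_vecMul, vecMul_add, add_comm]

theorem bijOn_leftNullspace_schurComplement_fromBlocks (hA : IsUnit A.det) :
    Set.BijOn (fun y : p → K => Sum.elim (y ᵥ* (C * A⁻¹)) y)
      {y | y ᵥ* (D + C * A⁻¹ * B) = 0} {w | w ᵥ* fromBlocks A B (-C) D = 0} := by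
  refine Set.InvOn.bijOn (f' := fun w => w ∘ Sum.inr)
    ⟨fun y _ => Sum.elim_comp_inr _ _, fun w hw => ?_⟩ (fun y hy => ?_)
    (fun w hw => ((vecMul_fromBlocks_neg_eq_zero_iff B C D hA w).1 hw).2)
  · simp only [← ((vecMul_fromBlocks_neg_eq_zero_iff B C D hA w).1 hw).1, Sum.elim_comp_inl_inr]
  · simpa only [Set.mem_ofPred_eq, vecMul_fromBlocks_neg_eq_zero_iff B C D hA, Sum.elim_comp_inl,
      Sum.elim_comp_inr, true_and] using hy

end LeftNullspace

end Matrix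

/-- Let `S = [[A, B], [-C, D]]` be a polynomial system matrix with unimodular
state matrix `A` and polynomial transfer function matrix `P = D + C A⁻¹ B`, and let `λ₀` be in
the algebraic closure of `F`. Then `yᵀ ↦ yᵀ [C(λ₀) A(λ₀)⁻¹  I_p]` is a bijection between the
left nullspaces of `P(λ₀)` and `S(λ₀)`. -/
theorem stmt_4 {F : Type*} [Field F] {n p m : ℕ}
    (A : Matrix (Fin n) (Fin n) (Polynomial F))
    (B : Matrix (Fin n) (Fin m) (Polynomial F))
    (C : Matrix (Fin p) (Fin n) (Polynomial F))
    (D : Matrix (Fin p) (Fin m) (Polynomial F))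
    (hA : IsUnit A.det)
    (S : Matrix (Fin n ⊕ Fin p) (Fin n ⊕ Fin m) (Polynomial F))
    (hS : S = Matrix.fromBlocks A B (-C) D)
    (P : Matrix (Fin p) (Fin m) (Polynomial F))
    (hP : P = D + C * A⁻¹ * B)
    (lam : AlgebraicClosure F) :
    Set.BijOn
      (fun y : Fin p → AlgebraicClosure F =>
        Sum.elim
          (Matrix.vecMul y ((C.map (fun q => Polynomial.aeval lam q)) *
            (A.map (fun q => Polynomial.aeval lam q))⁻¹)) y)
      {y | Matrix.vecMul y (P.map (fun q => Polynomial.aeval lam q)) = 0}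
      {w | Matrix.vecMul w (S.map (fun q => Polynomial.aeval lam q)) = 0} := by
  set ev : Polynomial F →+* AlgebraicClosure F := (aeval lam).toRingHom
  change Set.BijOn (fun y => Sum.elim (y ᵥ* (C.map ev * (A.map ev)⁻¹)) y)
    {y | y ᵥ* P.map ev = 0} {w | w ᵥ* S.map ev = 0}
  rw [hP, hS, Matrix.map_add _ ev.map_add, Matrix.map_mul, Matrix.map_mul, map_nonsing_inv ev hA,
    fromBlocks_map, Matrix.map_neg _ ev.map_neg]
  exact bijOn_leftNullspace_schurComplement_fromBlocks _ _ _ (isUnit_det_map ev hA)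
end

section
/- Let 𝔽 be a field, let P(λ) = P_kλ^k + ⋯ + P_1λ + P_0 ∈ 𝔽[λ]^{p×m} with k ≥ 2, and let C₁(λ) be the Frobenius companion form of P(λ). Partition rev₁C₁(λ) = [[D_r(λ), −C_r(λ)],[B_r(λ), A_r(λ)]] where D_r(λ) = P_k + λP_{k−1}, −C_r(λ) = [λP_{k−2}, …, λP_1, λP_0], B_r(λ) = [−λI_m; 0; …; 0], and A_r(λ) ∈ 𝔽[λ]^{(k−1)m×(k−1)m} has diagonal blocks I_m and subdiagonal blocks −λI_m. Then A_r(λ) is unimodular and the Schur complement D_r(λ) + C_r(λ)A_r(λ)⁻¹B_r(λ) equals rev_kP(λ) = P_k + λP_{k−1} + λ²P_{k−2} + ⋯ + λ^kP_0. -/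
/-! The state matrix is `A_r(λ) = L(λ) ⊗ I_m` with `L(λ)` unit lower bidiagonal (subdiagonal `-λ`),
so `det A_r = 1`. Forward substitution solves `A_r V = B_r` by `V = [-λ I; -λ² I; …; -λ^{k-1} I]`,
hence `C_r A_r⁻¹ B_r = C_r V = ∑ⱼ λ^{j+2} P_{k-2-j}`, and adding `D_r = P_k + λ P_{k-1}` gives
`rev_k P`. -/

open Polynomial Matrix
open scoped Kronecker

namespace Matrix

variable {R : Type*} [CommRing R]

def unitLowerBidiagonal (q : ℕ) (a : R) : Matrix (Fin q) (Fin q) R :=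
  of fun i j => if i = j then 1 else if (i : ℕ) = j + 1 then -a else 0

theorem det_unitLowerBidiagonal (q : ℕ) (a : R) : (unitLowerBidiagonal q a).det = 1 := by
  have hlower : (unitLowerBidiagonal q a).IsLowerTriangular := by
    intro i j (hij : i < j)
    rw [Fin.lt_def] at hij
    simp only [unitLowerBidiagonal, of_apply, Fin.ext_iff]
    rw [if_neg (by omega), if_neg (by omega)]
  rw [det_of_isLowerTriangular _ hlower]
  simp [unitLowerBidiagonal]

theorem unitLowerBidiagonal_mulVec_pow {q : ℕ} (a : R) (i : Fin q) :
    (unitLowerBidiagonal q a *ᵥ fun c => a ^ ((c : ℕ) + 1)) i =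
      if (i : ℕ) = 0 then a else 0 := by
  simp only [mulVec, dotProduct, unitLowerBidiagonal, of_apply]
  obtain ⟨i, hi⟩ := i
  rcases i with _ | j
  · rw [Finset.sum_eq_single ⟨0, hi⟩ (fun c _ hc => ?_) (by simp)]
    · simp
    · rw [if_neg (Ne.symm hc), if_neg (by simp)]; simp
  · rw [Finset.sum_eq_add ⟨j + 1, hi⟩ ⟨j, by omega⟩ (by simp [Fin.ext_iff]) (fun c _ hc => ?_)
      (by simp) (by simp)]
    · rw [if_pos rfl, if_neg (by simp), if_pos rfl, if_neg j.succ_ne_zero]; ring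
    · rw [if_neg (Ne.symm hc.1), if_neg (fun h => hc.2 (Fin.ext (by simp at h ⊢; omega)))]
      simp

def scalarBlockCol {κ : Type*} (μ : Type*) [DecidableEq μ] (v : κ → R) :
    Matrix (κ × μ) μ R :=
  of fun r j => if r.2 = j then v r.1 else 0

variable {ι κ μ : Type*} [Fintype κ] [Fintype μ] [DecidableEq μ]

theorem mul_scalarBlockCol_apply (M : Matrix ι (κ × μ) R) (v : κ → R) (i : ι) (j : μ) :
    (M * scalarBlockCol μ v) i j = ∑ c, M i (c, j) * v c := by
  simp [mul_apply, scalarBlockCol, Fintype.sum_prod_type]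

theorem kronecker_one_mul_scalarBlockCol (L : Matrix κ κ R) (v : κ → R) :
    (L ⊗ₖ (1 : Matrix μ μ R)) * scalarBlockCol μ v =
      scalarBlockCol μ (L *ᵥ v) := by
  ext r j
  rw [mul_scalarBlockCol_apply]
  simp only [kroneckerMap_apply, one_apply, scalarBlockCol, of_apply, mulVec, dotProduct]
  split_ifs <;> simp

end Matrix

theorem sum_range_pow_sub_mul_eq {R : Type*} [CommRing R] {k : ℕ} (hk : 2 ≤ k) (x : R)
    (c : ℕ → R) :
    ∑ i ∈ Finset.range (k + 1), x ^ (k - i) * c i =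
      c k + x * c (k - 1) + ∑ j : Fin (k - 1), x ^ ((j : ℕ) + 2) * c (k - 2 - j) := by
  obtain ⟨n, rfl⟩ : ∃ n, k = n + 2 := ⟨k - 2, by omega⟩
  have hreflect : ∑ i ∈ Finset.range (n + 1), x ^ (n + 2 - i) * c i =
      ∑ j ∈ Finset.range (n + 1), x ^ (j + 2) * c (n - j) := by
    rw [← Finset.sum_range_reflect]
    refine Finset.sum_congr rfl fun j hj => ?_
    rw [Finset.mem_range] at hj
    rw [show n + 2 - (n + 1 - 1 - j) = j + 2 by omega, show n + 1 - 1 - j = n - j by omega]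
  rw [Finset.sum_range_succ, Finset.sum_range_succ, hreflect,
    Fin.sum_univ_eq_sum_range (fun j => x ^ (j + 2) * c (n + 2 - 2 - j))]
  simp only [Nat.add_sub_cancel, Nat.sub_self, pow_zero, show n + 2 - (n + 1) = 1 by omega,
    show n + 2 - 1 = n + 1 by omega]
  ring

theorem stmt_6_general {F : Type*} [Field F] {p m k : ℕ} (hk : 2 ≤ k)
    (Pc : ℕ → Matrix (Fin p) (Fin m) F)
    -- `D_r(λ) = P_k + λ P_{k-1}`
    (Dr : Matrix (Fin p) (Fin m) (Polynomial F))
    (hDr : Dr = (Pc k).map Polynomial.C +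
      (Polynomial.X : Polynomial F) • (Pc (k-1)).map Polynomial.C)
    -- `-C_r(λ) = [λ P_{k-2}, …, λ P_1, λ P_0]`
    (mCr : Matrix (Fin p) (Fin (k-1) × Fin m) (Polynomial F))
    (hmCr : mCr = Matrix.of fun i c =>
      Polynomial.X * Polynomial.C (Pc (k-2-(c.1 : ℕ)) i c.2))
    -- `B_r(λ) = [-λ I_m; 0; …; 0]`
    (Br : Matrix (Fin (k-1) × Fin m) (Fin m) (Polynomial F))
    (hBr : Br = Matrix.of fun r j =>
      if (r.1 : ℕ) = 0 ∧ r.2 = j then -(Polynomial.X : Polynomial F) else 0)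
    -- `A_r(λ)`: diagonal blocks `I_m`, subdiagonal blocks `-λ I_m`
    (Ar : Matrix (Fin (k-1) × Fin m) (Fin (k-1) × Fin m) (Polynomial F))
    (hAr : Ar = Matrix.of fun r c =>
      if r.2 = c.2 then
        (if r.1 = c.1 then 1
         else if (r.1 : ℕ) = (c.1 : ℕ) + 1 then -(Polynomial.X : Polynomial F) else 0)
      else 0) :
    -- `A_r(λ)` is unimodular
    IsUnit Ar.det ∧
    -- the Schur complement `D_r + C_r A_r⁻¹ B_r` equals `rev_k P(λ)` (here `C_r = -mCr`)
    Dr + (-mCr) * Ar⁻¹ * Br = ∑ i ∈ Finset.range (k+1),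
      ((Polynomial.X : Polynomial F) ^ (k-i)) • (Pc i).map Polynomial.C := by
  have hAr_kron : Ar = unitLowerBidiagonal (k - 1) X ⊗ₖ 1 := by
    rw [hAr]
    refine Matrix.ext fun r c => ?_
    simp only [of_apply, kroneckerMap_apply, unitLowerBidiagonal, one_apply]
    split_ifs <;> simp
  have hdet : IsUnit Ar.det := by
    simp [hAr_kron, det_kronecker, det_unitLowerBidiagonal]
  have hAV : Ar * scalarBlockCol (Fin m) (-fun c : Fin (k - 1) => (X : F[X]) ^ ((c : ℕ) + 1)) =
      Br := by
    rw [hAr_kron, kronecker_one_mul_scalarBlockCol, hBr, mulVec_neg]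
    refine Matrix.ext fun r j => ?_
    simp only [scalarBlockCol, of_apply, Pi.neg_apply, unitLowerBidiagonal_mulVec_pow]
    split_ifs <;> simp_all
  refine ⟨hdet, ?_⟩
  refine Matrix.ext fun i j => ?_
  rw [Matrix.mul_assoc, ← hAV, nonsing_inv_mul_cancel_left _ _ hdet, Matrix.add_apply,
    mul_scalarBlockCol_apply]
  simp only [hDr, hmCr, Matrix.sum_apply, Matrix.add_apply, Matrix.smul_apply, map_apply,
    Matrix.neg_apply, Pi.neg_apply, of_apply, smul_eq_mul]
  rw [sum_range_pow_sub_mul_eq hk]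
  congr 1
  refine Finset.sum_congr rfl fun c _ => ?_
  ring

/-- The reversal `rev₁ C₁(λ)` of the Frobenius companion form of
`P(λ) = P_k λ^k + ⋯ + P_0`, partitioned as `[[D_r, -C_r], [B_r, A_r]]` with state matrix
`A_r(λ)`, has `A_r(λ)` unimodular and Schur complement
`D_r + C_r A_r⁻¹ B_r = rev_k P(λ) = P_k + λ P_{k-1} + ⋯ + λ^k P_0`. -/
theorem stmt_6 {F : Type*} [Field F] {p m k : ℕ} (hk : 2 ≤ k)
    (Pc : ℕ → Matrix (Fin p) (Fin m) F)
    (P : Matrix (Fin p) (Fin m) (Polynomial F))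
    (hP : P = ∑ i ∈ Finset.range (k+1),
      ((Polynomial.X : Polynomial F) ^ i) • (Pc i).map Polynomial.C)
    -- `D_r(λ) = P_k + λ P_{k-1}`
    (Dr : Matrix (Fin p) (Fin m) (Polynomial F))
    (hDr : Dr = (Pc k).map Polynomial.C +
      (Polynomial.X : Polynomial F) • (Pc (k-1)).map Polynomial.C)
    -- `-C_r(λ) = [λ P_{k-2}, …, λ P_1, λ P_0]`
    (mCr : Matrix (Fin p) (Fin (k-1) × Fin m) (Polynomial F))
    (hmCr : mCr = Matrix.of fun i c =>
      Polynomial.X * Polynomial.C (Pc (k-2-(c.1 : ℕ)) i c.2))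
    -- `B_r(λ) = [-λ I_m; 0; …; 0]`
    (Br : Matrix (Fin (k-1) × Fin m) (Fin m) (Polynomial F))
    (hBr : Br = Matrix.of fun r j =>
      if (r.1 : ℕ) = 0 ∧ r.2 = j then -(Polynomial.X : Polynomial F) else 0)
    -- `A_r(λ)`: diagonal blocks `I_m`, subdiagonal blocks `-λ I_m`
    (Ar : Matrix (Fin (k-1) × Fin m) (Fin (k-1) × Fin m) (Polynomial F))
    (hAr : Ar = Matrix.of fun r c =>
      if r.2 = c.2 then
        (if r.1 = c.1 then 1
         else if (r.1 : ℕ) = (c.1 : ℕ) + 1 then -(Polynomial.X : Polynomial F) else 0)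
      else 0) :
    -- `A_r(λ)` is unimodular
    IsUnit Ar.det ∧
    -- the Schur complement `D_r + C_r A_r⁻¹ B_r` equals `rev_k P(λ)` (here `C_r = -mCr`)
    Dr + (-mCr) * Ar⁻¹ * Br = ∑ i ∈ Finset.range (k+1),
      ((Polynomial.X : Polynomial F) ^ (k-i)) • (Pc i).map Polynomial.C :=
  stmt_6_general hk Pc Dr hDr mCr hmCr Br hBr Ar hAr
end

section
/- Let 𝔽 be a field with algebraic closure 𝔽̄, let P(λ) = P_kλ^k + ⋯ + P_1λ + P_0 ∈ 𝔽[λ]^{p×m} with k ≥ 2, let C₁(λ) be the Frobenius companion form of P(λ), and let λ₀ ∈ 𝔽̄. Then the linear map F_r : 𝒩_r(P(λ₀)) → 𝒩_r(C₁(λ₀)) defined by F_r(x) = [λ₀^{k−1}x; λ₀^{k−2}x; …; λ₀x; x] (i.e., x ↦ (Λ_{k−1}(λ₀) ⊗ I_m)x with Λ_{k−1}(λ) = [λ^{k−1}, λ^{k−2}, …, λ, 1]ᵀ) is a bijection between the right nullspaces over 𝔽̄ of P(λ₀) and of C₁(λ₀). -/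
/-!
Write a vector of `𝔽̄^{(k-1)m} ⊕ 𝔽̄^m` as blocks `v₀, …, v_{k-2}, v_{k-1}`. The lower block rows
of `C₁(λ₀)` say exactly that `v_t = λ₀ v_{t+1}` for `t < k - 1`, so the kernel vectors of those rows
are the vectors `(λ₀^{k-1-t} x)_t` with `x = v_{k-1}`. On such a vector the top block row of
`C₁(λ₀)` collects `∑_s λ₀^s P_s x = P(λ₀) x`. Hence `x ↦ (λ₀^{k-1-t} x)_t` maps the kernel of
`P(λ₀)` onto that of `C₁(λ₀)`, and it is injective since `x` is the last block.
-/

open Polynomial Matrix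

theorem eq_pow_mul_of_eq_mul_succ {M : Type*} [Monoid M] {u : ℕ → M} {a : M} {n : ℕ}
    (h : ∀ t < n, u t = a * u (t + 1)) {t : ℕ} (ht : t ≤ n) : u t = a ^ (n - t) * u n := by
  induction ht using Nat.decreasingInduction with
  | self => simp
  | of_succ t htn ih =>
    rw [h t htn, ih, ← mul_assoc, ← pow_succ', Nat.sub_add_eq, Nat.sub_add_cancel (by omega)]

section Companion

variable {R A : Type*} [CommRing R] [CommRing A] [Algebra R A] {p m n : ℕ}

/-- The `j`-th coordinates of the blocks `v₀, …, v_{n-1}, v_n` of `v`, as a sequence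
(constantly `v_n j` beyond `n`). -/
def blockSeq (v : (Fin n × Fin m) ⊕ Fin m → A) (j : Fin m) (t : ℕ) : A :=
  if h : t < n then v (.inl (⟨t, h⟩, j)) else v (.inr j)

/-- The vector `(Λ_n(a) ⊗ I_m) x = [aⁿ x; …; a x; x]`. -/
def powerStack (a : A) (x : Fin m → A) : (Fin n × Fin m) ⊕ Fin m → A :=
  Sum.elim (fun rc => a ^ (n - (rc.1 : ℕ)) * x rc.2) x

theorem blockSeq_powerStack (a : A) (x : Fin m → A) (j : Fin m) {t : ℕ} (ht : t ≤ n) :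
    blockSeq (powerStack a x : (Fin n × Fin m) ⊕ Fin m → A) j t = a ^ (n - t) * x j := by
  unfold blockSeq powerStack
  split_ifs with h
  · rfl
  · simp [show t = n by omega]

theorem forall_blockSeq_eq_mul_succ_iff (v : (Fin n × Fin m) ⊕ Fin m → A) (a : A) :
    (∀ j, ∀ t < n, blockSeq v j t = a * blockSeq v j (t + 1)) ↔
      v = powerStack a (v ∘ Sum.inr) := by
  constructor
  · intro h
    ext (⟨t, j⟩ | j)
    · have := eq_pow_mul_of_eq_mul_succ (h j) t.isLt.le
      simpa [blockSeq, powerStack] using this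
    · rfl
  · intro hv j t ht
    rw [hv, blockSeq_powerStack _ _ _ ht.le, blockSeq_powerStack _ _ _ ht, ← mul_assoc,
      ← pow_succ', show n - (t + 1) + 1 = n - t by omega]

theorem bijOn_powerStack {P : Matrix (Fin p) (Fin m) A}
    {L : Matrix (Fin p ⊕ (Fin n × Fin m)) ((Fin n × Fin m) ⊕ Fin m) A} {a : A}
    (htop : ∀ x i, (L *ᵥ powerStack a x) (.inl i) = (P *ᵥ x) i)
    (hbot : ∀ v r, (L *ᵥ v) (.inr r) = a * blockSeq v r.2 (r.1 + 1) - blockSeq v r.2 r.1) :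
    Set.BijOn (powerStack a) {x | P *ᵥ x = 0} {v | L *ᵥ v = 0} := by
  have hker : ∀ v, (∀ r, (L *ᵥ v) (.inr r) = 0) ↔ v = powerStack a (v ∘ Sum.inr) := by
    intro v
    rw [← forall_blockSeq_eq_mul_succ_iff]
    simp only [hbot, sub_eq_zero, Prod.forall, eq_comm (a := a * _)]
    exact ⟨fun h j t ht => h ⟨t, ht⟩ j, fun h t j => h j t t.isLt⟩
  refine ⟨fun x (hx : P *ᵥ x = 0) => ?_, fun x _ y _ h => funext fun j => congrFun h (.inr j),
    fun v (hv : L *ᵥ v = 0) => ⟨v ∘ Sum.inr, ?_, ((hker v).1 fun r => by rw [hv]; rfl).symm⟩⟩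
  · ext (i | r)
    · rw [htop, hx]
      rfl
    · exact (hker _).2 rfl r
  · have hv' := (hker v).1 fun r => by rw [hv]; rfl
    ext i
    rw [← htop, ← hv', hv]
    rfl

noncomputable def frobeniusCompanion (Pc : ℕ → Matrix (Fin p) (Fin m) R) (k : ℕ) :
    Matrix (Fin p ⊕ (Fin (k - 1) × Fin m)) ((Fin (k - 1) × Fin m) ⊕ Fin m) R[X] :=
  fromBlocks
    (of fun i c =>
      if (c.1 : ℕ) = 0 then X * C (Pc k i c.2) + C (Pc (k - 1) i c.2)
      else C (Pc (k - 1 - (c.1 : ℕ)) i c.2))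
    ((Pc 0).map C)
    (of fun r c =>
      if r.2 = c.2 then
        (if r.1 = c.1 then -1 else if (c.1 : ℕ) = (r.1 : ℕ) + 1 then X else 0)
      else 0)
    (of fun r j => if (r.1 : ℕ) = k - 2 ∧ r.2 = j then X else 0)

theorem sum_ite_val_eq_succ (f : Fin n → A) (a : A) (i : Fin n) :
    ∑ x, (if i = x then -f x else if (x : ℕ) = i + 1 then a * f x else 0) =
      -f i + if h : (i : ℕ) + 1 < n then a * f ⟨i + 1, h⟩ else 0 := by
  have hsplit : ∀ x : Fin n, (if i = x then -f x else if (x : ℕ) = i + 1 then a * f x else 0) =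
      (if i = x then -f x else 0) + (if (x : ℕ) = i + 1 then a * f x else 0) := by
    intro x
    split_ifs <;> simp_all
  rw [Finset.sum_congr rfl fun x _ => hsplit x, Finset.sum_add_distrib, Finset.sum_ite_eq,
    if_pos (Finset.mem_univ _)]
  congr 1
  split_ifs with h
  · rw [Finset.sum_eq_single ⟨i + 1, h⟩ (fun x _ hx => if_neg fun e => hx (Fin.ext e)) (by simp),
      if_pos rfl]
  · exact Finset.sum_eq_zero fun x _ => if_neg (by omega)

theorem frobeniusCompanion_aeval_mulVec_inr (k : ℕ) (Pc : ℕ → Matrix (Fin p) (Fin m) R) (a : A)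
    (v : (Fin (k - 1) × Fin m) ⊕ Fin m → A) (r : Fin (k - 1) × Fin m) :
    ((frobeniusCompanion Pc k).map (aeval a) *ᵥ v) (.inr r) =
      a * blockSeq v r.2 (r.1 + 1) - blockSeq v r.2 r.1 := by
  rw [frobeniusCompanion, fromBlocks_map, fromBlocks_mulVec]
  simp only [Sum.elim_inr, Pi.add_apply, mulVec, dotProduct, map_apply, of_apply,
    apply_ite (aeval a), aeval_neg, map_one, aeval_X, map_zero, Function.comp_apply, ite_mul,
    neg_mul, one_mul, zero_mul, Fintype.sum_prod_type, Finset.sum_ite_eq, Finset.mem_univ,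
    ↓reduceIte, ite_and, Finset.sum_ite_irrel, Finset.sum_const_zero, blockSeq, mul_dite,
    Fin.is_lt, ↓reduceDIte, Fin.eta, Prod.mk.eta]
  rw [sum_ite_val_eq_succ (fun x => v (.inl (x, r.2)))]
  have := r.1.isLt
  split_ifs <;> first | omega | ring

theorem frobeniusCompanion_aeval_mulVec_powerStack_inl {k : ℕ} (hk : 2 ≤ k)
    (Pc : ℕ → Matrix (Fin p) (Fin m) R) (a : A) (x : Fin m → A) (i : Fin p) :
    ((frobeniusCompanion Pc k).map (aeval a) *ᵥ powerStack a x) (.inl i) =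
      ∑ s ∈ Finset.range (k + 1), a ^ s * ((Pc s).map (algebraMap R A) *ᵥ x) i := by
  set g : ℕ → A := fun s => a ^ s * ((Pc s).map (algebraMap R A) *ᵥ x) i
  have hentry : ∀ (t : Fin (k - 1)) (j : Fin m),
      aeval a (if (t : ℕ) = 0 then X * C (Pc k i j) + C (Pc (k - 1) i j)
        else C (Pc (k - 1 - t) i j)) * (a ^ (k - 1 - (t : ℕ)) * x j) =
      (if (t : ℕ) = 0 then a ^ k * (algebraMap R A (Pc k i j) * x j) else 0) +
        a ^ (k - 1 - (t : ℕ)) * (algebraMap R A (Pc (k - 1 - t) i j) * x j) := by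
    intro t j
    split_ifs with ht
    · rw [ht, Nat.sub_zero, show k = k - 1 + 1 by omega]
      simp only [map_add, map_mul, aeval_X, aeval_C, Nat.add_sub_cancel]
      ring
    · simp only [aeval_C]
      ring
  have hlow : ∑ t : Fin (k - 1), g (k - 1 - t) = ∑ s ∈ Finset.range (k - 1), g (s + 1) := by
    rw [Fin.sum_univ_eq_sum_range (fun t => g (k - 1 - t)), ← Finset.sum_range_reflect]
    exact Finset.sum_congr rfl fun t ht => by
      rw [Finset.mem_range] at ht
      congr 1
      omega
  have hsum : ∑ s ∈ Finset.range (k + 1), g s =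
      g k + ∑ s ∈ Finset.range (k - 1), g (s + 1) + g 0 := by
    obtain ⟨n, rfl⟩ : ∃ n, k = n + 1 := ⟨k - 1, by omega⟩
    rw [Finset.sum_range_succ, Finset.sum_range_succ', Nat.add_sub_cancel]
    ring
  have hg0 : g 0 = ((Pc 0).map (algebraMap R A) *ᵥ x) i := by simp [g]
  rw [frobeniusCompanion, fromBlocks_map, fromBlocks_mulVec]
  simp only [Sum.elim_inl, Pi.add_apply, mulVec, dotProduct, map_apply, of_apply,
    Fintype.sum_prod_type, powerStack, Function.comp_apply, Sum.elim_inr, hentry]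
  simp only [Finset.sum_add_distrib, ← Finset.mul_sum, Finset.sum_ite_irrel,
    Finset.sum_const_zero, aeval_C]
  change (∑ t : Fin (k - 1), if (t : ℕ) = 0 then g k else 0) + ∑ t : Fin (k - 1), g (k - 1 - t) +
    ((Pc 0).map (algebraMap R A) *ᵥ x) i = _
  rw [hsum, hg0, hlow, Fin.sum_univ_eq_sum_range (fun t => if t = 0 then g k else 0),
    Finset.sum_ite_eq', if_pos (Finset.mem_range.2 (by omega))]

theorem aeval_sum_X_pow_smul_map_C_mulVec (S : Finset ℕ) (Pc : ℕ → Matrix (Fin p) (Fin m) R)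
    (a : A) (x : Fin m → A) :
    (∑ s ∈ S, (X : R[X]) ^ s • (Pc s).map C).map (aeval a) *ᵥ x =
      ∑ s ∈ S, a ^ s • ((Pc s).map (algebraMap R A) *ᵥ x) := by
  ext i
  simp only [mulVec, dotProduct, Matrix.map_apply, Matrix.sum_apply, Matrix.smul_apply,
    smul_eq_mul, map_sum, map_mul, map_pow, aeval_X, aeval_C, Finset.sum_apply, Pi.smul_apply,
    Finset.mul_sum, Finset.sum_mul]
  rw [Finset.sum_comm]
  simp only [mul_assoc]

end Companion

/-- For the Frobenius companion form `C₁(λ)` of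
`P(λ) = P_k λ^k + ⋯ + P_0` and any `λ₀` in the algebraic closure of `F`, the map
`x ↦ (Λ_{k-1}(λ₀) ⊗ I_m) x = [λ₀^{k-1} x; …; λ₀ x; x]` is a bijection between the right
nullspaces of `P(λ₀)` and `C₁(λ₀)`. -/
theorem stmt_8 {F : Type*} [Field F] {p m k : ℕ} (hk : 2 ≤ k)
    (Pc : ℕ → Matrix (Fin p) (Fin m) F)
    (P : Matrix (Fin p) (Fin m) (Polynomial F))
    (hP : P = ∑ i ∈ Finset.range (k+1),
      ((Polynomial.X : Polynomial F) ^ i) • (Pc i).map Polynomial.C)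
    -- the Frobenius companion form `C₁(λ)`
    (C1 : Matrix (Fin p ⊕ (Fin (k-1) × Fin m)) ((Fin (k-1) × Fin m) ⊕ Fin m) (Polynomial F))
    (hC1 : C1 = Matrix.fromBlocks
      (Matrix.of fun i c =>
        if (c.1 : ℕ) = 0 then
          Polynomial.X * Polynomial.C (Pc k i c.2) + Polynomial.C (Pc (k-1) i c.2)
        else Polynomial.C (Pc (k-1-(c.1 : ℕ)) i c.2))
      ((Pc 0).map Polynomial.C)
      (Matrix.of fun r c =>
        if r.2 = c.2 then
          (if r.1 = c.1 then -1
           else if (c.1 : ℕ) = (r.1 : ℕ) + 1 then Polynomial.X else 0)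
        else 0)
      (Matrix.of fun r j =>
        if (r.1 : ℕ) = k-2 ∧ r.2 = j then Polynomial.X else 0))
    (lam : AlgebraicClosure F) :
    Set.BijOn
      (fun x : Fin m → AlgebraicClosure F =>
        Sum.elim (fun rc : Fin (k-1) × Fin m => lam ^ (k-1-(rc.1 : ℕ)) * x rc.2) x)
      {x | (P.map (fun q => Polynomial.aeval lam q)).mulVec x = 0}
      {v | (C1.map (fun q => Polynomial.aeval lam q)).mulVec v = 0} := by
  have hC : C1 = frobeniusCompanion Pc k := hC1
  subst hC hP
  refine bijOn_powerStack (fun x i => ?_) (frobeniusCompanion_aeval_mulVec_inr k Pc lam)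
  rw [frobeniusCompanion_aeval_mulVec_powerStack_inl hk, aeval_sum_X_pow_smul_map_C_mulVec]
  simp [Finset.sum_apply]
end

section
/- Let 𝔽 be a field, let α_j, β_j, γ_j ∈ 𝔽 with α_j ≠ 0 for j ≥ 0, and let φ_{−1}(λ) = 0, φ_0(λ) = 1 and α_jφ_{j+1}(λ) = (λ−β_j)φ_j(λ) − γ_jφ_{j−1}(λ) for j ≥ 0. Let P(λ) = Σ_{i=0}^{k} P_iφ_i(λ) ∈ 𝔽[λ]^{p×m} with k ≥ 2, and let C_φ(λ) be the comrade pencil of P(λ). Partition C_φ(λ) = [[−C(λ), D(λ)],[A(λ), B(λ)]], where the first block row is [−C(λ), D(λ)] with D(λ) = P_0 its last block column, and the remaining block rows form [A(λ), B(λ)] with A(λ) ∈ 𝔽[λ]^{(k−1)m×(k−1)m} consisting of their first k−1 block columns. Then A(λ) is unimodular and the Schur complement D(λ) + C(λ)A(λ)⁻¹B(λ) equals P(λ); consequently C_φ(λ) is a linearization of P(λ). -/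
/-
Write the comrade pencil as `[[Cm, D], [A, B]]`. Its lower block rows are `a ⊗ I_m` with `a` upper
triangular with diagonal `-α_j`, so `A` is unimodular. The three-term recurrence says precisely
that these block rows annihilate `(φ_{k-1}, …, φ_1, φ_0) ⊗ I_m`, i.e. that
`A⁻¹ B = -(φ_{k-1}, …, φ_1) ⊗ I_m`. The Schur complement `D - Cm A⁻¹ B` is then the first block
row applied to `(φ_{k-1}, …, φ_0)`: this is `Σ_{i<k} P_i φ_i` plus
`P_k α_{k-1}⁻¹ ((λ - β_{k-1}) φ_{k-1} - γ_{k-1} φ_{k-2}) = P_k φ_k`. Block elimination with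
`[[I, -Cm A⁻¹], [0, A⁻¹]]` on the left and `[[I, -A⁻¹ B], [0, I]]` on the right turns the pencil
into `[[0, P], [I, 0]]`, and swapping the two block columns gives `diag(P, I)`.
-/

open Polynomial Matrix

namespace Matrix

section BlockColumn

variable {R ι κ l : Type*} [NonUnitalNonAssocSemiring R] [Fintype ι] [Fintype κ]
  [DecidableEq κ]

def blockColumn (v : ι → R) : Matrix (ι × κ) κ R :=
  of fun r j => if r.2 = j then v r.1 else 0

theorem mul_blockColumn_apply (M : Matrix l (ι × κ) R) (v : ι → R) (i : l) (j : κ) :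
    (M * blockColumn (κ := κ) v) i j = ∑ t, M i (t, j) * v t := by
  simp [blockColumn, mul_apply, Fintype.sum_prod_type]

theorem blockDiagonal_const_mul_blockColumn (a : Matrix ι ι R) (v : ι → R) :
    blockDiagonal (fun _ : κ => a) * blockColumn (κ := κ) v = blockColumn (a *ᵥ v) := by
  ext r j
  rw [mul_blockColumn_apply]
  simp [blockColumn, blockDiagonal_apply, mulVec, dotProduct, eq_comm]

end BlockColumn

section Unimodular

variable {R : Type*} [CommRing R]

theorem isUnit_det_of_isUpperTriangular {n : Type*} [Fintype n] [DecidableEq n] [LinearOrder n]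
    {M : Matrix n n R} (hM : M.IsUpperTriangular) (hdiag : ∀ i, IsUnit (M i i)) :
    IsUnit M.det := by
  rw [det_of_isUpperTriangular hM]
  exact IsUnit.prod_univ_iff.mpr hdiag

theorem isUnit_det_blockDiagonal_const {n o : Type*} [Fintype n] [DecidableEq n] [Fintype o]
    [DecidableEq o] {a : Matrix n n R} (ha : IsUnit a.det) :
    IsUnit (blockDiagonal fun _ : o => a).det := by
  rw [det_blockDiagonal]
  exact IsUnit.prod_univ_iff.mpr fun _ => ha

theorem exists_isUnit_det_mul_fromBlocks_mul_eq_schur {l m n : Type*} [Fintype l]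
    [DecidableEq l] [Fintype m] [DecidableEq m] [Fintype n] [DecidableEq n]
    (C : Matrix l n R) (D : Matrix l m R) (A : Matrix n n R) (B : Matrix n m R)
    (hA : IsUnit A.det) :
    ∃ (U : Matrix (l ⊕ n) (l ⊕ n) R) (V : Matrix (n ⊕ m) (m ⊕ n) R),
      IsUnit U.det ∧ IsUnit (V.submatrix (Equiv.sumComm m n) id).det ∧
      U * fromBlocks C D A B * V = fromBlocks (D - C * A⁻¹ * B) 0 0 1 := by
  set U : Matrix (l ⊕ n) (l ⊕ n) R := fromBlocks 1 (-(C * A⁻¹)) 0 A⁻¹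
  set W : Matrix (n ⊕ m) (n ⊕ m) R := fromBlocks 1 (-(A⁻¹ * B)) 0 1
  refine ⟨U, W.submatrix id (Equiv.sumComm m n), ?_, ?_, ?_⟩
  · rw [det_fromBlocks_zero₂₁, det_one, one_mul]
    exact isUnit_nonsing_inv_det A hA
  · simp [W]
  · have hUMW : U * fromBlocks C D A B * W = fromBlocks 0 (D - C * A⁻¹ * B) 1 0 := by
      simp [U, W, fromBlocks_multiply, nonsing_inv_mul _ hA, Matrix.mul_assoc, sub_eq_add_neg]
    rw [← submatrix_id_id (U * fromBlocks C D A B),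
      ← submatrix_mul _ _ _ _ _ Function.bijective_id, hUMW]
    exact (fromBlocks_submatrix_sum_swap_right _ _ _ _ id).trans (submatrix_id_id _)

end Unimodular

end Matrix

theorem Fin.sum_ite_val_eq {M : Type*} [AddCommMonoid M] {n : ℕ} (s : ℕ) (f : Fin n → M) :
    ∑ c : Fin n, (if (c : ℕ) = s then f c else 0) = if h : s < n then f ⟨s, h⟩ else 0 := by
  split_ifs with h
  · rw [Fintype.sum_eq_single ⟨s, h⟩ fun c hc => if_neg fun hcs => hc (Fin.ext hcs)]
    simp
  · exact Finset.sum_eq_zero fun c _ => if_neg fun hcs : (c : ℕ) = s => h (hcs ▸ c.isLt)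

namespace ComradePencil

variable {F : Type*} [Field F] (α β γ : ℕ → F) (k : ℕ)

/-- The lower block rows of `C_φ` are `[blockDiagonal (fun _ => lowerLeft), blockColumn lowerRight]`;
row `r` carries the recurrence of index `k - 2 - r`. -/
noncomputable def lowerLeft : Matrix (Fin (k - 1)) (Fin (k - 1)) F[X] :=
  of fun r c =>
    if c = r then -C (α (k - 2 - r))
    else if (c : ℕ) = r + 1 then X - C (β (k - 2 - r))
    else if (c : ℕ) = r + 2 then -C (γ (k - 2 - r))
    else 0

noncomputable def lowerRight : Fin (k - 1) → F[X] := fun r =>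
  if (r : ℕ) + 1 = k - 1 then X - C (β (k - 2 - r))
  else if (r : ℕ) + 2 = k - 1 then -C (γ (k - 2 - r))
  else 0

theorem isUnit_det_lowerLeft (hα : ∀ j, α j ≠ 0) : IsUnit (lowerLeft α β γ k).det := by
  refine isUnit_det_of_isUpperTriangular (fun r c (hcr : c < r) => ?_) fun r => ?_
  · simp only [lowerLeft, of_apply]
    rw [if_neg hcr.ne, if_neg (by omega), if_neg (by omega)]
  · simp only [lowerLeft, of_apply, ↓reduceIte, IsUnit.neg_iff, Polynomial.isUnit_C]
    exact (hα _).isUnit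

theorem lowerLeft_mulVec_apply (v : ℕ → F[X]) (r : Fin (k - 1)) :
    (lowerLeft α β γ k *ᵥ fun c => v c) r =
      -C (α (k - 2 - r)) * v r
      + (if (r : ℕ) + 1 < k - 1 then (X - C (β (k - 2 - r))) * v (r + 1) else 0)
      + (if (r : ℕ) + 2 < k - 1 then -C (γ (k - 2 - r)) * v (r + 2) else 0) := by
  have hsplit : ∀ c : Fin (k - 1), lowerLeft α β γ k r c * v c =
      (if (c : ℕ) = r then -C (α (k - 2 - r)) * v c else 0)
      + (if (c : ℕ) = r + 1 then (X - C (β (k - 2 - r))) * v c else 0)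
      + (if (c : ℕ) = r + 2 then -C (γ (k - 2 - r)) * v c else 0) := by
    intro c
    simp only [lowerLeft, of_apply, Fin.ext_iff]
    split_ifs <;> first | omega | ring
  simp only [mulVec, dotProduct, hsplit, Finset.sum_add_distrib, Fin.sum_ite_val_eq,
    dif_pos r.isLt, dite_eq_ite]

theorem lowerLeft_mulVec (φ : ℕ → F[X]) (hφ0 : φ 0 = 1)
    (hφ1 : C (α 0) * φ 1 = (X - C (β 0)) * φ 0)
    (hφrec : ∀ j : ℕ, C (α (j + 1)) * φ (j + 2)
      = (X - C (β (j + 1))) * φ (j + 1) - C (γ (j + 1)) * φ j) :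
    (lowerLeft α β γ k *ᵥ fun c => -φ (k - 1 - c)) = lowerRight β γ k := by
  funext r
  have hr := r.isLt
  rw [lowerLeft_mulVec_apply α β γ k (fun c => -φ (k - 1 - c))]
  simp only [lowerRight]
  obtain ⟨j, hj⟩ : ∃ j, k - 2 - r = j := ⟨_, rfl⟩
  rw [hj, show k - 1 - r = j + 1 by omega]
  rcases j with _ | _ | j
  · rw [if_neg (by omega), if_neg (by omega), if_pos (by omega)]
    linear_combination hφ1 + (X - C (β 0)) * hφ0
  · rw [if_pos (by omega), if_neg (by omega), if_neg (by omega), if_pos (by omega),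
      show k - 1 - (r + 1) = 1 by omega]
    linear_combination hφrec 0 - C (γ 1) * hφ0
  · rw [if_pos (by omega), if_pos (by omega), if_neg (by omega), if_neg (by omega),
      show k - 1 - (r + 1) = j + 2 by omega, show k - 1 - (r + 2) = j + 1 by omega]
    linear_combination hφrec (j + 1)

/-- Entry `t` of the first block row of `C_φ` when the coefficients `P_i` are replaced by scalars
`c i`. Entry `k - 1` is the last column `D(λ)`, which carries the `γ`-correction when `k = 2`. -/
noncomputable def topRow (c : ℕ → F) (t : ℕ) : F[X] :=
  if t = 0 then C (α (k - 1))⁻¹ * ((X - C (β (k - 1))) * C (c k)) + C (c (k - 1))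
  else if t = 1 then C (c (k - 2)) - C (γ (k - 1) * (α (k - 1))⁻¹ * c k)
  else C (c (k - 1 - t))

theorem sum_topRow_mul (φ : ℕ → F[X]) (hk : 2 ≤ k) (hα : α (k - 1) ≠ 0)
    (hrec : C (α (k - 1)) * φ k = (X - C (β (k - 1))) * φ (k - 1) - C (γ (k - 1)) * φ (k - 2))
    (c : ℕ → F) :
    ∑ t ∈ Finset.range k, topRow α β γ k c t * φ (k - 1 - t) =
      ∑ i ∈ Finset.range (k + 1), φ i * C (c i) := by
  obtain ⟨q, rfl⟩ : ∃ q, k = q + 2 := ⟨k - 2, by omega⟩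
  simp only [Nat.reduceSubDiff, Nat.add_sub_cancel] at hα hrec
  have hinv : C (α (q + 1))⁻¹ * C (α (q + 1)) = 1 := by
    rw [← C_mul, inv_mul_cancel₀ hα, C_1]
  have hlow : ∑ t ∈ Finset.range q,
      topRow α β γ (q + 2) c (t + 1 + 1) * φ (q + 2 - 1 - (t + 1 + 1))
      = ∑ i ∈ Finset.range q, φ i * C (c i) := by
    rw [← Finset.sum_range_reflect]
    refine Finset.sum_congr rfl fun t ht => ?_
    rw [Finset.mem_range] at ht
    simp only [topRow, Nat.add_eq_zero_iff, one_ne_zero, and_false, ↓reduceIte]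
    rw [if_neg (by omega), show q + 2 - 1 - (q - 1 - t + 1 + 1) = t by omega, mul_comm]
  rw [Finset.sum_range_succ', Finset.sum_range_succ', hlow, Finset.sum_range_succ,
    Finset.sum_range_succ, Finset.sum_range_succ]
  simp only [topRow, zero_add, one_ne_zero, ↓reduceIte, C_mul, Nat.reduceSubDiff, Nat.sub_zero,
    Nat.add_sub_cancel]
  linear_combination (-C (c (q + 2)) * C (α (q + 1))⁻¹) * hrec + C (c (q + 2)) * φ (q + 2) * hinv

variable {p m : ℕ} (Pc : ℕ → Matrix (Fin p) (Fin m) F)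

noncomputable def topLeft : Matrix (Fin p) (Fin (k - 1) × Fin m) F[X] :=
  of fun i c => topRow α β γ k (fun n => Pc n i c.2) c.1

noncomputable def topRight : Matrix (Fin p) (Fin m) F[X] :=
  of fun i j =>
    if k - 1 = 1 then C (Pc (k - 2) i j) - C (γ (k - 1) * (α (k - 1))⁻¹ * Pc k i j)
    else C (Pc 0 i j)

theorem topRight_sub_topLeft_mul_blockColumn (φ : ℕ → F[X]) (hk : 2 ≤ k) (hα : α (k - 1) ≠ 0)
    (hrec : C (α (k - 1)) * φ k = (X - C (β (k - 1))) * φ (k - 1) - C (γ (k - 1)) * φ (k - 2))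
    (hφ0 : φ 0 = 1) :
    topRight α γ k Pc - topLeft α β γ k Pc * blockColumn (κ := Fin m)
      (fun c : Fin (k - 1) => -φ (k - 1 - c)) = ∑ i ∈ Finset.range (k + 1), φ i • (Pc i).map C := by
  ext i j : 1
  set c : ℕ → F := fun n => Pc n i j
  have hright : topRight α γ k Pc i j = topRow α β γ k c (k - 1) * φ (k - 1 - (k - 1)) := by
    simp only [topRight, topRow, c, of_apply, Nat.sub_self, hφ0, mul_one]
    split_ifs <;> first | omega | rfl
  rw [Matrix.sub_apply, mul_blockColumn_apply, hright]
  simp only [Matrix.sum_apply, Matrix.smul_apply, map_apply, smul_eq_mul, topLeft, of_apply,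
    mul_neg, Finset.sum_neg_distrib, sub_neg_eq_add]
  rw [← sum_topRow_mul α β γ k φ hk hα hrec,
    Fin.sum_univ_eq_sum_range (fun t => topRow α β γ k c t * φ (k - 1 - t)), add_comm,
    ← Finset.sum_range_succ, Nat.sub_add_cancel (by omega)]

end ComradePencil

/-- The comrade pencil `C_φ(λ)` of
`P(λ) = Σ_{i=0}^{k} P_i φ_i(λ)`, written in a polynomial basis satisfying the three-term
recurrence `α_j φ_{j+1}(λ) = (λ - β_j) φ_j(λ) - γ_j φ_{j-1}(λ)` (with `φ_{-1} = 0`,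
`φ_0 = 1`, `α_j ≠ 0`), partitioned as `[[-C(λ), D(λ)], [A(λ), B(λ)]]`, has `A(λ)` unimodular
and Schur complement `D + C A⁻¹ B = P`; consequently `C_φ(λ)` is a linearization of `P`. -/
theorem stmt_9 {F : Type*} [Field F] {p m k : ℕ} (hk : 2 ≤ k)
    (α β γ : ℕ → F) (hα : ∀ j, α j ≠ 0)
    (φ : ℕ → Polynomial F)
    (hφ0 : φ 0 = 1)
    (hφ1 : Polynomial.C (α 0) * φ 1 = (Polynomial.X - Polynomial.C (β 0)) * φ 0)
    (hφrec : ∀ j : ℕ, Polynomial.C (α (j+1)) * φ (j+2)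
      = (Polynomial.X - Polynomial.C (β (j+1))) * φ (j+1) - Polynomial.C (γ (j+1)) * φ j)
    (Pc : ℕ → Matrix (Fin p) (Fin m) F)
    (P : Matrix (Fin p) (Fin m) (Polynomial F))
    (hP : P = ∑ i ∈ Finset.range (k+1), φ i • (Pc i).map Polynomial.C)
    -- `-C(λ)`: the first `k-1` block columns of the first block row of `C_φ(λ)`
    (Cm : Matrix (Fin p) (Fin (k-1) × Fin m) (Polynomial F))
    (hCm : Cm = Matrix.of fun i c =>
      if (c.1 : ℕ) = 0 then
        Polynomial.C ((α (k-1))⁻¹) * ((Polynomial.X - Polynomial.C (β (k-1))) *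
          Polynomial.C (Pc k i c.2)) + Polynomial.C (Pc (k-1) i c.2)
      else if (c.1 : ℕ) = 1 then
        Polynomial.C (Pc (k-2) i c.2) - Polynomial.C (γ (k-1) * (α (k-1))⁻¹ * Pc k i c.2)
      else Polynomial.C (Pc (k-1-(c.1 : ℕ)) i c.2))
    -- `D(λ)`: the last block column of the first block row of `C_φ(λ)`
    (D : Matrix (Fin p) (Fin m) (Polynomial F))
    (hD : D = Matrix.of fun i j =>
      if k-1 = 1 then
        Polynomial.C (Pc (k-2) i j) - Polynomial.C (γ (k-1) * (α (k-1))⁻¹ * Pc k i j)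
      else Polynomial.C (Pc 0 i j))
    -- `A(λ)`: the first `k-1` block columns of the lower block rows
    (A : Matrix (Fin (k-1) × Fin m) (Fin (k-1) × Fin m) (Polynomial F))
    (hA : A = Matrix.of fun r c =>
      if r.2 = c.2 then
        (if c.1 = r.1 then -Polynomial.C (α (k-2-(r.1 : ℕ)))
         else if (c.1 : ℕ) = (r.1 : ℕ) + 1 then Polynomial.X - Polynomial.C (β (k-2-(r.1 : ℕ)))
         else if (c.1 : ℕ) = (r.1 : ℕ) + 2 then -Polynomial.C (γ (k-2-(r.1 : ℕ)))
         else 0)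
      else 0)
    -- `B(λ)`: the last block column of the lower block rows
    (B : Matrix (Fin (k-1) × Fin m) (Fin m) (Polynomial F))
    (hB : B = Matrix.of fun r j =>
      if r.2 = j then
        (if (r.1 : ℕ) + 1 = k-1 then Polynomial.X - Polynomial.C (β (k-2-(r.1 : ℕ)))
         else if (r.1 : ℕ) + 2 = k-1 then -Polynomial.C (γ (k-2-(r.1 : ℕ)))
         else 0)
      else 0)
    -- the comrade pencil `C_φ(λ) = [[-C, D], [A, B]]`
    (Cφ : Matrix (Fin p ⊕ (Fin (k-1) × Fin m)) ((Fin (k-1) × Fin m) ⊕ Fin m) (Polynomial F))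
    (hCφ : Cφ = Matrix.fromBlocks Cm D A B) :
    -- `A(λ)` is unimodular
    IsUnit A.det ∧
    -- the Schur complement `D + C A⁻¹ B` equals `P` (here `C = -Cm`)
    D + (-Cm) * A⁻¹ * B = P ∧
    -- `C_φ(λ)` is a linearization of `P(λ)`
    (∃ (U₁ : Matrix (Fin p ⊕ (Fin (k-1) × Fin m)) (Fin p ⊕ (Fin (k-1) × Fin m)) (Polynomial F))
       (V₁ : Matrix ((Fin (k-1) × Fin m) ⊕ Fin m) (Fin m ⊕ (Fin (k-1) × Fin m)) (Polynomial F)),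
       IsUnit U₁.det ∧
       IsUnit ((V₁.submatrix (Equiv.sumComm (Fin m) (Fin (k-1) × Fin m)) id).det) ∧
       U₁ * Cφ * V₁ = Matrix.fromBlocks P 0 0
         (1 : Matrix (Fin (k-1) × Fin m) (Fin (k-1) × Fin m) (Polynomial F))) := by
  have hA' : A = blockDiagonal fun _ : Fin m => ComradePencil.lowerLeft α β γ k := hA
  have hB' : B = blockColumn (ComradePencil.lowerRight β γ k) := hB
  have hCm' : Cm = ComradePencil.topLeft α β γ k Pc := hCm
  have hD' : D = ComradePencil.topRight α γ k Pc := hD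
  have hAdet : IsUnit A.det :=
    hA' ▸ isUnit_det_blockDiagonal_const (ComradePencil.isUnit_det_lowerLeft α β γ k hα)
  have hAX : A * blockColumn (κ := Fin m) (fun c : Fin (k - 1) => -φ (k - 1 - c)) = B := by
    rw [hA', hB', blockDiagonal_const_mul_blockColumn,
      ComradePencil.lowerLeft_mulVec α β γ k φ hφ0 hφ1 hφrec]
  have hrec : C (α (k - 1)) * φ k
      = (X - C (β (k - 1))) * φ (k - 1) - C (γ (k - 1)) * φ (k - 2) := by
    obtain ⟨q, rfl⟩ : ∃ q, k = q + 2 := ⟨k - 2, by omega⟩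
    exact hφrec q
  have hSchur : D - Cm * A⁻¹ * B = P := by
    rw [Matrix.mul_assoc, ← hAX, nonsing_inv_mul_cancel_left _ _ hAdet, hD', hCm', hP]
    exact ComradePencil.topRight_sub_topLeft_mul_blockColumn α β γ k Pc φ hk (hα _) hrec hφ0
  obtain ⟨U, V, hU, hV, hUV⟩ := exists_isUnit_det_mul_fromBlocks_mul_eq_schur Cm D A B hAdet
  rw [Matrix.neg_mul, Matrix.neg_mul, ← sub_eq_add_neg]
  exact ⟨hAdet, hSchur, U, V, hU, hV, by rw [hCφ, hUV, hSchur]⟩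
end

section
/- Let 𝔽 be a field, let α_j, β_j, γ_j ∈ 𝔽 with α_j ≠ 0 for j ≥ 0, and let φ_{−1}(λ) = 0, φ_0(λ) = 1 and α_jφ_{j+1}(λ) = (λ−β_j)φ_j(λ) − γ_jφ_{j−1}(λ) for j ≥ 0. Let P(λ) = Σ_{i=0}^{k} P_iφ_i(λ) ∈ 𝔽[λ]^{p×m} with k ≥ 2, and let C_φ(λ) be the comrade pencil of P(λ). Partition rev₁C_φ(λ) = [[D̃(λ), −C̃(λ)],[B̃(λ), Ã(λ)]], where D̃(λ) = ((1−λβ_{k−1})/α_{k−1})P_k + λP_{k−1} is the top-left p×m block and Ã(λ) ∈ 𝔽[λ]^{(k−1)m×(k−1)m} is the bottom-right block. Then Ã(0) is invertible, f(λ) := λ^{k−1}φ_{k−1}(1/λ) is a polynomial with f(0) ≠ 0, and the Schur complement T(λ) = D̃(λ) + C̃(λ)Ã(λ)⁻¹B̃(λ) satisfies f(λ)T(λ) = rev_kP(λ) := λ^kP(1/λ). -/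
open Polynomial Matrix

set_option synthInstance.maxHeartbeats 1000000
set_option maxHeartbeats 1000000

lemma aux_row {R : Type*} [Field R] (x : R) (A B C G : ℕ → R) (K : ℕ)
    (h0 : A 0 * G 1 = (1 - B 0 * x) * G 0)
    (hrec : ∀ j, A (j+1) * G (j+2) = (1 - B (j+1) * x) * G (j+1) - C (j+1) * x^2 * G j)
    (hGK : G (K+1) ≠ 0)
    (n : ℕ) (hn : n ≤ K) :
    (if 1 ≤ n then -(x * A (K-n)) * (-(x^(n-1+1) * G (K-(n-1))) / G (K+1)) else 0)
      + (1 - x * B (K-n)) * (-(x^(n+1) * G (K-n)) / G (K+1))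
      + (if n+1 ≤ K then -(x * C (K-n)) * (-(x^(n+1+1) * G (K-(n+1))) / G (K+1)) else 0)
    = if n = 0 then -(x * A K) else 0 := by
  rcases Nat.eq_zero_or_pos n with hn0 | hn0
  · subst hn0
    rw [if_neg (by omega : ¬ 1 ≤ 0), if_pos rfl]
    rcases Nat.eq_zero_or_pos K with hK0 | hK0
    · subst hK0
      rw [if_neg (by omega)]
      field_simp
      linear_combination x * h0
    · rw [if_pos (by omega)]
      have h := hrec (K-1)
      rw [show K-1+1 = K from by omega, show K-1+2 = K+1 from by omega] at h
      rw [show K-(0+1) = K-1 from by omega]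
      field_simp
      linear_combination x * h
  · rw [if_pos (by omega : 1 ≤ n), if_neg (by omega : ¬ n = 0)]
    rcases Nat.eq_or_lt_of_le hn with hnK | hnK
    · subst hnK
      rw [if_neg (by omega), Nat.sub_self, show n-(n-1) = 1 from by omega,
        show n-1+1 = n from by omega]
      field_simp
      linear_combination (x^(n+1)) * h0
    · rw [if_pos (by omega)]
      have h := hrec (K-n-1)
      rw [show K-n-1+1 = K-n from by omega, show K-n-1+2 = K-(n-1) from by omega] at h
      rw [show K-(n+1) = K-n-1 from by omega, show n-1+1 = n from by omega]
      field_simp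
      linear_combination (x^(n+1)) * h

lemma reflect_sum' {R : Type*} [CommSemiring R] {ι : Type*} (N : ℕ) (s : Finset ι)
    (f : ι → Polynomial R) :
    Polynomial.reflect N (∑ i ∈ s, f i) = ∑ i ∈ s, Polynomial.reflect N (f i) := by
  classical
  induction s using Finset.induction_on with
  | empty => simp
  | insert _ _ h ih =>
    rw [Finset.sum_insert h, Finset.sum_insert h, Polynomial.reflect_add, ih]

/-- The reversal `rev₁ C_φ(λ)` of the comrade pencil of
`P(λ) = Σ_{i=0}^{k} P_i φ_i(λ)`, partitioned as `[[D̃(λ), -C̃(λ)], [B̃(λ), Ã(λ)]]` with state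
matrix `Ã(λ)`, has `Ã(0)` invertible; moreover `f(λ) = λ^{k-1} φ_{k-1}(1/λ)` is a polynomial
with `f(0) ≠ 0` and the Schur complement `T = D̃ + C̃ Ã⁻¹ B̃` satisfies
`f(λ) T(λ) = rev_k P(λ) = λ^k P(1/λ)`. -/
theorem stmt_10 {F : Type*} [Field F] {p m k : ℕ} (hk : 2 ≤ k)
    (α β γ : ℕ → F) (hα : ∀ j, α j ≠ 0)
    (φ : ℕ → Polynomial F)
    (hφ0 : φ 0 = 1)
    (hφ1 : Polynomial.C (α 0) * φ 1 = (Polynomial.X - Polynomial.C (β 0)) * φ 0)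
    (hφrec : ∀ j : ℕ, Polynomial.C (α (j+1)) * φ (j+2)
      = (Polynomial.X - Polynomial.C (β (j+1))) * φ (j+1) - Polynomial.C (γ (j+1)) * φ j)
    (Pc : ℕ → Matrix (Fin p) (Fin m) F)
    (P : Matrix (Fin p) (Fin m) (Polynomial F))
    (hP : P = ∑ i ∈ Finset.range (k+1), φ i • (Pc i).map Polynomial.C)
    -- `D̃(λ) = ((1 - λ β_{k-1})/α_{k-1}) P_k + λ P_{k-1}`: the top-left `p × m` block
    (Dt : Matrix (Fin p) (Fin m) (Polynomial F))
    (hDt : Dt = Matrix.of fun i j =>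
      Polynomial.C ((α (k-1))⁻¹) * ((1 - Polynomial.X * Polynomial.C (β (k-1))) *
        Polynomial.C (Pc k i j)) + Polynomial.X * Polynomial.C (Pc (k-1) i j))
    -- `-C̃(λ)`: the remaining block columns of the first block row of `rev₁ C_φ(λ)`
    (mCt : Matrix (Fin p) (Fin (k-1) × Fin m) (Polynomial F))
    (hmCt : mCt = Matrix.of fun i c =>
      if (c.1 : ℕ) = 0 then
        Polynomial.X * Polynomial.C (Pc (k-2) i c.2)
          - Polynomial.X * Polynomial.C (γ (k-1) * (α (k-1))⁻¹ * Pc k i c.2)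
      else Polynomial.X * Polynomial.C (Pc (k-2-(c.1 : ℕ)) i c.2))
    -- `B̃(λ) = [-λ α_{k-2} I_m; 0; …; 0]`: the first block column of the lower block rows
    (Bt : Matrix (Fin (k-1) × Fin m) (Fin m) (Polynomial F))
    (hBt : Bt = Matrix.of fun r j =>
      if (r.1 : ℕ) = 0 ∧ r.2 = j then -(Polynomial.X * Polynomial.C (α (k-2))) else 0)
    -- `Ã(λ)`: the bottom-right `(k-1)m × (k-1)m` block of `rev₁ C_φ(λ)`
    (At : Matrix (Fin (k-1) × Fin m) (Fin (k-1) × Fin m) (Polynomial F))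
    (hAt : At = Matrix.of fun r c =>
      if r.2 = c.2 then
        (if (c.1 : ℕ) + 1 = (r.1 : ℕ) then -(Polynomial.X * Polynomial.C (α (k-2-(r.1 : ℕ))))
         else if c.1 = r.1 then 1 - Polynomial.X * Polynomial.C (β (k-2-(r.1 : ℕ)))
         else if (c.1 : ℕ) = (r.1 : ℕ) + 1 then -(Polynomial.X * Polynomial.C (γ (k-2-(r.1 : ℕ))))
         else 0)
      else 0) :
    -- `Ã(0)` is invertible
    IsUnit (At.map (fun q => Polynomial.eval 0 q)).det ∧
    -- `f(λ) = λ^{k-1} φ_{k-1}(1/λ)` is a polynomial with `f(0) ≠ 0`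
    (Polynomial.reflect (k-1) (φ (k-1))).eval 0 ≠ 0 ∧
    -- `f(λ) T(λ) = rev_k P(λ)` where `T = D̃ + C̃ Ã⁻¹ B̃` (here `C̃ = -mCt`)
    (algebraMap (Polynomial F) (RatFunc F) (Polynomial.reflect (k-1) (φ (k-1)))) •
        (toRat Dt + toRat (-mCt) * (toRat At)⁻¹ * toRat Bt)
      = toRat (P.map (Polynomial.reflect k)) := by
  obtain ⟨K, rfl⟩ : ∃ K, k = K + 2 := ⟨k - 2, by omega⟩
  clear hk
  simp only [show K+2-1 = K+1 from rfl, show K+2-2 = K from rfl] at hDt hmCt hBt hAt ⊢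
  -- basic degree and leading coefficient facts
  have hφd : ∀ j, (φ j).natDegree ≤ j ∧ (φ j).coeff j ≠ 0 := by
    have key : ∀ j, ((φ j).natDegree ≤ j ∧ (φ j).coeff j ≠ 0) ∧
        ((φ (j+1)).natDegree ≤ j+1 ∧ (φ (j+1)).coeff (j+1) ≠ 0) := by
      intro j
      induction j with
      | zero =>
        have h1 : φ 1 = C (α 0)⁻¹ * ((X - C (β 0)) * φ 0) := by
          rw [← hφ1, ← mul_assoc, ← C_mul, inv_mul_cancel₀ (hα 0), C_1, one_mul]
        have hd : (φ 1).natDegree ≤ 1 := by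
          rw [h1, hφ0, mul_one]
          refine le_trans (natDegree_C_mul_le _ _) ?_
          simp [natDegree_X_sub_C]
        have hc : (φ 1).coeff 1 ≠ 0 := by
          rw [h1, hφ0, mul_one, coeff_C_mul]
          simp only [coeff_sub, coeff_X_one, coeff_C, if_neg (by norm_num : ¬(1:ℕ) = 0),
            sub_zero, mul_one]
          exact inv_ne_zero (hα 0)
        exact ⟨⟨by simp [hφ0], by simp [hφ0]⟩, hd, hc⟩
      | succ j ih =>
        refine ⟨ih.2, ?_, ?_⟩
        · have h2 : φ (j+2) = C (α (j+1))⁻¹ *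
              ((X - C (β (j+1))) * φ (j+1) - C (γ (j+1)) * φ j) := by
            rw [← hφrec, ← mul_assoc, ← C_mul, inv_mul_cancel₀ (hα _), C_1, one_mul]
          rw [h2]
          refine le_trans (natDegree_C_mul_le _ _) (le_trans (natDegree_sub_le _ _) ?_)
          refine max_le (le_trans (natDegree_mul_le) ?_) (le_trans (natDegree_mul_le) ?_)
          · have := ih.2.1
            have hX : (X - C (β (j+1))).natDegree ≤ 1 := natDegree_X_sub_C_le (β (j+1))
            omega
          · have := ih.1.1
            simp only [natDegree_C]
            omega
        · have hco := congrArg (fun q => coeff q (j+2)) (hφrec j)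
          simp only [coeff_C_mul, coeff_sub, sub_mul, coeff_X_mul] at hco
          have h0 : (φ j).coeff (j+2) = 0 :=
            coeff_eq_zero_of_natDegree_lt (lt_of_le_of_lt ih.1.1 (by omega))
          have h1 : (φ (j+1)).coeff (j+2) = 0 :=
            coeff_eq_zero_of_natDegree_lt (lt_of_le_of_lt ih.2.1 (by omega))
          rw [h0, h1] at hco
          simp only [mul_zero, sub_zero] at hco
          show (φ (j+2)).coeff (j+2) ≠ 0
          intro hz
          rw [hz, mul_zero] at hco
          exact ih.2.2 hco.symm
    exact fun j => ⟨(key j).1.1, (key j).1.2⟩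
  have hφdeg : ∀ j, (φ j).natDegree ≤ j := fun j => (hφd j).1
  -- the reversed polynomials
  have hgne : ∀ j, reflect j (φ j) ≠ 0 := by
    intro j h
    apply (hφd j).2
    have := congrArg (fun q => coeff q 0) h
    simpa [coeff_reflect] using this
  have hrefl1 : ∀ b : F, reflect 1 (X - C b) = 1 - C b * X := by
    intro b
    rw [reflect_sub, reflect_C]
    simp
  have hR0 : C (α 0) * reflect 1 (φ 1) = 1 - C (β 0) * X := by
    have h := congrArg (reflect 1) hφ1
    have e2 := reflect_mul (X - C (β 0)) (φ 0) (F := 1) (G := 0)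
      (natDegree_X_sub_C_le _) (by simp [hφ0])
    rw [reflect_C_mul] at h
    rw [show (1:ℕ) + 0 = 1 from rfl] at e2
    rw [e2, hrefl1, hφ0, reflect_one, pow_zero, mul_one] at h
    exact h
  have hRrec : ∀ j, C (α (j+1)) * reflect (j+2) (φ (j+2))
      = (1 - C (β (j+1)) * X) * reflect (j+1) (φ (j+1))
        - C (γ (j+1)) * X^2 * reflect j (φ j) := by
    intro j
    have h := congrArg (reflect (j+2)) (hφrec j)
    have e2 := reflect_mul (X - C (β (j+1))) (φ (j+1)) (F := 1) (G := j+1)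
      (natDegree_X_sub_C_le _) (hφdeg (j+1))
    rw [show (1:ℕ) + (j+1) = j+2 from by omega] at e2
    have e3 := reflect_mul (C (γ (j+1))) (φ j) (F := 2) (G := j)
      ((natDegree_C _).le.trans (by omega)) (hφdeg j)
    rw [show (2:ℕ) + j = j+2 from by omega, reflect_C] at e3
    rw [reflect_C_mul, reflect_sub, e2, e3, hrefl1] at h
    rw [h]
  -- Part 1: At at 0 is the identity
  have hA0 : At.map (fun q => Polynomial.eval 0 q) = 1 := by
    subst hAt
    ext rc cc
    simp only [Matrix.map_apply, Matrix.of_apply, Matrix.one_apply, Prod.ext_iff,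
      apply_ite (Polynomial.eval 0), eval_sub, eval_one, eval_mul, eval_X, eval_C,
      eval_neg, eval_zero, zero_mul, neg_zero, sub_zero]
    by_cases h1 : rc.2 = cc.2
    · rw [if_pos h1]
      by_cases h2 : cc.1 = rc.1
      · have hne : ¬((cc.1:ℕ)+1 = (rc.1:ℕ)) := by rw [h2]; omega
        rw [if_neg hne, if_pos h2, if_pos ⟨h2.symm, h1⟩]
        simp
      · have h2' : ¬((rc.1 = cc.1) ∧ rc.2 = cc.2) := fun hc => h2 hc.1.symm
        rw [if_neg h2']
        by_cases h3 : (cc.1:ℕ)+1 = (rc.1:ℕ)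
        · rw [if_pos h3]
          simp
        · rw [if_neg h3, if_neg h2]
          by_cases h4 : (cc.1:ℕ) = (rc.1:ℕ)+1
          · rw [if_pos h4]
            simp
          · rw [if_neg h4]
            simp
    · rw [if_neg h1, if_neg (fun hc => h1 hc.2)]
      simp
  refine ⟨by rw [hA0]; simp, ?_, ?_⟩
  · -- Part 2
    rw [← coeff_zero_eq_eval_zero, coeff_reflect]
    simpa using (hφd (K+1)).2
  -- Part 3
  set amap := algebraMap (Polynomial F) (RatFunc F) with hamap
  have hGne : ∀ j, amap (reflect j (φ j)) ≠ 0 := fun j => RatFunc.algebraMap_ne_zero (hgne j)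
  have h0' : amap (C (α 0)) * amap (reflect 1 (φ 1))
      = (1 - amap (C (β 0)) * amap X) * amap (reflect 0 (φ 0)) := by
    have h := congrArg amap hR0
    rw [_root_.map_mul, map_sub, _root_.map_one, _root_.map_mul] at h
    rw [h, hφ0, reflect_one, pow_zero, _root_.map_one, mul_one]
  have hrec' : ∀ j, amap (C (α (j+1))) * amap (reflect (j+2) (φ (j+2)))
      = (1 - amap (C (β (j+1))) * amap X) * amap (reflect (j+1) (φ (j+1)))
        - amap (C (γ (j+1))) * (amap X)^2 * amap (reflect j (φ j)) := by
    intro j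
    have h := congrArg amap (hRrec j)
    simp only [_root_.map_mul, map_sub, _root_.map_one, map_pow] at h
    exact h
  set v : ℕ → RatFunc F := fun c =>
    -((amap X)^(c+1) * amap (reflect (K-c) (φ (K-c)))) / amap (reflect (K+1) (φ (K+1))) with hv
  have hrow : ∀ n : ℕ, n ≤ K →
      ((if 1 ≤ n then -(amap X * amap (C (α (K-n)))) * v (n-1) else 0)
        + (1 - amap X * amap (C (β (K-n)))) * v n
        + (if n+1 ≤ K then -(amap X * amap (C (γ (K-n)))) * v (n+1) else 0))
      = if n = 0 then -(amap X * amap (C (α K))) else 0 := by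
    intro n hn
    have h := aux_row (amap X) (fun j => amap (C (α j))) (fun j => amap (C (β j)))
      (fun j => amap (C (γ j))) (fun j => amap (reflect j (φ j))) K h0' hrec' (hGne (K+1)) n hn
    simpa [hv] using h
  set V : Matrix (Fin (K+2-1) × Fin m) (Fin m) (RatFunc F) :=
    Matrix.of (fun rc j => if rc.2 = j then v (rc.1 : ℕ) else 0) with hV
  have hunit : IsUnit (toRat At).det := by
    rw [isUnit_iff_ne_zero]
    have hdet : (toRat At).det = amap At.det := (RingHom.map_det amap At).symm
    rw [hdet]
    apply RatFunc.algebraMap_ne_zero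
    intro h
    have h2 : (Polynomial.evalRingHom (0:F)) At.det
        = (At.map (fun q => Polynomial.eval 0 q)).det := RingHom.map_det _ At
    rw [hA0, det_one] at h2
    rw [h] at h2
    simp at h2
  have hAV : toRat At * V = toRat Bt := by
    ext rc j
    rw [Matrix.mul_apply, Fintype.sum_prod_type]
    simp only [toRat, Matrix.map_apply, hAt, hBt, hV, Matrix.of_apply]
    simp only [← hamap]
    simp only [apply_ite amap, _root_.map_zero, _root_.map_one, _root_.map_mul, map_neg, map_sub]
    simp only [ite_mul, zero_mul]
    simp only [Finset.sum_ite_eq, Finset.mem_univ, if_pos]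
    by_cases hj : rc.2 = j
    · simp only [if_pos hj, hj, and_true]
      simp only [if_true]
      have hsplit : ∀ c1 : Fin (K+2-1),
          (if (c1:ℕ)+1 = (rc.1:ℕ) then -(amap X * amap (C (α (K-(rc.1:ℕ))))) * v (c1:ℕ)
            else if c1 = rc.1 then (1 - amap X * amap (C (β (K-(rc.1:ℕ))))) * v (c1:ℕ)
            else if (c1:ℕ) = (rc.1:ℕ)+1 then -(amap X * amap (C (γ (K-(rc.1:ℕ))))) * v (c1:ℕ)
            else 0)
          = (if (c1:ℕ)+1 = (rc.1:ℕ) then -(amap X * amap (C (α (K-(rc.1:ℕ))))) * v (c1:ℕ) else 0)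
            + (if c1 = rc.1 then (1 - amap X * amap (C (β (K-(rc.1:ℕ))))) * v (c1:ℕ) else 0)
            + (if (c1:ℕ) = (rc.1:ℕ)+1 then -(amap X * amap (C (γ (K-(rc.1:ℕ))))) * v (c1:ℕ) else 0) := by
        intro c1
        by_cases e1 : (c1:ℕ)+1 = (rc.1:ℕ)
        · rw [if_pos e1, if_pos e1, if_neg (by rw [Fin.ext_iff]; omega),
            if_neg (by omega)]
          ring
        · rw [if_neg e1, if_neg e1]
          by_cases e2 : c1 = rc.1
          · have e2' : (c1:ℕ) = (rc.1:ℕ) := by rw [e2]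
            rw [if_pos e2, if_pos e2, if_neg (by omega)]
            ring
          · rw [if_neg e2, if_neg e2]
            by_cases e3 : (c1:ℕ) = (rc.1:ℕ)+1
            · rw [if_pos e3]
              ring
            · rw [if_neg e3]
              ring
      rw [Finset.sum_congr rfl (fun c1 _ => hsplit c1), Finset.sum_add_distrib,
        Finset.sum_add_distrib]
      have hrcK : (rc.1:ℕ) ≤ K := by have := rc.1.2; omega
      have hs2 : (∑ c1 : Fin (K+2-1), if c1 = rc.1
            then (1 - amap X * amap (C (β (K-(rc.1:ℕ))))) * v (c1:ℕ) else 0)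
          = (1 - amap X * amap (C (β (K-(rc.1:ℕ))))) * v ((rc.1:ℕ)) := by
        rw [Finset.sum_ite_eq' Finset.univ]
        simp
      have hs1 : (∑ c1 : Fin (K+2-1), if (c1:ℕ)+1 = (rc.1:ℕ)
            then -(amap X * amap (C (α (K-(rc.1:ℕ))))) * v (c1:ℕ) else 0)
          = if 1 ≤ (rc.1:ℕ) then -(amap X * amap (C (α (K-(rc.1:ℕ))))) * v ((rc.1:ℕ)-1)
            else 0 := by
        by_cases hr : 1 ≤ (rc.1:ℕ)
        · rw [if_pos hr]
          have hiff : ∀ c1 : Fin (K+2-1), ((c1:ℕ)+1 = (rc.1:ℕ)) ↔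
              (c1 = (⟨(rc.1:ℕ)-1, by omega⟩ : Fin (K+2-1))) := by
            intro c1
            simp only [Fin.ext_iff]
            try omega
          simp only [hiff]
          rw [Finset.sum_ite_eq' Finset.univ]
          simp
        · rw [if_neg hr]
          exact Finset.sum_eq_zero (fun c1 _ => if_neg (by omega))
      have hs3 : (∑ c1 : Fin (K+2-1), if (c1:ℕ) = (rc.1:ℕ)+1
            then -(amap X * amap (C (γ (K-(rc.1:ℕ))))) * v (c1:ℕ) else 0)
          = if (rc.1:ℕ)+1 ≤ K then -(amap X * amap (C (γ (K-(rc.1:ℕ))))) * v ((rc.1:ℕ)+1)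
            else 0 := by
        by_cases hr : (rc.1:ℕ)+1 ≤ K
        · rw [if_pos hr]
          have hiff : ∀ c1 : Fin (K+2-1), ((c1:ℕ) = (rc.1:ℕ)+1) ↔
              (c1 = (⟨(rc.1:ℕ)+1, by omega⟩ : Fin (K+2-1))) := by
            intro c1
            simp only [Fin.ext_iff]
            try omega
          simp only [hiff]
          rw [Finset.sum_ite_eq' Finset.univ]
          simp
        · rw [if_neg hr]
          refine Finset.sum_eq_zero (fun c1 _ => if_neg ?_)
          have := c1.2
          omega
      rw [hs1, hs2, hs3]
      exact hrow (rc.1:ℕ) hrcK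
    · simp [hj]
  have hinvB : (toRat At)⁻¹ * toRat Bt = V := by
    rw [← hAV, ← Matrix.mul_assoc, Matrix.nonsing_inv_mul _ hunit, Matrix.one_mul]
  rw [Matrix.mul_assoc, hinvB]
  have hu : amap (C (α (K+1))) * amap (C ((α (K+1))⁻¹)) = 1 := by
    rw [← _root_.map_mul, ← C_mul, mul_inv_cancel₀ (hα _), C_1, _root_.map_one]
  ext i j
  have hRHS : toRat (P.map (reflect (K+2))) i j
      = ∑ i' ∈ Finset.range (K+2+1),
          amap (reflect i' (φ i')) * (amap (C (Pc i' i j)) * amap X ^ (K+2-i')) := by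
    simp only [toRat, Matrix.map_apply, hP, Matrix.sum_apply, Matrix.smul_apply, smul_eq_mul]
    simp only [← hamap]
    rw [reflect_sum', map_sum]
    refine Finset.sum_congr rfl (fun i' hi' => ?_)
    have hi : i' ≤ K+2 := by
      simp only [Finset.mem_range] at hi'
      omega
    have hre := reflect_mul (φ i') (C (Pc i' i j)) (hφdeg i')
      ((natDegree_C _).le.trans (Nat.zero_le _)) (G := K+2-i')
    rw [show i' + (K+2-i') = K+2 from by omega, reflect_C] at hre
    simp only [AddMonoidHom.mk'_apply, hre, _root_.map_mul, map_pow]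
  rw [hRHS]
  rw [Matrix.smul_apply, Matrix.add_apply, Matrix.mul_apply, Fintype.sum_prod_type]
  simp only [toRat, Matrix.map_apply, hDt, hmCt, Matrix.of_apply, Matrix.neg_apply, hV,
    smul_eq_mul]
  simp only [← hamap]
  simp only [mul_ite, mul_zero]
  simp only [Finset.sum_ite_eq', Finset.mem_univ, if_pos]
  simp only [C_mul, apply_ite amap, map_add, map_sub, map_neg, _root_.map_mul,
    _root_.map_one]
  have hconv := Fin.sum_univ_eq_sum_range (fun c =>
    (-if c = 0 then amap X * amap (C (Pc K i j))
        - amap X * (amap (C (γ (K+1))) * amap (C ((α (K+1))⁻¹)) * amap (C (Pc (K+2) i j)))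
      else amap X * amap (C (Pc (K - c) i j))) * v c) (K+2-1)
  rw [hconv]
  simp only [show K+2-1 = K+1 from rfl]
  conv_rhs => rw [Finset.sum_range_succ, Finset.sum_range_succ]
  rw [mul_add, Finset.mul_sum]
  have hterm : ∀ c ∈ Finset.range (K+1),
      amap (reflect (K+1) (φ (K+1))) *
        ((-if c = 0 then amap X * amap (C (Pc K i j))
            - amap X * (amap (C (γ (K+1))) * amap (C ((α (K+1))⁻¹)) * amap (C (Pc (K+2) i j)))
          else amap X * amap (C (Pc (K-c) i j))) * v c)
      = amap (reflect (K+1-1-c) (φ (K+1-1-c))) *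
          (amap (C (Pc (K+1-1-c) i j)) * amap X ^ (K+2-(K+1-1-c)))
        + (if c = 0 then
            -(amap X^2 * amap (reflect K (φ K)) *
              (amap (C (γ (K+1))) * amap (C ((α (K+1))⁻¹)) * amap (C (Pc (K+2) i j))))
          else 0) := by
    intro c hc
    have hcK : c ≤ K := by
      simp only [Finset.mem_range] at hc
      omega
    rw [show K+1-1-c = K-c from by omega, show K+2-(K-c) = c+2 from by omega, hv]
    by_cases hc0 : c = 0
    · subst hc0
      rw [if_pos rfl, if_pos rfl]
      simp only [Nat.sub_zero]
      field_simp [hGne (K+1)]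
      ring
    · rw [if_neg hc0, if_neg hc0]
      field_simp [hGne (K+1)]
      ring
  rw [Finset.sum_congr rfl hterm, Finset.sum_add_distrib]
  rw [Finset.sum_range_reflect (fun i' => amap (reflect i' (φ i')) *
    (amap (C (Pc i' i j)) * amap X ^ (K+2-i'))) (K+1)]
  rw [Finset.sum_ite_eq' (Finset.range (K+1)) 0, if_pos (by simp)]
  rw [show K+2-(K+1) = 1 from by omega, show K+2-(K+2) = 0 from by omega, pow_one, pow_zero,
    mul_one]
  have hrK := hrec' K
  linear_combination (-(amap (C ((α (K+1))⁻¹)) * amap (C (Pc (K+2) i j)))) * hrK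
    + (amap (reflect (K+2) (φ (K+2))) * amap (C (Pc (K+2) i j))) * hu
end

section
/- Let 𝔽 be a field, let p_0(λ), …, p_{k−1}(λ) ∈ 𝔽[λ] with p_0(λ) ≡ 1, let p(λ) = [p_{k−1}(λ), …, p_0(λ)]ᵀ, and let X − λY ∈ 𝔽[λ]^{(k−1)×k} satisfy (X − λY)p(λ) = 0 and have normal rank k−1 (i.e., rank k−1 over the field 𝔽(λ)). Write (X − λY) ⊗ I_m = [X₁(λ) X₂(λ)] with X₁(λ) of size (k−1)m × (k−1)m. Then X₁(λ) is regular, i.e., det X₁(λ) ≢ 0, and X₁(λ)⁻¹X₂(λ) = −[p_{k−1}(λ)I_m; …; p_1(λ)I_m]. -/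
open Polynomial Matrix

/-- Let `p_0 ≡ 1, …, p_{k-1}` be scalar polynomials,
`p(λ) = [p_{k-1}, …, p_0]ᵀ`, and let `X - λY` be a `(k-1) × k` pencil with
`(X - λY) p(λ) = 0` of normal rank `k-1`. Writing `(X - λY) ⊗ I_m = [X₁(λ) X₂(λ)]` with
`X₁(λ)` square of size `(k-1)m`, the matrix `X₁(λ)` is regular and
`X₁(λ)⁻¹ X₂(λ) = -[p_{k-1}(λ) I_m; …; p_1(λ) I_m]`. -/
theorem stmt_11 {F : Type*} [Field F] {m k : ℕ} (hk : 2 ≤ k)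
    (ps : ℕ → Polynomial F) (hp0 : ps 0 = 1)
    (Xc Yc : Matrix (Fin (k-1)) (Fin k) F)
    (W : Matrix (Fin (k-1)) (Fin k) (Polynomial F))
    (hW : W = Xc.map Polynomial.C - (Polynomial.X : Polynomial F) • Yc.map Polynomial.C)
    -- `(X - λY) p(λ) = 0`
    (hker : W.mulVec (fun i => ps (k-1-(i : ℕ))) = 0)
    -- `X - λY` has normal rank `k-1`
    (hrank : (W.map (algebraMap (Polynomial F) (RatFunc F))).rank = k-1)
    -- `X₁(λ)`: the first `(k-1)m` columns of `(X - λY) ⊗ I_m`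
    (X1 : Matrix (Fin (k-1) × Fin m) (Fin (k-1) × Fin m) (Polynomial F))
    (hX1 : X1 = (Matrix.kronecker W (1 : Matrix (Fin m) (Fin m) (Polynomial F))).submatrix id
      (fun c => (Fin.castLE (Nat.sub_le k 1) c.1, c.2)))
    -- `X₂(λ)`: the last `m` columns of `(X - λY) ⊗ I_m`
    (X2 : Matrix (Fin (k-1) × Fin m) (Fin m) (Polynomial F))
    (hX2 : X2 = (Matrix.kronecker W (1 : Matrix (Fin m) (Fin m) (Polynomial F))).submatrix id
      (fun j => ((⟨k-1, by omega⟩ : Fin k), j))) :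
    -- `X₁(λ)` is regular
    X1.det ≠ 0 ∧
    -- `X₁(λ)⁻¹ X₂(λ) = -[p_{k-1}(λ) I_m; …; p_1(λ) I_m]`
    (toRat X1)⁻¹ * toRat X2
      = Matrix.of (fun r j =>
          if r.2 = j then
            -(algebraMap (Polynomial F) (RatFunc F) (ps (k-1-(r.1 : ℕ))))
          else 0) := by
  obtain ⟨n, rfl⟩ : ∃ n, k = n + 1 := ⟨k - 1, by omega⟩
  clear hW
  set φ := algebraMap (Polynomial F) (RatFunc F) with hφdef
  have hφ : Function.Injective φ := IsFractionRing.injective _ _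
  simp only [Nat.add_sub_cancel] at hker hrank ⊢
  -- `W1`: the square part of `W` (first `n` columns)
  set W1 : Matrix (Fin (n+1-1)) (Fin n) (Polynomial F) :=
    W.submatrix id Fin.castSucc with hW1
  -- the last column of `W` in terms of the others
  have hlast : ∀ i, W i (Fin.last n) =
      -∑ c : Fin n, W i c.castSucc * ps (n - (c : ℕ)) := by
    intro i
    have h := congrFun hker i
    simp only [Matrix.mulVec, dotProduct, Pi.zero_apply] at h
    rw [Fin.sum_univ_castSucc] at h
    simp only [Fin.coe_castSucc, Fin.val_last, Nat.sub_self, hp0, mul_one] at h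
    linear_combination h
  -- the rational-function versions
  set W' : Matrix (Fin (n+1-1)) (Fin (n+1)) (RatFunc F) := W.map φ with hW'
  set W1' : Matrix (Fin (n+1-1)) (Fin n) (RatFunc F) := W'.submatrix id Fin.castSucc with hW1'
  have hlast' : ∀ i, W' i (Fin.last n) =
      -∑ c : Fin n, W' i c.castSucc * φ (ps (n - (c : ℕ))) := by
    intro i
    have h := congrArg φ (hlast i)
    simp only [map_neg, map_sum, _root_.map_mul] at h
    exact h
  have hsplit : ∀ v : Fin (n+1) → RatFunc F, W'.mulVec v =
      W1'.mulVec (fun c => v c.castSucc - v (Fin.last n) * φ (ps (n - (c : ℕ)))) := by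
    intro v
    funext i
    simp only [Matrix.mulVec, dotProduct, hW1', Matrix.submatrix_apply, id_eq]
    rw [Fin.sum_univ_castSucc, hlast' i, neg_mul, ← sub_eq_add_neg, Finset.sum_mul,
      ← Finset.sum_sub_distrib]
    exact Finset.sum_congr rfl fun c _ => by ring
  have hrange : LinearMap.range W1'.mulVecLin = LinearMap.range W'.mulVecLin := by
    apply le_antisymm
    · rintro _ ⟨u, rfl⟩
      refine ⟨Fin.snoc u 0, ?_⟩
      simp only [Matrix.mulVecLin_apply]
      rw [hsplit]
      funext c
      simp [Fin.snoc_castSucc, Fin.snoc_last]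
    · rintro _ ⟨v, rfl⟩
      exact ⟨_, by rw [Matrix.mulVecLin_apply, Matrix.mulVecLin_apply, hsplit]⟩
  have hrk1 : Module.finrank (RatFunc F) (LinearMap.range W1'.mulVecLin) = n := by
    rw [hrange]; exact hrank
  have hdetW1' : W1'.det ≠ 0 := by
    intro h0
    obtain ⟨v, hv, hv0⟩ := Matrix.exists_mulVec_eq_zero_iff.mpr h0
    have hmem : v ∈ LinearMap.ker W1'.mulVecLin := by
      simpa [Matrix.mulVecLin_apply] using hv0
    have h2 := LinearMap.finrank_range_add_finrank_ker W1'.mulVecLin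
    rw [hrk1, Module.finrank_fin_fun] at h2
    have h3 : Module.finrank (RatFunc F) (LinearMap.ker W1'.mulVecLin) = 0 := by omega
    rw [Submodule.finrank_eq_zero.mp h3] at hmem
    exact hv (by simpa using hmem)
  have hdetW1 : W1.det ≠ 0 := by
    intro h0
    apply hdetW1'
    have h1 : W1' = φ.mapMatrix W1 := rfl
    rw [h1, ← RingHom.map_det, h0, map_zero]
  -- `X1` is the Kronecker product of `W1` and the identity
  have hX1k : X1 = Matrix.kronecker W1 (1 : Matrix (Fin m) (Fin m) (Polynomial F)) := by
    rw [hX1]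
    ext ⟨i1, i2⟩ ⟨j1, j2⟩
    rfl
  have hdetX1 : X1.det ≠ 0 := by
    rw [hX1k]
    simp only [Matrix.kronecker]
    rw [Matrix.det_kronecker]
    simp only [Matrix.det_one, one_pow, mul_one]
    exact pow_ne_zero _ hdetW1
  refine ⟨hdetX1, ?_⟩
  -- the candidate right factor, over polynomials
  set M0 : Matrix (Fin (n+1-1) × Fin m) (Fin m) (Polynomial F) :=
    Matrix.of (fun r j => if r.2 = j then -(ps (n - (r.1 : ℕ))) else 0) with hM0def
  have hmul : X1 * M0 = X2 := by
    rw [hX1k, hX2]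
    apply Matrix.ext
    rintro ⟨i1, i2⟩ j
    have hidx : ((⟨n+1-1, by omega⟩ : Fin (n+1))) = Fin.last n := rfl
    simp only [Matrix.mul_apply, Fintype.sum_prod_type, Matrix.kronecker,
      Matrix.kroneckerMap_apply, Matrix.submatrix_apply, Matrix.of_apply, Matrix.one_apply,
      hM0def, id_eq, mul_ite, ite_mul, mul_zero, zero_mul, mul_one, one_mul,
      Finset.sum_ite_eq, Finset.sum_ite_eq', Finset.mem_univ, if_true, hidx]
    by_cases h : i2 = j
    · simp only [h, if_true]
      rw [hlast i1, ← Finset.sum_neg_distrib]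
      refine Finset.sum_congr rfl fun c _ => ?_
      show W i1 c.castSucc * -(ps (n - (c : ℕ))) = -(W i1 c.castSucc * ps (n - (c : ℕ)))
      ring
    · simp [h]
  have hmulR : toRat X1 * toRat M0 = toRat X2 := by
    rw [← hmul]
    exact Matrix.map_mul.symm
  have hu : IsUnit (toRat X1).det := by
    rw [isUnit_iff_ne_zero]
    have h1 : (toRat X1).det = φ X1.det := (RingHom.map_det φ X1).symm
    rw [h1]
    exact fun h => hdetX1 (hφ (by rw [h, map_zero]))
  have hM0 : toRat M0 =
      Matrix.of (fun (r : Fin (n+1-1) × Fin m) (j : Fin m) =>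
        if r.2 = j then -(φ (ps (n - (r.1 : ℕ)))) else 0) := by
    ext r j
    simp only [toRat, Matrix.map_apply, hM0def, Matrix.of_apply, hφdef, apply_ite (algebraMap (Polynomial F) (RatFunc F)), map_neg, map_zero]
  calc (toRat X1)⁻¹ * toRat X2
      = (toRat X1)⁻¹ * (toRat X1 * toRat M0) := by rw [hmulR]
    _ = toRat M0 := by rw [← Matrix.mul_assoc, Matrix.nonsing_inv_mul _ hu, Matrix.one_mul]
    _ = _ := hM0
end

section
/- Let 𝔽 be a field with algebraic closure 𝔽̄ and let P(λ) = Σ_{i=0}^{k−1}(A_i − λB_i)p_i(λ) ∈ 𝔽[λ]^{p×m}, where p_i(λ) ∈ 𝔽[λ] with p_0(λ) ≡ 1 and A_i, B_i ∈ 𝔽^{p×m}. Let p(λ) = [p_{k−1}(λ), …, p_0(λ)]ᵀ and suppose X − λY ∈ 𝔽[λ]^{(k−1)×k} satisfies (X − λY)p(λ) = 0 and rank(X − λ₀Y) = k−1 for all λ₀ ∈ 𝔽̄. Let C(λ) be the CORK pencil whose first block row is [A_{k−1} − λB_{k−1}, …, A_0 − λB_0] and whose remaining rows are (X − λY) ⊗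 I_m, and write (X − λY) ⊗ I_m = [X₁(λ) X₂(λ)] with X₁(λ) of size (k−1)m × (k−1)m. Then C(λ), partitioned with A-block X₁(λ), is a linear polynomial system matrix whose Schur complement with respect to X₁(λ), namely (A_0 − λB_0) − [A_{k−1} − λB_{k−1}, …, A_1 − λB_1]X₁(λ)⁻¹X₂(λ), equals P(λ); moreover X₁(λ) is unimodular. Consequently C(λ) is a linearization of P(λ). -/
open Polynomial Matrix

private lemma sum_fin_split {M : Type*} [AddCommMonoid M] {k : ℕ} (hk : 1 ≤ k) (f : Fin k → M) :
    ∑ j, f j = (∑ c : Fin (k-1), f (Fin.castLE (Nat.sub_le k 1) c))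
      + f ⟨k-1, Nat.sub_lt hk Nat.one_pos⟩ := by
  have hkk : k - 1 + 1 = k := Nat.succ_pred_eq_of_pos hk
  calc ∑ j, f j = ∑ j : Fin (k-1+1), f (finCongr hkk j) :=
        (Fintype.sum_equiv (finCongr hkk) _ _ (fun j => rfl)).symm
    _ = _ := by
        rw [Fin.sum_univ_castSucc]
        exact congrArg₂ (· + ·)
          (Finset.sum_congr rfl fun c _ => congrArg f (Fin.ext rfl))
          (congrArg f (Fin.ext rfl))

private lemma sum_reflect' {M : Type*} [AddCommMonoid M] {k : ℕ} (hk : 1 ≤ k) (g : ℕ → M) :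
    g 0 + ∑ c : Fin (k-1), g (k-1-(c:ℕ)) = ∑ t ∈ Finset.range k, g t := by
  have h1 : ∑ c : Fin (k-1), g (k-1-(c:ℕ)) = ∑ c ∈ Finset.range (k-1), g (k-1-c) :=
    Fin.sum_univ_eq_sum_range (fun c => g (k-1-c)) (k-1)
  have h2 : ∑ c ∈ Finset.range (k-1), g (k-1-c) = ∑ c ∈ Finset.range (k-1), g (c+1) := by
    rw [← Finset.sum_range_reflect (fun j => g (j+1)) (k-1)]
    refine Finset.sum_congr rfl fun j hj => ?_
    rw [Finset.mem_range] at hj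
    congr 1
    omega
  have h3 : k - 1 + 1 = k := Nat.succ_pred_eq_of_pos hk
  rw [h1, h2, ← h3, Finset.sum_range_succ' g (k-1)]
  exact add_comm _ _

/-- The CORK pencil `C(λ)` of
`P(λ) = Σ_{i=0}^{k-1} (A_i - λ B_i) p_i(λ)`, with first block row
`[A_{k-1} - λB_{k-1}, …, A_0 - λB_0]` and remaining rows `(X - λY) ⊗ I_m`, where
`(X - λY) p(λ) = 0` and `rank (X - λ₀ Y) = k-1` for all `λ₀` in the algebraic closure, is a
linear polynomial system matrix with unimodular state matrix `X₁(λ)` and Schur complement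
`(A_0 - λB_0) - [A_{k-1} - λB_{k-1}, …, A_1 - λB_1] X₁(λ)⁻¹ X₂(λ) = P(λ)`; consequently
`C(λ)` is a linearization of `P(λ)`. -/
theorem stmt_12 {F : Type*} [Field F] {p m k : ℕ} (hk : 2 ≤ k)
    (ps : ℕ → Polynomial F) (hp0 : ps 0 = 1)
    (Ac Bc : ℕ → Matrix (Fin p) (Fin m) F)
    (P : Matrix (Fin p) (Fin m) (Polynomial F))
    (hP : P = ∑ i ∈ Finset.range k,
      ps i • ((Ac i).map Polynomial.C - (Polynomial.X : Polynomial F) • (Bc i).map Polynomial.C))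
    (Xc Yc : Matrix (Fin (k-1)) (Fin k) F)
    (W : Matrix (Fin (k-1)) (Fin k) (Polynomial F))
    (hW : W = Xc.map Polynomial.C - (Polynomial.X : Polynomial F) • Yc.map Polynomial.C)
    -- `(X - λY) p(λ) = 0`
    (hker : W.mulVec (fun i => ps (k-1-(i : ℕ))) = 0)
    -- `rank (X - λ₀ Y) = k-1` for all `λ₀` in the algebraic closure of `F`
    (hrank : ∀ x : AlgebraicClosure F, (W.map (fun q => Polynomial.aeval x q)).rank = k-1)
    -- the first block row `[A_{k-1} - λB_{k-1}, …, A_0 - λB_0]`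
    (top : Matrix (Fin p) (Fin k × Fin m) (Polynomial F))
    (htop : top = Matrix.of fun i c =>
      Polynomial.C (Ac (k-1-(c.1 : ℕ)) i c.2)
        - Polynomial.X * Polynomial.C (Bc (k-1-(c.1 : ℕ)) i c.2))
    -- the CORK pencil
    (Ccork : Matrix (Fin p ⊕ (Fin (k-1) × Fin m)) (Fin k × Fin m) (Polynomial F))
    (hC : Ccork = Matrix.fromRows top
      (Matrix.kronecker W (1 : Matrix (Fin m) (Fin m) (Polynomial F))))
    -- `X₁(λ)`: the first `(k-1)m` columns of `(X - λY) ⊗ I_m`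
    (X1 : Matrix (Fin (k-1) × Fin m) (Fin (k-1) × Fin m) (Polynomial F))
    (hX1 : X1 = (Matrix.kronecker W (1 : Matrix (Fin m) (Fin m) (Polynomial F))).submatrix id
      (fun c => (Fin.castLE (Nat.sub_le k 1) c.1, c.2)))
    -- `X₂(λ)`: the last `m` columns of `(X - λY) ⊗ I_m`
    (X2 : Matrix (Fin (k-1) × Fin m) (Fin m) (Polynomial F))
    (hX2 : X2 = (Matrix.kronecker W (1 : Matrix (Fin m) (Fin m) (Polynomial F))).submatrix id
      (fun j => ((⟨k-1, by omega⟩ : Fin k), j))) :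
    -- `X₁(λ)` is unimodular
    IsUnit X1.det ∧
    -- the Schur complement with respect to `X₁(λ)` equals `P(λ)`
    (top.submatrix id (fun j : Fin m => ((⟨k-1, by omega⟩ : Fin k), j)))
      - (top.submatrix id
          (fun c : Fin (k-1) × Fin m => (Fin.castLE (Nat.sub_le k 1) c.1, c.2)))
        * X1⁻¹ * X2 = P ∧
    -- `C(λ)` is a linearization of `P(λ)`
    (∃ (U₁ : Matrix (Fin p ⊕ (Fin (k-1) × Fin m)) (Fin p ⊕ (Fin (k-1) × Fin m)) (Polynomial F))
       (V₁ : Matrix (Fin k × Fin m) (Fin m ⊕ (Fin (k-1) × Fin m)) (Polynomial F)),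
       IsUnit U₁.det ∧
       IsUnit ((V₁.submatrix
         (Sum.elim (fun j : Fin m => ((⟨k-1, by omega⟩ : Fin k), j))
           (fun c : Fin (k-1) × Fin m => (Fin.castLE (Nat.sub_le k 1) c.1, c.2)))
         id).det) ∧
       U₁ * Ccork * V₁ = Matrix.fromBlocks P 0 0
         (1 : Matrix (Fin (k-1) × Fin m) (Fin (k-1) × Fin m) (Polynomial F))) := by
  have hk1 : 1 ≤ k := by omega
  set cl : Fin (k-1) → Fin k := Fin.castLE (Nat.sub_le k 1) with hcl
  set lst : Fin k := ⟨k-1, Nat.sub_lt hk1 Nat.one_pos⟩ with hlst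
  set W1 : Matrix (Fin (k-1)) (Fin (k-1)) (Polynomial F) := W.submatrix id cl with hW1
  -- the last column of W in terms of the others
  have hWlast : ∀ r, W r lst = -∑ c : Fin (k-1), W r (cl c) * ps (k-1-(c:ℕ)) := by
    intro r
    have h := congrFun hker r
    simp only [Matrix.mulVec, dotProduct, Pi.zero_apply] at h
    rw [sum_fin_split hk1 (fun j => W r j * ps (k-1-(j:ℕ)))] at h
    have hv : (k:ℕ)-1-((lst : Fin k):ℕ) = 0 := by simp [hlst]
    simp only [hv] at h
    rw [Nat.sub_self, hp0, mul_one] at h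
    exact (neg_eq_of_add_eq_zero_right h).symm
  -- W1 is unimodular
  have hW1det : IsUnit W1.det := by
    have hne : ∀ x : AlgebraicClosure F, aeval x W1.det ≠ 0 := by
      intro x
      set M : Matrix (Fin (k-1)) (Fin k) (AlgebraicClosure F) :=
        W.map (fun q => aeval x q) with hM
      set M1 : Matrix (Fin (k-1)) (Fin (k-1)) (AlgebraicClosure F) :=
        W1.map (fun q => aeval x q) with hM1
      have hdet : aeval x W1.det = M1.det := by
        simpa using (RingHom.map_det (aeval x : Polynomial F →ₐ[F] _).toRingHom W1)
      rw [hdet]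
      have hMlast : ∀ r, M r lst = -∑ c : Fin (k-1), M1 r c * aeval x (ps (k-1-(c:ℕ))) := by
        intro r
        have := congrArg (aeval x) (hWlast r)
        simpa [hM, hM1, hW1] using this
      -- range inclusion
      have hle : LinearMap.range M.mulVecLin ≤ LinearMap.range M1.mulVecLin := by
        rintro y ⟨u, rfl⟩
        refine ⟨fun c => u (cl c) - aeval x (ps (k-1-(c:ℕ))) * u lst, ?_⟩
        ext r
        simp only [Matrix.mulVecLin_apply, Matrix.mulVec, dotProduct]
        rw [sum_fin_split hk1 (fun j => M r j * u j), hMlast r]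
        have hM1c : ∀ c, M1 r c = M r (cl c) := fun c => rfl
        simp only [hM1c, mul_sub, Finset.sum_sub_distrib, neg_mul, Finset.sum_mul]
        ring_nf
        rfl
      have hr1 : M1.rank = k - 1 := by
        refine le_antisymm (by simpa using M1.rank_le_card_width) ?_
        calc k - 1 = M.rank := (hrank x).symm
          _ ≤ M1.rank := Submodule.finrank_mono hle
      intro h0
      obtain ⟨v, hv, hMv⟩ := Matrix.exists_mulVec_eq_zero_iff.2 h0
      have hker' : v ∈ LinearMap.ker M1.mulVecLin := by simpa using hMv
      have hkfr : 1 ≤ Module.finrank (AlgebraicClosure F) (LinearMap.ker M1.mulVecLin) := by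
        by_contra hcon
        have h0' : Module.finrank (AlgebraicClosure F) (LinearMap.ker M1.mulVecLin) = 0 := by
          omega
        rw [Submodule.finrank_eq_zero] at h0'
        rw [h0', Submodule.mem_bot] at hker'
        exact hv hker'
      have hrn := LinearMap.finrank_range_add_finrank_ker M1.mulVecLin
      rw [Module.finrank_fintype_fun_eq_card, Fintype.card_fin] at hrn
      have : M1.rank + 1 ≤ k - 1 := by
        have : M1.rank = Module.finrank (AlgebraicClosure F) (LinearMap.range M1.mulVecLin) :=
          rfl
        omega
      omega
    rw [Polynomial.isUnit_iff_degree_eq_zero]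
    by_contra hdeg
    obtain ⟨x, hx⟩ := IsAlgClosed.exists_root
      (W1.det.map (algebraMap F (AlgebraicClosure F)))
      (by rwa [Polynomial.degree_map])
    exact hne x (by rwa [Polynomial.aeval_def, ← Polynomial.eval_map])
  -- X1 as a Kronecker product
  have hX1k : X1 = Matrix.kroneckerMap (· * ·) W1 (1 : Matrix (Fin m) (Fin m) (Polynomial F)) := by
    rw [hX1]
    refine Matrix.ext fun ri cj => ?_
    obtain ⟨r, i⟩ := ri; obtain ⟨c, j⟩ := cj
    rfl
  have hX1det : IsUnit X1.det := by
    rw [hX1k, Matrix.det_kronecker]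
    simpa using hW1det.pow m
  -- the matrix Q = X1⁻¹ X2
  set Q : Matrix (Fin (k-1) × Fin m) (Fin m) (Polynomial F) :=
    Matrix.of (fun c j => if c.2 = j then -(ps (k-1-((c.1 : Fin (k-1)):ℕ))) else 0) with hQ
  have hX1Q : X1 * Q = X2 := by
    rw [hX1k, hX2]
    refine Matrix.ext fun ri j => ?_
    obtain ⟨r, i⟩ := ri
    have hX2e : (Matrix.kronecker W (1 : Matrix (Fin m) (Fin m) (Polynomial F))).submatrix id
        (fun j : Fin m => ((⟨k-1, by omega⟩ : Fin k), j)) (r, i) j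
        = W r lst * (1 : Matrix (Fin m) (Fin m) (Polynomial F)) i j := rfl
    rw [hX2e, hWlast r]
    simp only [Matrix.mul_apply, Fintype.sum_prod_type, Matrix.kroneckerMap_apply,
      Matrix.one_apply, hQ, Matrix.of_apply]
    by_cases h : i = j <;>
      simp [h, mul_ite, mul_neg, Finset.sum_ite_eq', Finset.mul_sum, hW1, mul_comm]
  have hQinv : X1⁻¹ * X2 = Q := by
    rw [← hX1Q, ← Matrix.mul_assoc, Matrix.nonsing_inv_mul X1 hX1det, Matrix.one_mul]
  -- abbreviations for the top blocks
  set Tlast : Matrix (Fin p) (Fin m) (Polynomial F) :=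
    top.submatrix id (fun j : Fin m => (lst, j)) with hTlast
  set TL : Matrix (Fin p) (Fin (k-1) × Fin m) (Polynomial F) :=
    top.submatrix id (fun c : Fin (k-1) × Fin m => (cl c.1, c.2)) with hTL
  -- the Schur complement
  have hSchur : Tlast - TL * Q = P := by
    refine Matrix.ext fun i j => ?_
    have hentry : ∀ t : Fin k × Fin m,
        top i t = C (Ac (k-1-((t.1 : Fin k):ℕ)) i t.2) - X * C (Bc (k-1-((t.1:Fin k):ℕ)) i t.2) := by
      intro t; rw [htop]; rfl
    set g : ℕ → Polynomial F :=
      fun t => ps t * (C (Ac t i j) - X * C (Bc t i j)) with hg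
    have hPij : P i j = ∑ t ∈ Finset.range k, g t := by
      rw [hP]
      rw [Matrix.sum_apply]
      refine Finset.sum_congr rfl fun t _ => ?_
      simp [hg, Matrix.smul_apply, Matrix.sub_apply, Matrix.map_apply, smul_eq_mul]
    have hmul : (TL * Q) i j = -∑ c : Fin (k-1), g (k-1-(c:ℕ)) := by
      rw [Matrix.mul_apply, Fintype.sum_prod_type, ← Finset.sum_neg_distrib]
      refine Finset.sum_congr rfl fun c _ => ?_
      rw [Finset.sum_eq_single j]
      · have : Q (c, j) j = -(ps (k-1-(c:ℕ))) := by simp [hQ]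
        rw [this]
        simp only [hTL, Matrix.submatrix_apply, id_eq]
        rw [hentry]
        have hcv : ((cl c : Fin k) : ℕ) = (c : ℕ) := rfl
        rw [hcv, hg]
        ring
      · intro b _ hb
        have : Q (c, b) j = 0 := by simp [hQ, hb]
        rw [this, mul_zero]
      · intro h; exact absurd (Finset.mem_univ j) h
    have hlastE : Tlast i j = g 0 := by
      simp only [hTlast, Matrix.submatrix_apply, id_eq]
      rw [hentry]
      have hlv : ((lst : Fin k) : ℕ) = k - 1 := rfl
      simp only [hlv, Nat.sub_self, hg, hp0, one_mul]
    rw [Matrix.sub_apply, hmul, hlastE, sub_neg_eq_add, hPij]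
    exact sum_reflect' hk1 g
  refine ⟨hX1det, ?_, ?_⟩
  · show Tlast - TL * X1⁻¹ * X2 = P
    rw [Matrix.mul_assoc, hQinv, hSchur]
  · -- the linearization
    have hl : ∀ x : Fin m ⊕ (Fin (k-1) × Fin m),
        ∀ y, (Sum.elim (fun j : Fin m => ((lst : Fin k), j))
          (fun c : Fin (k-1) × Fin m => (cl c.1, c.2)) x = y) →
        (if h : ((y.1 : Fin k) : ℕ) < k-1 then Sum.inr ((⟨(y.1:ℕ), h⟩ : Fin (k-1)), y.2)
          else Sum.inl y.2) = x := by
      rintro (j | ⟨c, j⟩) y rfl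
      · simp only [Sum.elim_inl]
        exact dif_neg (lt_irrefl _)
      · simp only [Sum.elim_inr]
        exact (dif_pos (show ((cl c : Fin k) : ℕ) < k - 1 from c.isLt)).trans
          (congrArg Sum.inr (Prod.ext (Fin.ext rfl) rfl))
    have hr : ∀ y : Fin k × Fin m,
        Sum.elim (fun j : Fin m => ((lst : Fin k), j))
          (fun c : Fin (k-1) × Fin m => (cl c.1, c.2))
          (if h : ((y.1 : Fin k) : ℕ) < k-1 then Sum.inr ((⟨(y.1:ℕ), h⟩ : Fin (k-1)), y.2)
            else Sum.inl y.2) = y := by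
      rintro ⟨t, j⟩
      by_cases h : (t : ℕ) < k - 1
      · rw [dif_pos h, Sum.elim_inr]
        exact Prod.ext (Fin.ext rfl) rfl
      · rw [dif_neg h, Sum.elim_inl]
        refine Prod.ext (Fin.ext ?_) rfl
        have := t.isLt
        show k - 1 = (t : ℕ)
        omega
    set e : (Fin m ⊕ (Fin (k-1) × Fin m)) ≃ (Fin k × Fin m) :=
      { toFun := Sum.elim (fun j : Fin m => ((lst : Fin k), j))
          (fun c : Fin (k-1) × Fin m => (cl c.1, c.2))
        invFun := fun y => if h : ((y.1 : Fin k) : ℕ) < k-1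
          then Sum.inr ((⟨(y.1:ℕ), h⟩ : Fin (k-1)), y.2) else Sum.inl y.2
        left_inv := fun x => hl x _ rfl
        right_inv := fun y => hr y } with he
    have he1 : ∀ j : Fin m, e (Sum.inl j) = ((lst : Fin k), j) := fun _ => rfl
    have he2 : ∀ c : Fin (k-1) × Fin m, e (Sum.inr c) = (cl c.1, c.2) := fun _ => rfl
    set Cb : Matrix (Fin p ⊕ (Fin (k-1) × Fin m)) (Fin m ⊕ (Fin (k-1) × Fin m)) (Polynomial F) :=
      Matrix.fromBlocks Tlast TL X2 X1 with hCbdef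
    set Vb : Matrix (Fin m ⊕ (Fin (k-1) × Fin m)) (Fin m ⊕ (Fin (k-1) × Fin m)) (Polynomial F) :=
      Matrix.fromBlocks 1 0 (-Q) 1 with hVb
    have h1 : Ccork.submatrix id (⇑e) = Cb := by
      refine Matrix.ext ?_
      rintro (i | r) (j | c)
      · simp [hC, he1, hCbdef, hTlast]
      · simp [hC, he2, hCbdef, hTL]
      · simp only [Matrix.submatrix_apply, id_eq, he1, hC, hCbdef,
          Matrix.fromRows, Matrix.fromBlocks, Matrix.of_apply, Sum.elim_inr, Sum.elim_inl, hX2,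
          Matrix.submatrix_apply]
        rfl
      · simp only [Matrix.submatrix_apply, id_eq, he2, hC, hCbdef,
          Matrix.fromRows, Matrix.fromBlocks, Matrix.of_apply, Sum.elim_inr, Sum.elim_inl, hX1,
          Matrix.submatrix_apply]
        rfl
    have hCb : Ccork = Cb.submatrix id (⇑e.symm) := by
      rw [← h1, Matrix.submatrix_submatrix]
      refine Matrix.ext fun r x => ?_
      simp [Matrix.submatrix_apply, Function.comp, Equiv.apply_symm_apply]
    refine ⟨Matrix.fromBlocks 1 (-(TL * X1⁻¹)) 0 X1⁻¹, Vb.submatrix (⇑e.symm) id, ?_, ?_, ?_⟩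
    · rw [Matrix.det_fromBlocks_zero₂₁, Matrix.det_one, one_mul]
      exact Matrix.isUnit_nonsing_inv_det X1 hX1det
    · show IsUnit (((Vb.submatrix (⇑e.symm) id).submatrix (⇑e) id).det)
      have h2 : (Vb.submatrix (⇑e.symm) id).submatrix (⇑e) id = Vb := by
        rw [Matrix.submatrix_submatrix]
        refine Matrix.ext fun r x => ?_
        simp [Matrix.submatrix_apply, Function.comp, Equiv.symm_apply_apply]
      rw [h2, hVb, Matrix.det_fromBlocks_zero₁₂, Matrix.det_one, one_mul, Matrix.det_one]
      exact isUnit_one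
    · rw [hCb, Matrix.mul_assoc,
        Matrix.submatrix_mul_equiv Cb Vb id e.symm id, Matrix.submatrix_id_id]
      have hstep1 : Cb * Vb = Matrix.fromBlocks P TL 0 X1 := by
        rw [hCbdef, hVb, Matrix.fromBlocks_multiply]
        have hb1 : Tlast * (1 : Matrix (Fin m) (Fin m) (Polynomial F)) + TL * (-Q) = P := by
          rw [Matrix.mul_one, Matrix.mul_neg, ← sub_eq_add_neg, hSchur]
        have hb2 : Tlast * (0 : Matrix (Fin m) (Fin (k-1) × Fin m) (Polynomial F))
            + TL * (1 : Matrix (Fin (k-1) × Fin m) (Fin (k-1) × Fin m) (Polynomial F)) = TL := by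
          rw [Matrix.mul_zero, Matrix.mul_one, zero_add]
        have hb3 : X2 * (1 : Matrix (Fin m) (Fin m) (Polynomial F)) + X1 * (-Q) = 0 := by
          rw [Matrix.mul_one, Matrix.mul_neg, hX1Q, add_neg_cancel]
        have hb4 : X2 * (0 : Matrix (Fin m) (Fin (k-1) × Fin m) (Polynomial F))
            + X1 * (1 : Matrix (Fin (k-1) × Fin m) (Fin (k-1) × Fin m) (Polynomial F)) = X1 := by
          rw [Matrix.mul_zero, Matrix.mul_one, zero_add]
        rw [hb1, hb2, hb3, hb4]
      rw [hstep1, Matrix.fromBlocks_multiply]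
      have hc1 : (1 : Matrix (Fin p) (Fin p) (Polynomial F)) * P + (-(TL * X1⁻¹))
          * (0 : Matrix (Fin (k-1) × Fin m) (Fin m) (Polynomial F)) = P := by
        rw [Matrix.one_mul, Matrix.mul_zero, add_zero]
      have hc2 : (1 : Matrix (Fin p) (Fin p) (Polynomial F)) * TL + (-(TL * X1⁻¹)) * X1 = 0 := by
        rw [Matrix.one_mul, Matrix.neg_mul, Matrix.mul_assoc,
          Matrix.nonsing_inv_mul X1 hX1det, Matrix.mul_one, add_neg_cancel]
      have hc3 : (0 : Matrix (Fin (k-1) × Fin m) (Fin p) (Polynomial F)) * P + X1⁻¹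
          * (0 : Matrix (Fin (k-1) × Fin m) (Fin m) (Polynomial F)) = 0 := by
        rw [Matrix.zero_mul, Matrix.mul_zero, add_zero]
      have hc4 : (0 : Matrix (Fin (k-1) × Fin m) (Fin p) (Polynomial F)) * TL + X1⁻¹ * X1
          = 1 := by
        rw [Matrix.zero_mul, Matrix.nonsing_inv_mul X1 hX1det, zero_add]
      rw [hc1, hc2, hc3, hc4]
end

section
/- Let 𝔽 be a field and let P(λ) = Σ_{i=0}^{k−1}(A_i − λB_i)p_i(λ) ∈ 𝔽[λ]^{p×m}, where p_i(λ) ∈ 𝔽[λ] with p_0(λ) ≡ 1 and A_i, B_i ∈ 𝔽^{p×m}. Let p(λ) = [p_{k−1}(λ), …, p_0(λ)]ᵀ and suppose X − λY ∈ 𝔽[λ]^{(k−1)×k} satisfies (X − λY)p(λ) = 0. Assume moreover that rank Y = k−1 and deg p_{k−1}(λ) = k−1. Let C(λ) be the CORK pencil whose first block row is [A_{k−1} − λB_{k−1}, …, A_0 − λB_0] and whose remaining rows are (X − λY) ⊗ I_m, and partition rev₁C(λ) so that its first block column (of width m) is [λA_{k−1} − B_{k−1}; rev₁Y₁(λ)]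 and the remaining columns are [λA_{k−2} − B_{k−2}, …, λA_0 − B_0; rev₁Y₂(λ)], where [rev₁Y₁(λ) rev₁Y₂(λ)] = (λX − Y) ⊗ I_m and rev₁Y₂(λ) has size (k−1)m × (k−1)m. Then rev₁Y₂(0) is invertible, q(λ) := λ^{k−1}p_{k−1}(1/λ) is a polynomial with q(0) ≠ 0, and the Schur complement T(λ) = (λA_{k−1} − B_{k−1}) − [λA_{k−2} − B_{k−2}, …, λA_0 − B_0](rev₁Y₂(λ))⁻¹rev₁Y₁(λ) satisfies q(λ)T(λ) = rev_kP(λ) := λ^kP(1/λ). -/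
open Polynomial Matrix

set_option synthInstance.maxHeartbeats 1000000
set_option maxHeartbeats 1000000

section Aux

lemma rows_indep_of_rank {F : Type*} [Field F] {a b : ℕ} (Y : Matrix (Fin a) (Fin b) F)
    (hY : Y.rank = a) (u : Fin a → F) (hu : u ᵥ* Y = 0) : u = 0 := by
  have hli : LinearIndependent F (fun i => Y i) := by
    rw [linearIndependent_iff_card_eq_finrank_span]
    rw [Matrix.rank_eq_finrank_span_row] at hY
    simp [Set.finrank, ← hY]
    rfl
  have hinj := Matrix.vecMul_injective_iff.mpr hli
  have : u ᵥ* Y = (0 : Fin a → F) ᵥ* Y := by rw [hu, Matrix.zero_vecMul]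
  exact hinj this

lemma poly_left_ker {F : Type*} [Field F] {a b : ℕ} (Xc Yc : Matrix (Fin a) (Fin b) F)
    (hY : Yc.rank = a) (v : Fin a → Polynomial F)
    (hv : v ᵥ* (Xc.map Polynomial.C - (Polynomial.X : Polynomial F) • Yc.map Polynomial.C) = 0) :
    v = 0 := by
  have key : ∀ d : ℕ, (fun i => (v i).coeff (d+1)) ᵥ* Xc - (fun i => (v i).coeff d) ᵥ* Yc = 0 := by
    intro d
    funext j
    have h0 := congrFun hv j
    have : (v ᵥ* (Xc.map Polynomial.C - (Polynomial.X : Polynomial F) • Yc.map Polynomial.C)) j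
        = ∑ i, v i * (Polynomial.C (Xc i j) - Polynomial.X * Polynomial.C (Yc i j)) := by
      simp [Matrix.vecMul, dotProduct, Matrix.sub_apply, Matrix.smul_apply]
    rw [this] at h0
    have h1 := congrArg (fun q => Polynomial.coeff q (d+1)) h0
    simp only [Polynomial.finset_sum_coeff, Polynomial.coeff_zero] at h1
    simp only [mul_sub, Polynomial.coeff_sub] at h1
    have h2 : ∀ i : Fin a, (v i * Polynomial.C (Xc i j)).coeff (d+1)
        = (v i).coeff (d+1) * Xc i j := by intro i; simp [Polynomial.coeff_mul_C]
    have h3 : ∀ i : Fin a, (v i * (Polynomial.X * Polynomial.C (Yc i j))).coeff (d+1)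
        = (v i).coeff d * Yc i j := by
      intro i
      rw [show v i * (Polynomial.X * Polynomial.C (Yc i j))
          = Polynomial.X * (v i * Polynomial.C (Yc i j)) by ring]
      rw [Polynomial.coeff_X_mul, Polynomial.coeff_mul_C]
    simp only [Finset.sum_sub_distrib] at h1
    simp only [h2, h3] at h1
    simpa [Matrix.vecMul, dotProduct] using h1
  set B := (Finset.univ.sup (fun i : Fin a => (v i).natDegree)) + 1 with hB
  have hbig : ∀ d, B ≤ d → (fun i => (v i).coeff d) = 0 := by
    intro d hd
    funext i
    apply Polynomial.coeff_eq_zero_of_natDegree_lt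
    have : (v i).natDegree ≤ B - 1 := by
      simpa [hB] using Finset.le_sup (f := fun i : Fin a => (v i).natDegree) (Finset.mem_univ i)
    omega
  have main : ∀ t d, B ≤ d + t → (fun i => (v i).coeff d) = 0 := by
    intro t
    induction t with
    | zero => intro d hd; exact hbig d (by omega)
    | succ t ih =>
      intro d hd
      by_cases hd' : B ≤ d
      · exact hbig d hd'
      · have h1 : (fun i => (v i).coeff (d+1)) = 0 := ih (d+1) (by omega)
        have h2 := key d
        rw [h1, Matrix.zero_vecMul, zero_sub, neg_eq_zero] at h2
        exact rows_indep_of_rank Yc hY _ h2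
  funext i
  ext d
  have := congrFun (main B d (by omega)) i
  simpa using this

lemma natDegree_det_le_sum {n : Type*} [DecidableEq n] [Fintype n] {F : Type*} [CommRing F]
    (M : Matrix n n (Polynomial F)) (b : n → ℕ) (h : ∀ i j, (M i j).natDegree ≤ b i) :
    (Matrix.det M).natDegree ≤ ∑ i, b i := by
  rw [Matrix.det_apply]
  refine Polynomial.natDegree_sum_le_of_forall_le _ _ ?_
  intro σ _
  have h1 : (Equiv.Perm.sign σ • ∏ i, M (σ i) i).natDegree = (∏ i, M (σ i) i).natDegree := by
    rcases Int.units_eq_one_or (Equiv.Perm.sign σ) with sg | sg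
    · rw [sg, one_smul]
    · rw [sg, Units.neg_smul, one_smul, Polynomial.natDegree_neg]
  rw [h1]
  refine (Polynomial.natDegree_prod_le _ _).trans ?_
  calc ∑ i, (M (σ i) i).natDegree ≤ ∑ i, b (σ i) := Finset.sum_le_sum (fun i _ => h (σ i) i)
    _ = ∑ i, b i := Equiv.sum_comp σ b

lemma natDegree_adjugate_le {n : Type*} [DecidableEq n] [Fintype n] {F : Type*} [CommRing F]
    (M : Matrix n n (Polynomial F)) (d : ℕ) (h : ∀ i j, (M i j).natDegree ≤ d) (i j : n) :
    ((Matrix.adjugate M) i j).natDegree ≤ (Fintype.card n - 1) * d := by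
  rw [Matrix.adjugate_apply]
  refine (natDegree_det_le_sum _ (fun r => if r = j then 0 else d) ?_).trans ?_
  · intro r c
    rcases eq_or_ne r j with rfl | hr
    · simp only [Matrix.updateRow_self, if_pos rfl]
      rcases eq_or_ne c i with rfl | hc
      · simp [Pi.single_eq_same]
      · simp [Pi.single_eq_of_ne hc]
    · simp only [Matrix.updateRow_ne hr, if_neg hr]
      exact h r c
  · have : (∑ r : n, if r = j then 0 else d) = ∑ r ∈ Finset.univ.erase j, d := by
      rw [← Finset.sum_erase_add _ _ (Finset.mem_univ j), if_pos rfl, add_zero]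
      exact Finset.sum_congr rfl (fun r hr => if_neg (Finset.ne_of_mem_erase hr))
    rw [this, Finset.sum_const, smul_eq_mul, Finset.card_erase_of_mem (Finset.mem_univ j),
      Finset.card_univ]

noncomputable def tau (F : Type*) [Field F] : RatFunc F :=
  algebraMap (Polynomial F) (RatFunc F) Polynomial.X

lemma tau_ne_zero (F : Type*) [Field F] : tau F ≠ 0 := by
  simpa [tau] using (RatFunc.algebraMap_ne_zero (Polynomial.X_ne_zero (R := F)))

lemma algebraMap_reflect {F : Type*} [Field F] (f : Polynomial F) (N : ℕ)
    (hf : f.natDegree ≤ N) :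
    algebraMap (Polynomial F) (RatFunc F) (Polynomial.reflect N f)
      = (tau F)^N * Polynomial.aeval (tau F)⁻¹ f := by
  have hτ := tau_ne_zero F
  letI : Invertible ((tau F)⁻¹) := invertibleOfNonzero (inv_ne_zero hτ)
  have hinv : ⅟((tau F)⁻¹) = tau F := by
    rw [invOf_eq_inv, inv_inv]
  have key := Polynomial.eval₂_reflect_mul_pow (algebraMap F (RatFunc F)) ((tau F)⁻¹) N f hf
  rw [hinv] at key
  have e1 : Polynomial.eval₂ (algebraMap F (RatFunc F)) (tau F) (Polynomial.reflect N f)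
      = algebraMap (Polynomial F) (RatFunc F) (Polynomial.reflect N f) := by
    rw [← Polynomial.aeval_def, tau, Polynomial.aeval_algebraMap_apply,
      Polynomial.aeval_X_left_apply]
  have e2 : Polynomial.eval₂ (algebraMap F (RatFunc F)) ((tau F)⁻¹) f
      = Polynomial.aeval ((tau F)⁻¹) f := by rw [Polynomial.aeval_def]
  rw [e1, e2] at key
  rw [← key, inv_pow]
  field_simp

end Aux

theorem stmt13_aux {F : Type*} [Field F] {p m n : ℕ}
    (ps : ℕ → Polynomial F) (hp0 : ps 0 = 1)
    (Ac Bc : ℕ → Matrix (Fin p) (Fin m) F)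
    (P : Matrix (Fin p) (Fin m) (Polynomial F))
    (hP : P = ∑ i ∈ Finset.range (n+2),
      ps i • ((Ac i).map Polynomial.C - (Polynomial.X : Polynomial F) • (Bc i).map Polynomial.C))
    (Xc Yc : Matrix (Fin (n+1)) (Fin (n+2)) F)
    (W : Matrix (Fin (n+1)) (Fin (n+2)) (Polynomial F))
    (hW : W = Xc.map Polynomial.C - (Polynomial.X : Polynomial F) • Yc.map Polynomial.C)
    (hker : W.mulVec (fun i => ps (n+1-(i : ℕ))) = 0)
    (hY : Yc.rank = n+1)
    (hdeg : (ps (n+1)).natDegree = n+1)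
    (revW : Matrix (Fin (n+1)) (Fin (n+2)) (Polynomial F))
    (hrevW : revW = (Polynomial.X : Polynomial F) • Xc.map Polynomial.C - Yc.map Polynomial.C)
    (Y1 : Matrix (Fin (n+1) × Fin m) (Fin m) (Polynomial F))
    (hY1 : Y1 = (Matrix.kronecker revW (1 : Matrix (Fin m) (Fin m) (Polynomial F))).submatrix id
      (fun j => ((⟨0, by omega⟩ : Fin (n+2)), j)))
    (Y2 : Matrix (Fin (n+1) × Fin m) (Fin (n+1) × Fin m) (Polynomial F))
    (hY2 : Y2 = (Matrix.kronecker revW (1 : Matrix (Fin m) (Fin m) (Polynomial F))).submatrix id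
      (fun c => ((⟨(c.1 : ℕ) + 1, by have := c.1.isLt; omega⟩ : Fin (n+2)), c.2)))
    (revTop1 : Matrix (Fin p) (Fin m) (Polynomial F))
    (hrt1 : revTop1 = (Polynomial.X : Polynomial F) • (Ac (n+1)).map Polynomial.C
      - (Bc (n+1)).map Polynomial.C)
    (revTop2 : Matrix (Fin p) (Fin (n+1) × Fin m) (Polynomial F))
    (hrt2 : revTop2 = Matrix.of fun i c =>
      Polynomial.X * Polynomial.C (Ac (n-(c.1 : ℕ)) i c.2)
        - Polynomial.C (Bc (n-(c.1 : ℕ)) i c.2)) :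
    IsUnit (Y2.map (fun q => Polynomial.eval 0 q)).det ∧
    (Polynomial.reflect (n+1) (ps (n+1))).eval 0 ≠ 0 ∧
    (algebraMap (Polynomial F) (RatFunc F) (Polynomial.reflect (n+1) (ps (n+1)))) •
        (toRat revTop1 - toRat revTop2 * (toRat Y2)⁻¹ * toRat Y1)
      = toRat (P.map (Polynomial.reflect (n+2))) := by
  have hdeg' : (ps (n+1)).natDegree = n+1 := hdeg
  have hYrank : Yc.rank = n+1 := hY
  have hps1 : ps (n+1) ≠ 0 := by
    intro h; rw [h] at hdeg'; simp at hdeg'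
  have hkerRow : ∀ i : Fin (n+1), W i 0 * ps (n+1)
      + ∑ j : Fin (n+1), W i j.succ * ps (n - (j:ℕ)) = 0 := by
    intro i
    have h := congrFun hker i
    rw [Matrix.mulVec, dotProduct, Fin.sum_univ_succ] at h
    simpa [Nat.succ_sub_succ] using h
  set W' : Matrix (Fin (n+1)) (Fin (n+1)) (Polynomial F) :=
    Matrix.of (fun i j => W i j.succ) with hW'def
  have hW'apply : ∀ i j, W' i j = W i j.succ := fun i j => rfl
  have hdetW' : W'.det ≠ 0 := by
    intro h0
    obtain ⟨v, hvne, hvW'⟩ := (Matrix.exists_vecMul_eq_zero_iff).mpr h0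
    have hsucc : ∀ j : Fin (n+1), (v ᵥ* W) j.succ = 0 := by
      intro j
      have := congrFun hvW' j
      simpa [Matrix.vecMul, dotProduct, hW'apply] using this
    have hdp : (v ᵥ* W) ⬝ᵥ (fun j : Fin (n+2) => ps (n+1-(j:ℕ))) = 0 := by
      rw [← Matrix.dotProduct_mulVec, hker]
      simp
    rw [dotProduct, Fin.sum_univ_succ] at hdp
    simp only [hsucc, zero_mul, Finset.sum_const_zero, add_zero] at hdp
    have h00 : (v ᵥ* W) 0 = 0 := by
      rcases (by simpa using hdp : (v ᵥ* W) 0 = 0 ∨ ps (n + 1) = 0) with h | h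
      · exact h
      · exact absurd h hps1
    have hvW : v ᵥ* W = 0 := by
      funext j
      refine Fin.cases h00 hsucc j
    exact hvne (poly_left_ker Xc Yc hYrank v (by rw [← hW]; exact hvW))
  set A0 : Matrix (Fin (n+1)) (Fin (n+1)) F := Matrix.of (fun i j => -Yc i j.succ) with hA0def
  set B0 : Matrix (Fin (n+1)) (Fin (n+1)) F := Matrix.of (fun i j => Xc i j.succ) with hB0def
  have hW'eq : W' = (Polynomial.X : Polynomial F) • A0.map Polynomial.C + B0.map Polynomial.C := by
    ext i j
    simp only [hW'apply, hW, hA0def, hB0def, Matrix.sub_apply, Matrix.smul_apply,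
      Matrix.map_apply, Matrix.add_apply, Matrix.of_apply, smul_eq_mul, map_neg]
    ring
  have hcoeffdet : (W'.det).coeff (n+1) = A0.det := by
    have h := Polynomial.coeff_det_X_add_C_card A0 B0
    rw [← hW'eq] at h
    simpa using h
  have hdegdetle : (W'.det).natDegree ≤ n+1 := by
    have h := Polynomial.natDegree_det_X_add_C_le A0 B0
    rw [← hW'eq] at h
    simpa using h
  have hmv : W' *ᵥ (fun j : Fin (n+1) => ps (n - (j:ℕ))) = (-(ps (n+1))) • (fun i => W i 0) := by
    funext i
    have h := hkerRow i
    simp only [Matrix.mulVec, dotProduct, hW'apply, Pi.smul_apply, smul_eq_mul]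
    linear_combination h
  set av : Fin (n+1) → Polynomial F := W'.adjugate *ᵥ (fun i => W i 0) with havdef
  have hadj : ∀ jj : Fin (n+1), W'.det * ps (n - (jj:ℕ)) = -(ps (n+1) * av jj) := by
    intro jj
    have h1 := congrFun (congrArg
      (fun M => M *ᵥ (fun j : Fin (n+1) => ps (n - (j:ℕ)))) (Matrix.adjugate_mul W')) jj
    rw [← Matrix.mulVec_mulVec, hmv] at h1
    simp only [Matrix.mulVec, dotProduct, Pi.smul_apply, smul_eq_mul, Matrix.smul_apply,
      Matrix.one_apply, mul_ite, ite_mul, mul_one, one_mul, mul_zero, zero_mul,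
      Finset.sum_ite_eq, Finset.sum_ite_eq', Finset.mem_univ, if_pos] at h1
    have hax : av jj = ∑ l, W'.adjugate jj l * W l 0 := rfl
    rw [← h1, hax, Finset.mul_sum, ← Finset.sum_neg_distrib]
    refine Finset.sum_congr rfl (fun l _ => by ring)
  have hlast : W'.det = -(ps (n+1) * av (Fin.last n)) := by
    have h := hadj (Fin.last n)
    simpa [Fin.val_last, Nat.sub_self, hp0] using h
  have havne : av (Fin.last n) ≠ 0 := by
    intro h; rw [h, mul_zero, neg_zero] at hlast; exact hdetW' hlast
  have hdegdet : (W'.det).natDegree = n+1 := by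
    have h2 : (W'.det).natDegree = (n+1) + (av (Fin.last n)).natDegree := by
      rw [hlast, Polynomial.natDegree_neg, Polynomial.natDegree_mul hps1 havne, hdeg']
    omega
  have hdetA0 : A0.det ≠ 0 := by
    have h : W'.det.coeff (W'.det.natDegree) ≠ 0 := Polynomial.leadingCoeff_ne_zero.mpr hdetW'
    rw [hdegdet] at h
    rwa [hcoeffdet] at h
  -- degree bounds
  have hWentry : ∀ (i : Fin (n+1)) (j : Fin (n+2)), (W i j).natDegree ≤ 1 := by
    intro i j
    rw [hW]
    simp only [Matrix.sub_apply, Matrix.smul_apply, Matrix.map_apply, smul_eq_mul]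
    compute_degree
  have havdeg : ∀ j, (av j).natDegree ≤ n+1 := by
    intro j
    have hav : av j = ∑ l : Fin (n+1), W'.adjugate j l * W l 0 := rfl
    rw [hav]
    refine Polynomial.natDegree_sum_le_of_forall_le _ _ ?_
    intro l _
    refine (Polynomial.natDegree_mul_le).trans ?_
    have h1 := natDegree_adjugate_le W' 1 (fun i j => by rw [hW'apply]; exact hWentry i j.succ) j l
    have h2 := hWentry l 0
    simp only [Fintype.card_fin] at h1
    omega
  have hpsdeg : ∀ l, l ≤ n+1 → (ps l).natDegree ≤ n+1 := by
    intro l hl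
    rcases eq_or_lt_of_le hl with rfl | hl'
    · exact hdeg'.le
    · by_cases hz : ps l = 0
      · simp [hz]
      · set jj : Fin (n+1) := ⟨n - l, by omega⟩ with hjjdef
        have hjj : n - (jj : ℕ) = l := by
          simp only [hjjdef]
          omega
        have h := hadj jj
        rw [hjj] at h
        have hav0 : av jj ≠ 0 := by
          intro hz2
          rw [hz2, mul_zero, neg_zero] at h
          exact hdetW' ((mul_eq_zero.mp h).resolve_right hz)
        have hdegeq := congrArg Polynomial.natDegree h
        rw [Polynomial.natDegree_mul hdetW' hz, Polynomial.natDegree_neg,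
          Polynomial.natDegree_mul hps1 hav0, hdegdet, hdeg'] at hdegeq
        have := havdeg jj
        omega
  have hPentry : ∀ (i : Fin p) (j : Fin m), P i j
      = ∑ l ∈ Finset.range (n+2), ps l * (Polynomial.C (Ac l i j)
          - Polynomial.X * Polynomial.C (Bc l i j)) := by
    intro i j
    rw [hP, Matrix.sum_apply]
    refine Finset.sum_congr rfl (fun l _ => ?_)
    simp [Matrix.sub_apply, Matrix.smul_apply, Matrix.map_apply, smul_eq_mul]
  have hPdeg : ∀ (i : Fin p) (j : Fin m), (P i j).natDegree ≤ n+2 := by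
    intro i j
    rw [hPentry]
    refine Polynomial.natDegree_sum_le_of_forall_le _ _ ?_
    intro l hl
    refine Polynomial.natDegree_mul_le.trans ?_
    have h1 : (ps l).natDegree ≤ n+1 := hpsdeg l (by have := Finset.mem_range.mp hl; omega)
    have h2 : (Polynomial.C (Ac l i j) - Polynomial.X * Polynomial.C (Bc l i j)).natDegree ≤ 1 := by
      compute_degree
    omega
  -- RatFunc facts
  have hτ : tau F ≠ 0 := tau_ne_zero F
  have hτinv : tau F * (tau F)⁻¹ = 1 := mul_inv_cancel₀ hτ
  set rr : ℕ → RatFunc F :=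
    fun l => (tau F)^(n+1) * Polynomial.aeval (tau F)⁻¹ (ps l) with hrrdef
  have hqrr : algebraMap (Polynomial F) (RatFunc F) (Polynomial.reflect (n+1) (ps (n+1)))
      = rr (n+1) := algebraMap_reflect _ _ hdeg'.le
  have halgC : ∀ x : F, algebraMap (Polynomial F) (RatFunc F) (Polynomial.C x)
      = algebraMap F (RatFunc F) x := by
    intro x
    rw [IsScalarTower.algebraMap_apply F (Polynomial F) (RatFunc F), Polynomial.algebraMap_eq]
  have halgX : algebraMap (Polynomial F) (RatFunc F) Polynomial.X = tau F := rfl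
  have hrev : ∀ (i : Fin (n+1)) (j : Fin (n+2)),
      algebraMap (Polynomial F) (RatFunc F) (revW i j)
        = tau F * Polynomial.aeval ((tau F)⁻¹) (W i j) := by
    intro i j
    rw [hrevW, hW]
    simp only [Matrix.sub_apply, Matrix.smul_apply, Matrix.map_apply, smul_eq_mul,
      map_sub, _root_.map_mul, Polynomial.aeval_C, Polynomial.aeval_X, halgC, halgX]
    linear_combination (algebraMap F (RatFunc F) (Yc i j)) * hτinv
  have hkerK : ∀ i : Fin (n+1),
      algebraMap (Polynomial F) (RatFunc F) (revW i 0) * rr (n+1)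
      + ∑ c : Fin (n+1), algebraMap (Polynomial F) (RatFunc F) (revW i c.succ)
          * rr (n - (c:ℕ)) = 0 := by
    intro i
    have h := congrArg (Polynomial.aeval ((tau F)⁻¹) : Polynomial F →ₐ[F] RatFunc F) (hkerRow i)
    simp only [map_add, _root_.map_mul, map_sum, map_zero] at h
    have expand : algebraMap (Polynomial F) (RatFunc F) (revW i 0) * rr (n+1)
        + ∑ c : Fin (n+1), algebraMap (Polynomial F) (RatFunc F) (revW i c.succ) * rr (n - (c:ℕ))
        = (tau F)^(n+2) * (Polynomial.aeval ((tau F)⁻¹) (W i 0)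
            * Polynomial.aeval ((tau F)⁻¹) (ps (n+1))
          + ∑ c : Fin (n+1), Polynomial.aeval ((tau F)⁻¹) (W i c.succ)
            * Polynomial.aeval ((tau F)⁻¹) (ps (n - (c:ℕ)))) := by
      simp only [hrev, hrrdef, mul_add, Finset.mul_sum]
      congr 1
      · ring
      · exact Finset.sum_congr rfl (fun c _ => by ring)
    rw [expand, h, mul_zero]
  -- Goal 1
  have hY2eval : Y2.map (fun q => Polynomial.eval 0 q)
      = Matrix.kronecker A0 (1 : Matrix (Fin m) (Fin m) F) := by
    ext ⟨i,a⟩ ⟨c,d⟩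
    rw [hY2]
    simp only [Matrix.map_apply, Matrix.submatrix_apply, Matrix.kroneckerMap_apply, id_eq,
      Matrix.kronecker, hrevW, Matrix.sub_apply, Matrix.smul_apply, smul_eq_mul,
      Polynomial.eval_mul, Polynomial.eval_sub, Polynomial.eval_X,
      Polynomial.eval_C, zero_mul, zero_sub, Matrix.one_apply, apply_ite, Polynomial.eval_one,
      Polynomial.eval_zero, hA0def, Matrix.of_apply]
    split_ifs <;> simp [Fin.succ]
  have g1 : IsUnit ((Y2.map (fun q => Polynomial.eval 0 q)).det) := by
    rw [hY2eval, show A0.kronecker (1 : Matrix (Fin m) (Fin m) F)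
      = Matrix.kroneckerMap (· * ·) A0 1 from rfl, Matrix.det_kronecker, Matrix.det_one,
      one_pow, mul_one]
    exact isUnit_iff_ne_zero.mpr (pow_ne_zero _ hdetA0)
  -- Goal 2
  have hq0 : (Polynomial.reflect (n+1) (ps (n+1))).eval 0 ≠ 0 := by
    rw [← Polynomial.coeff_zero_eq_eval_zero, Polynomial.coeff_reflect,
      Polynomial.revAt_le (Nat.zero_le _), Nat.sub_zero]
    have h : W'.det.coeff (W'.det.natDegree) ≠ 0 := Polynomial.leadingCoeff_ne_zero.mpr hdetW'
    have h2 : (ps (n+1)).coeff ((ps (n+1)).natDegree) ≠ 0 :=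
      Polynomial.leadingCoeff_ne_zero.mpr hps1
    rwa [hdeg'] at h2
  refine ⟨g1, hq0, ?_⟩
  have hdetY2 : Y2.det ≠ 0 := by
    intro h
    have h3 := RingHom.map_det (Polynomial.evalRingHom (0:F)) Y2
    rw [h, map_zero, RingHom.mapMatrix_apply] at h3
    have h4 : (Y2.map (fun q => Polynomial.eval 0 q)).det = 0 := by
      have he : Y2.map (fun q => Polynomial.eval 0 q) = Y2.map (Polynomial.evalRingHom (0:F)) :=
        rfl
      rw [he, ← h3]
    exact (isUnit_iff_ne_zero.mp g1) h4
  have hdetKY2 : (toRat Y2).det ≠ 0 := by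
    have h3 := RingHom.map_det (algebraMap (Polynomial F) (RatFunc F)) Y2
    rw [RingHom.mapMatrix_apply] at h3
    rw [toRat, ← h3]
    exact RatFunc.algebraMap_ne_zero hdetY2
  have hUnit : IsUnit (toRat Y2).det := isUnit_iff_ne_zero.mpr hdetKY2
  have hY2invmul : (toRat Y2)⁻¹ * toRat Y2 = 1 := Matrix.nonsing_inv_mul _ hUnit
  set R : Matrix (Fin (n+1) × Fin m) (Fin m) (RatFunc F) :=
    Matrix.of (fun c b => rr (n - (c.1:ℕ)) * (if c.2 = b then 1 else 0)) with hRdef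
  have hY2K : ∀ (i : Fin (n+1)) (a : Fin m) (c : Fin (n+1)) (d : Fin m),
      toRat Y2 (i,a) (c,d) = algebraMap (Polynomial F) (RatFunc F) (revW i c.succ)
        * (if a = d then 1 else 0) := by
    intro i a c d
    have e : Y2 (i,a) (c,d) = revW i c.succ * (1 : Matrix (Fin m) (Fin m) (Polynomial F)) a d := by
      rw [hY2]; rfl
    rw [toRat, Matrix.map_apply, e, _root_.map_mul]
    congr 1
    rw [Matrix.one_apply]
    split_ifs <;> simp
  have hY1K : ∀ (i : Fin (n+1)) (a : Fin m) (b : Fin m),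
      toRat Y1 (i,a) b = algebraMap (Polynomial F) (RatFunc F) (revW i 0)
        * (if a = b then 1 else 0) := by
    intro i a b
    have e : Y1 (i,a) b = revW i 0 * (1 : Matrix (Fin m) (Fin m) (Polynomial F)) a b := by
      rw [hY1]; rfl
    rw [toRat, Matrix.map_apply, e, _root_.map_mul]
    congr 1
    rw [Matrix.one_apply]
    split_ifs <;> simp
  have hbrel : toRat Y2 * R = -((algebraMap (Polynomial F) (RatFunc F)
      (Polynomial.reflect (n+1) (ps (n+1)))) • toRat Y1) := by
    ext ⟨i,a⟩ b
    rw [Matrix.mul_apply, Fintype.sum_prod_type]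
    simp only [hY2K, hRdef, Matrix.of_apply, Matrix.neg_apply, Matrix.smul_apply, hY1K,
      smul_eq_mul, hqrr]
    have hd : ∀ c : Fin (n+1), (∑ d : Fin m,
        (algebraMap (Polynomial F) (RatFunc F) (revW i c.succ) * (if a = d then 1 else 0))
          * (rr (n - (c:ℕ)) * (if d = b then 1 else 0)))
        = algebraMap (Polynomial F) (RatFunc F) (revW i c.succ) * rr (n - (c:ℕ))
            * (if a = b then 1 else 0) := by
      intro c
      rw [Finset.sum_eq_single b (fun x _ hx => by simp [if_neg hx])
        (fun h => absurd (Finset.mem_univ b) h)]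
      split_ifs <;> simp_all
    rw [Finset.sum_congr rfl (fun c _ => hd c), ← Finset.sum_mul]
    rcases eq_or_ne a b with rfl | hab
    · simp only [eq_self_iff_true, if_true, mul_one]
      linear_combination hkerK i
    · simp [if_neg hab]
  have hSchur : (algebraMap (Polynomial F) (RatFunc F)
      (Polynomial.reflect (n+1) (ps (n+1)))) • ((toRat Y2)⁻¹ * toRat Y1) = -R := by
    have h1 : (toRat Y2)⁻¹ * (toRat Y2 * R) = R := by
      rw [← Matrix.mul_assoc, hY2invmul, Matrix.one_mul]
    rw [hbrel, Matrix.mul_neg, Matrix.mul_smul] at h1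
    rw [← h1, neg_neg]
  have hT1K : ∀ (i : Fin p) (b : Fin m), toRat revTop1 i b
      = tau F * algebraMap F (RatFunc F) (Ac (n+1) i b)
        - algebraMap F (RatFunc F) (Bc (n+1) i b) := by
    intro i b
    rw [toRat, Matrix.map_apply, hrt1]
    simp only [Matrix.sub_apply, Matrix.smul_apply, Matrix.map_apply, smul_eq_mul, map_sub,
      _root_.map_mul, halgC, halgX]
  have hT2K : ∀ (i : Fin p) (c : Fin (n+1)) (d : Fin m), toRat revTop2 i (c,d)
      = tau F * algebraMap F (RatFunc F) (Ac (n - (c:ℕ)) i d)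
        - algebraMap F (RatFunc F) (Bc (n - (c:ℕ)) i d) := by
    intro i c d
    rw [toRat, Matrix.map_apply, hrt2]
    simp only [Matrix.of_apply, map_sub, _root_.map_mul, halgC, halgX]
  have harel : (algebraMap (Polynomial F) (RatFunc F)
        (Polynomial.reflect (n+1) (ps (n+1)))) • toRat revTop1 + toRat revTop2 * R
      = toRat (P.map (Polynomial.reflect (n+2))) := by
    ext i b
    rw [Matrix.add_apply, Matrix.smul_apply, smul_eq_mul, Matrix.mul_apply,
      Fintype.sum_prod_type]
    have hd : ∀ c : Fin (n+1), (∑ d : Fin m, toRat revTop2 i (c,d) * R (c,d) b)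
        = (tau F * algebraMap F (RatFunc F) (Ac (n - (c:ℕ)) i b)
            - algebraMap F (RatFunc F) (Bc (n - (c:ℕ)) i b)) * rr (n - (c:ℕ)) := by
      intro c
      simp only [hT2K, hRdef, Matrix.of_apply]
      rw [Finset.sum_eq_single b (fun x _ hx => by simp [if_neg hx])
        (fun h => absurd (Finset.mem_univ b) h)]
      simp
    rw [Finset.sum_congr rfl (fun c _ => hd c)]
    have hflip : (∑ c : Fin (n+1), (tau F * algebraMap F (RatFunc F) (Ac (n - (c:ℕ)) i b)
            - algebraMap F (RatFunc F) (Bc (n - (c:ℕ)) i b)) * rr (n - (c:ℕ)))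
        = ∑ l ∈ Finset.range (n+1), (tau F * algebraMap F (RatFunc F) (Ac l i b)
            - algebraMap F (RatFunc F) (Bc l i b)) * rr l := by
      rw [Fin.sum_univ_eq_sum_range (fun c => (tau F * algebraMap F (RatFunc F) (Ac (n - c) i b)
            - algebraMap F (RatFunc F) (Bc (n - c) i b)) * rr (n - c)) (n+1)]
      exact Finset.sum_range_reflect (fun l => (tau F * algebraMap F (RatFunc F) (Ac l i b)
            - algebraMap F (RatFunc F) (Bc l i b)) * rr l) (n+1)
    rw [hflip]
    have hRHS : toRat (P.map (Polynomial.reflect (n+2))) i b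
        = (∑ l ∈ Finset.range (n+1), (tau F * algebraMap F (RatFunc F) (Ac l i b)
            - algebraMap F (RatFunc F) (Bc l i b)) * rr l)
          + (tau F * algebraMap F (RatFunc F) (Ac (n+1) i b)
            - algebraMap F (RatFunc F) (Bc (n+1) i b)) * rr (n+1) := by
      rw [show ((∑ l ∈ Finset.range (n+1), (tau F * algebraMap F (RatFunc F) (Ac l i b)
            - algebraMap F (RatFunc F) (Bc l i b)) * rr l)
          + (tau F * algebraMap F (RatFunc F) (Ac (n+1) i b)
            - algebraMap F (RatFunc F) (Bc (n+1) i b)) * rr (n+1))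
        = ∑ l ∈ Finset.range (n+2), (tau F * algebraMap F (RatFunc F) (Ac l i b)
            - algebraMap F (RatFunc F) (Bc l i b)) * rr l from
        (Finset.sum_range_succ _ (n+1)).symm]
      rw [toRat, Matrix.map_apply, Matrix.map_apply, algebraMap_reflect _ _ (hPdeg i b),
        hPentry, map_sum, Finset.mul_sum]
      refine Finset.sum_congr rfl (fun l hl => ?_)
      rw [_root_.map_mul, map_sub, _root_.map_mul, Polynomial.aeval_C, Polynomial.aeval_C,
        Polynomial.aeval_X, hrrdef]
      have hexp : (tau F : RatFunc F)^(n+2) = tau F^(n+1) * tau F := by ring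
      rw [hexp]
      linear_combination (- (tau F)^(n+1) * Polynomial.aeval ((tau F)⁻¹) (ps l)
        * algebraMap F (RatFunc F) (Bc l i b)) * hτinv
    rw [hRHS, hT1K, hqrr]
    ring
  rw [Matrix.mul_assoc, smul_sub, ← Matrix.mul_smul, hSchur, Matrix.mul_neg, sub_neg_eq_add]
  exact harel


/-- For the CORK pencil of `P(λ) = Σ_{i=0}^{k-1} (A_i - λ B_i) p_i(λ)`,
with `(X - λY) p(λ) = 0`, `rank Y = k-1` and `deg p_{k-1} = k-1`, the reversal `rev₁ C(λ)`,
partitioned with state matrix `rev₁ Y₂(λ)` (the last `(k-1)m` columns of `(λX - Y) ⊗ I_m`),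
has `rev₁ Y₂(0)` invertible, `q(λ) = λ^{k-1} p_{k-1}(1/λ)` is a polynomial with `q(0) ≠ 0`,
and the Schur complement
`T(λ) = (λA_{k-1} - B_{k-1}) - [λA_{k-2} - B_{k-2}, …, λA_0 - B_0] (rev₁Y₂(λ))⁻¹ rev₁Y₁(λ)`
satisfies `q(λ) T(λ) = rev_k P(λ) = λ^k P(1/λ)`. -/
theorem stmt_13 {F : Type*} [Field F] {p m k : ℕ} (hk : 2 ≤ k)
    (ps : ℕ → Polynomial F) (hp0 : ps 0 = 1)
    (Ac Bc : ℕ → Matrix (Fin p) (Fin m) F)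
    (P : Matrix (Fin p) (Fin m) (Polynomial F))
    (hP : P = ∑ i ∈ Finset.range k,
      ps i • ((Ac i).map Polynomial.C - (Polynomial.X : Polynomial F) • (Bc i).map Polynomial.C))
    (Xc Yc : Matrix (Fin (k-1)) (Fin k) F)
    (W : Matrix (Fin (k-1)) (Fin k) (Polynomial F))
    (hW : W = Xc.map Polynomial.C - (Polynomial.X : Polynomial F) • Yc.map Polynomial.C)
    -- `(X - λY) p(λ) = 0`
    (hker : W.mulVec (fun i => ps (k-1-(i : ℕ))) = 0)
    -- `rank Y = k-1`
    (hY : Yc.rank = k-1)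
    -- `deg p_{k-1}(λ) = k-1`
    (hdeg : (ps (k-1)).natDegree = k-1)
    -- `rev₁ (X - λY) = λX - Y`
    (revW : Matrix (Fin (k-1)) (Fin k) (Polynomial F))
    (hrevW : revW = (Polynomial.X : Polynomial F) • Xc.map Polynomial.C - Yc.map Polynomial.C)
    -- `rev₁ Y₁(λ)`: the first `m` columns of `(λX - Y) ⊗ I_m`
    (Y1 : Matrix (Fin (k-1) × Fin m) (Fin m) (Polynomial F))
    (hY1 : Y1 = (Matrix.kronecker revW (1 : Matrix (Fin m) (Fin m) (Polynomial F))).submatrix id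
      (fun j => ((⟨0, by omega⟩ : Fin k), j)))
    -- `rev₁ Y₂(λ)`: the last `(k-1)m` columns of `(λX - Y) ⊗ I_m`
    (Y2 : Matrix (Fin (k-1) × Fin m) (Fin (k-1) × Fin m) (Polynomial F))
    (hY2 : Y2 = (Matrix.kronecker revW (1 : Matrix (Fin m) (Fin m) (Polynomial F))).submatrix id
      (fun c => ((⟨(c.1 : ℕ) + 1, by have := c.1.isLt; omega⟩ : Fin k), c.2)))
    -- `λ A_{k-1} - B_{k-1}`
    (revTop1 : Matrix (Fin p) (Fin m) (Polynomial F))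
    (hrt1 : revTop1 = (Polynomial.X : Polynomial F) • (Ac (k-1)).map Polynomial.C
      - (Bc (k-1)).map Polynomial.C)
    -- `[λ A_{k-2} - B_{k-2}, …, λ A_0 - B_0]`
    (revTop2 : Matrix (Fin p) (Fin (k-1) × Fin m) (Polynomial F))
    (hrt2 : revTop2 = Matrix.of fun i c =>
      Polynomial.X * Polynomial.C (Ac (k-2-(c.1 : ℕ)) i c.2)
        - Polynomial.C (Bc (k-2-(c.1 : ℕ)) i c.2)) :
    -- `rev₁ Y₂(0)` is invertible
    IsUnit (Y2.map (fun q => Polynomial.eval 0 q)).det ∧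
    -- `q(λ) = λ^{k-1} p_{k-1}(1/λ)` is a polynomial with `q(0) ≠ 0`
    (Polynomial.reflect (k-1) (ps (k-1))).eval 0 ≠ 0 ∧
    -- `q(λ) T(λ) = rev_k P(λ)`
    (algebraMap (Polynomial F) (RatFunc F) (Polynomial.reflect (k-1) (ps (k-1)))) •
        (toRat revTop1 - toRat revTop2 * (toRat Y2)⁻¹ * toRat Y1)
      = toRat (P.map (Polynomial.reflect k)) := by
  obtain ⟨n, rfl⟩ : ∃ n, k = n + 2 := ⟨k - 2, by omega⟩
  exact stmt13_aux ps hp0 Ac Bc P hP Xc Yc W hW hker hY hdeg revW hrevW Y1 hY1 Y2 hY2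
    revTop1 hrt1 revTop2 hrt2
end

section
/- Let 𝔽 be a field, let λM₁ + M₀ be a pencil of size (η+1)p × (ε+1)m, and let C_K(λ) = [[λM₁+M₀, L_η(λ)ᵀ ⊗ I_p],[L_ε(λ) ⊗ I_m, 0]] be the associated block Kronecker pencil. Partition λM₁+M₀ = [[M₁₁(λ), M₁₂(λ)],[M₂₁(λ), M₂₂(λ)]] with M₁₁(λ) of size ηp × εm, write L_ε(λ) ⊗ I_m = [A_{ε,m}(λ) B_{ε,m}(λ)] with A_{ε,m}(λ) of size εm × εm, and L_η(λ) ⊗ I_p = [A_{η,p}(λ) B_{η,p}(λ)] with A_{η,p}(λ) of size ηp × ηp. Set A(λ) = [[M₁₁(λ), A_{η,p}(λ)ᵀ],[A_{ε,m}(λ), 0]], B(λ) = [M₁₂(λ); B_{ε,m}(λ)], C(λ) = −[M₂₁(λ) B_{η,p}(λ)ᵀ], D(λ) = M₂₂(λ). Then: (a) A(λ) is unimodular; (b) the Schur complement D(λ) + C(λ)A(λ)⁻¹B(λ) equals P(λ) := (Λ_η(λ)ᵀ ⊗ I_p)(λM₁+M₀)(Λ_ε(λ) ⊗ I_m) ∈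 𝔽[λ]^{p×m}; (c) C_K(λ) is a linearization of P(λ). -/
open Polynomial Matrix

/-- The pencil `L_k(λ) ∈ F[λ]^{k × (k+1)}` with `-1` in positions `(i,i)` and `λ` in
positions `(i,i+1)`. -/
noncomputable def Lpencil (F : Type*) [Field F] (k : ℕ) :
    Matrix (Fin k) (Fin (k+1)) (Polynomial F) :=
  Matrix.of fun i j =>
    if (j : ℕ) = (i : ℕ) then -1 else if (j : ℕ) = (i : ℕ) + 1 then Polynomial.X else 0

/-- The row matrix `Λ_k(λ)ᵀ ⊗ I_p` where `Λ_k(λ) = [λ^k, …, λ, 1]ᵀ`. -/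
noncomputable def lamRow (F : Type*) [Field F] (k p : ℕ) :
    Matrix (Fin p) (Fin (k+1) × Fin p) (Polynomial F) :=
  Matrix.of fun i rc =>
    if rc.2 = i then (Polynomial.X : Polynomial F) ^ (k - (rc.1 : ℕ)) else 0

/-- The column matrix `Λ_k(λ) ⊗ I_m`. -/
noncomputable def lamCol (F : Type*) [Field F] (k m : ℕ) :
    Matrix (Fin (k+1) × Fin m) (Fin m) (Polynomial F) :=
  Matrix.of fun rc j =>
    if rc.2 = j then (Polynomial.X : Polynomial F) ^ (k - (rc.1 : ℕ)) else 0

lemma Lsub_det_isUnit (F : Type*) [Field F] (k : ℕ) :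
    IsUnit ((Lpencil F k).submatrix id Fin.castSucc).det := by
  have h : ((Lpencil F k).submatrix id Fin.castSucc).BlockTriangular id := by
    intro i j hij
    have hij' : (j : ℕ) < (i : ℕ) := hij
    simp only [Matrix.submatrix_apply, id_eq, Lpencil, Matrix.of_apply, Fin.coe_castSucc]
    rw [if_neg (by omega), if_neg (by omega)]
  rw [Matrix.det_of_upperTriangular h]
  have hdiag : ∀ i : Fin k, ((Lpencil F k).submatrix id Fin.castSucc) i i = -1 := by
    intro i; simp [Lpencil]
  rw [Finset.prod_congr rfl fun i _ => hdiag i]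
  simp only [Finset.prod_const]
  exact (isUnit_one.neg).pow _

lemma lamRow_eq_transpose (F : Type*) [Field F] (k p : ℕ) :
    lamRow F k p = (lamCol F k p)ᵀ := rfl

lemma core_sum (F : Type*) [Field F] {k : ℕ} (r : Fin k) :
    ∑ s : Fin (k+1), Lpencil F k r s * (Polynomial.X : Polynomial F) ^ (k - (s : ℕ)) = 0 := by
  have h1 : ∀ s : Fin (k+1), Lpencil F k r s * (Polynomial.X : Polynomial F) ^ (k - (s : ℕ)) =
      (if s = r.castSucc then -(Polynomial.X : Polynomial F) ^ (k - (r : ℕ)) else 0)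
      + (if s = r.succ then (Polynomial.X : Polynomial F) ^ (k - (r : ℕ)) else 0) := by
    intro s
    have hr : (r : ℕ) < k := r.isLt
    by_cases h : (s : ℕ) = (r : ℕ)
    · have hs : s = r.castSucc := by ext; simpa using h
      have hs' : s ≠ r.succ := by
        intro hc; rw [hc] at h; simp [Fin.val_succ] at h
      simp [Lpencil, hs, hs', h, Fin.ext_iff]
    · by_cases h2 : (s : ℕ) = (r : ℕ) + 1
      · have hs : s = r.succ := by ext; simpa [Fin.val_succ] using h2
        have hs' : s ≠ r.castSucc := by
          intro hc; rw [hc] at h2; simp [Fin.coe_castSucc] at h2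
        have hpow : (Polynomial.X : Polynomial F) * (Polynomial.X : Polynomial F) ^ (k - ((r : ℕ) + 1))
            = (Polynomial.X : Polynomial F) ^ (k - (r : ℕ)) := by
          rw [← pow_succ']
          congr 1
          omega
        have hne : ¬ (r.succ = r.castSucc) := by simp [Fin.ext_iff]
        subst hs
        simp [Lpencil, h, h2, hpow, hne]
      · have hs : s ≠ r.castSucc := by
          intro hc; rw [hc] at h; simp at h
        have hs' : s ≠ r.succ := by
          intro hc; rw [hc] at h2; simp [Fin.val_succ] at h2
        simp [Lpencil, hs, hs', h, h2]
  rw [Finset.sum_congr rfl fun s _ => h1 s, Finset.sum_add_distrib]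
  rw [Finset.sum_ite_eq' Finset.univ r.castSucc, Finset.sum_ite_eq' Finset.univ r.succ]
  simp

/-- Decomposition of `N * lamCol` into the `castSucc` part and the `last` part. -/
lemma mul_lamCol_decomp {F : Type*} [Field F] {k m : ℕ} {R : Type*}
    (N : Matrix R (Fin (k+1) × Fin m) (Polynomial F)) :
    N * lamCol F k m =
      N.submatrix id (fun cj : Fin k × Fin m => (cj.1.castSucc, cj.2)) *
        ((lamCol F k m).submatrix (fun rc : Fin k × Fin m => (rc.1.castSucc, rc.2)) id)
      + N.submatrix id (fun j : Fin m => (Fin.last k, j)) := by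
  refine Matrix.ext fun i b => ?_
  simp only [Matrix.mul_apply, Matrix.add_apply, Matrix.submatrix_apply, id_eq, lamCol,
    Matrix.of_apply, Fintype.sum_prod_type, mul_ite, mul_zero]
  have h1 : ∀ s : Fin (k+1), (∑ d : Fin m, if d = b then N i (s, d) * X ^ (k - (s:ℕ)) else 0)
      = N i (s, b) * X ^ (k - (s:ℕ)) := fun s => by simp
  have h2 : ∀ s : Fin k,
      (∑ d : Fin m, if d = b then N i (s.castSucc, d) * X ^ (k - ((s.castSucc : Fin (k+1)):ℕ)) else 0)
      = N i (s.castSucc, b) * X ^ (k - (s:ℕ)) := fun s => by simp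
  rw [Finset.sum_congr rfl fun s _ => h1 s, Finset.sum_congr rfl fun s _ => h2 s]
  rw [Fin.sum_univ_castSucc]
  simp

/-- The key identity `A_{k,m}(λ) ⬝ (top of Λ_k ⊗ I) = -B_{k,m}(λ)`. -/
lemma colKey (F : Type*) [Field F] (k m : ℕ) :
    (((Lpencil F k).kronecker (1 : Matrix (Fin m) (Fin m) (Polynomial F))).submatrix id
        (fun cj : Fin k × Fin m => (cj.1.castSucc, cj.2))) *
      ((lamCol F k m).submatrix (fun rc : Fin k × Fin m => (rc.1.castSucc, rc.2)) id) =
    -(((Lpencil F k).kronecker (1 : Matrix (Fin m) (Fin m) (Polynomial F))).submatrix id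
        (fun j : Fin m => (Fin.last k, j))) := by
  have h0 : ((Lpencil F k).kronecker (1 : Matrix (Fin m) (Fin m) (Polynomial F))) * lamCol F k m
      = 0 := by
    refine Matrix.ext fun ia b => ?_
    obtain ⟨i, a⟩ := ia
    simp only [Matrix.mul_apply, Matrix.kronecker, Matrix.kroneckerMap_apply, lamCol, Matrix.of_apply,
      Fintype.sum_prod_type, mul_ite, mul_zero, Matrix.zero_apply]
    have h1 : ∀ s : Fin (k+1),
        (∑ d : Fin m, if d = b then Lpencil F k i s * (1 : Matrix (Fin m) (Fin m) (Polynomial F)) a d * X ^ (k - (s:ℕ)) else 0)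
        = Lpencil F k i s * (1 : Matrix (Fin m) (Fin m) (Polynomial F)) a b * X ^ (k - (s:ℕ)) :=
      fun s => by simp
    rw [Finset.sum_congr rfl fun s _ => h1 s]
    have : ∀ s : Fin (k+1), Lpencil F k i s * (1 : Matrix (Fin m) (Fin m) (Polynomial F)) a b * X ^ (k - (s:ℕ))
        = (1 : Matrix (Fin m) (Fin m) (Polynomial F)) a b * (Lpencil F k i s * X ^ (k - (s:ℕ))) := by
      intro s; ring
    rw [Finset.sum_congr rfl fun s _ => this s, ← Finset.mul_sum, core_sum, mul_zero]
  have := mul_lamCol_decomp (F := F) (k := k) (m := m)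
    ((Lpencil F k).kronecker (1 : Matrix (Fin m) (Fin m) (Polynomial F)))
  rw [h0] at this
  linear_combination (norm := abel) -this

/-- Row version: decomposition of `lamRow * N`. -/
lemma lamRow_mul_decomp {F : Type*} [Field F] {k p : ℕ} {C : Type*}
    (N : Matrix (Fin (k+1) × Fin p) C (Polynomial F)) :
    lamRow F k p * N =
      ((lamRow F k p).submatrix id (fun rc : Fin k × Fin p => (rc.1.castSucc, rc.2))) *
        (N.submatrix (fun ri : Fin k × Fin p => (ri.1.castSucc, ri.2)) id)
      + N.submatrix (fun i : Fin p => (Fin.last k, i)) id := by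
  have h := mul_lamCol_decomp (F := F) (k := k) (m := p) Nᵀ
  have h2 := congrArg Matrix.transpose h
  simpa [Matrix.transpose_mul, Matrix.transpose_submatrix, lamRow_eq_transpose] using h2

/-- Row-index bijection for the system-matrix view of a block Kronecker pencil. -/
def erE (p m η ε : ℕ) :
    (Fin p ⊕ ((Fin ε × Fin m) ⊕ (Fin η × Fin p))) ≃ ((Fin (η+1) × Fin p) ⊕ (Fin ε × Fin m)) where
  toFun := Sum.elim (fun i : Fin p => Sum.inl (Fin.last η, i))
    (Sum.elim (fun em : Fin ε × Fin m => Sum.inr em)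
      (fun hp : Fin η × Fin p => Sum.inl (hp.1.castSucc, hp.2)))
  invFun := Sum.elim
    (fun rc => Fin.lastCases (Sum.inl rc.2) (fun r => Sum.inr (Sum.inr (r, rc.2))) rc.1)
    (fun em => Sum.inr (Sum.inl em))
  left_inv := by rintro (i | (em | hp)) <;> simp
  right_inv := by
    rintro (⟨r, a⟩ | em)
    · induction r using Fin.lastCases with
      | last => simp
      | cast r => simp
    · simp

/-- Column-index bijection for the system-matrix view of a block Kronecker pencil. -/
def ecE (p m η ε : ℕ) :
    (Fin m ⊕ ((Fin ε × Fin m) ⊕ (Fin η × Fin p))) ≃ ((Fin (ε+1) × Fin m) ⊕ (Fin η × Fin p)) where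
  toFun := Sum.elim (fun j : Fin m => Sum.inl (Fin.last ε, j))
    (Sum.elim (fun em : Fin ε × Fin m => Sum.inl (em.1.castSucc, em.2))
      (fun hp : Fin η × Fin p => Sum.inr hp))
  invFun := Sum.elim
    (fun rc => Fin.lastCases (Sum.inl rc.2) (fun r => Sum.inr (Sum.inl (r, rc.2))) rc.1)
    (fun hp => Sum.inr (Sum.inr hp))
  left_inv := by rintro (j | (em | hp)) <;> simp
  right_inv := by
    rintro (⟨r, a⟩ | hp)
    · induction r using Fin.lastCases with
      | last => simp
      | cast r => simp
    · simp

/-- A block Kronecker pencil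
`C_K(λ) = [[λM₁ + M₀, L_η(λ)ᵀ ⊗ I_p], [L_ε(λ) ⊗ I_m, 0]]`, viewed as a polynomial system
matrix with state matrix `A(λ) = [[M₁₁(λ), A_{η,p}(λ)ᵀ], [A_{ε,m}(λ), 0]]`, has `A(λ)`
unimodular and Schur complement
`D + C A⁻¹ B = P(λ) = (Λ_η(λ)ᵀ ⊗ I_p)(λM₁ + M₀)(Λ_ε(λ) ⊗ I_m)`; consequently `C_K(λ)` is a
linearization of `P(λ)`. -/
theorem stmt_14 {F : Type*} [Field F] {p m η ε : ℕ}
    (M : Matrix (Fin (η+1) × Fin p) (Fin (ε+1) × Fin m) (Polynomial F))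
    -- `λM₁ + M₀` is a pencil
    (hM : ∀ i j, (M i j).degree ≤ 1)
    -- the block Kronecker pencil
    (CK : Matrix ((Fin (η+1) × Fin p) ⊕ (Fin ε × Fin m))
      ((Fin (ε+1) × Fin m) ⊕ (Fin η × Fin p)) (Polynomial F))
    (hCK : CK = Matrix.fromBlocks M
      ((Lpencil F η)ᵀ.kronecker (1 : Matrix (Fin p) (Fin p) (Polynomial F)))
      ((Lpencil F ε).kronecker (1 : Matrix (Fin m) (Fin m) (Polynomial F))) 0)
    -- `P(λ) = (Λ_η(λ)ᵀ ⊗ I_p)(λM₁ + M₀)(Λ_ε(λ) ⊗ I_m)`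
    (P : Matrix (Fin p) (Fin m) (Polynomial F))
    (hP : P = lamRow F η p * M * lamCol F ε m)
    -- the blocks of `M`
    (M11 : Matrix (Fin η × Fin p) (Fin ε × Fin m) (Polynomial F))
    (hM11 : M11 = M.submatrix (fun ri => (ri.1.castSucc, ri.2)) (fun cj => (cj.1.castSucc, cj.2)))
    (M12 : Matrix (Fin η × Fin p) (Fin m) (Polynomial F))
    (hM12 : M12 = M.submatrix (fun ri => (ri.1.castSucc, ri.2)) (fun j => (Fin.last ε, j)))
    (M21 : Matrix (Fin p) (Fin ε × Fin m) (Polynomial F))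
    (hM21 : M21 = M.submatrix (fun i => (Fin.last η, i)) (fun cj => (cj.1.castSucc, cj.2)))
    (M22 : Matrix (Fin p) (Fin m) (Polynomial F))
    (hM22 : M22 = M.submatrix (fun i => (Fin.last η, i)) (fun j => (Fin.last ε, j)))
    -- `L_ε(λ) ⊗ I_m = [A_{ε,m}(λ)  B_{ε,m}(λ)]`
    (Aem : Matrix (Fin ε × Fin m) (Fin ε × Fin m) (Polynomial F))
    (hAem : Aem = ((Lpencil F ε).kronecker (1 : Matrix (Fin m) (Fin m) (Polynomial F))).submatrix
      id (fun cj => (cj.1.castSucc, cj.2)))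
    (Bem : Matrix (Fin ε × Fin m) (Fin m) (Polynomial F))
    (hBem : Bem = ((Lpencil F ε).kronecker (1 : Matrix (Fin m) (Fin m) (Polynomial F))).submatrix
      id (fun j => (Fin.last ε, j)))
    -- `L_η(λ) ⊗ I_p = [A_{η,p}(λ)  B_{η,p}(λ)]`
    (Ahp : Matrix (Fin η × Fin p) (Fin η × Fin p) (Polynomial F))
    (hAhp : Ahp = ((Lpencil F η).kronecker (1 : Matrix (Fin p) (Fin p) (Polynomial F))).submatrix
      id (fun cj => (cj.1.castSucc, cj.2)))
    (Bhp : Matrix (Fin η × Fin p) (Fin p) (Polynomial F))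
    (hBhp : Bhp = ((Lpencil F η).kronecker (1 : Matrix (Fin p) (Fin p) (Polynomial F))).submatrix
      id (fun i => (Fin.last η, i)))
    -- the state matrix `A(λ) = [[M₁₁, A_{η,p}ᵀ], [A_{ε,m}, 0]]` (rows relabelled so that it
    -- is a square matrix), and `B(λ) = [M₁₂; B_{ε,m}]`, `C(λ) = -[M₂₁  B_{η,p}ᵀ]`, `D = M₂₂`
    (A : Matrix ((Fin ε × Fin m) ⊕ (Fin η × Fin p)) ((Fin ε × Fin m) ⊕ (Fin η × Fin p))
      (Polynomial F))
    (hA : A = (Matrix.fromBlocks M11 Ahpᵀ Aem 0).submatrix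
      (Equiv.sumComm (Fin ε × Fin m) (Fin η × Fin p)) id)
    (B : Matrix ((Fin ε × Fin m) ⊕ (Fin η × Fin p)) (Fin m) (Polynomial F))
    (hB : B = (Matrix.fromRows M12 Bem).submatrix
      (Equiv.sumComm (Fin ε × Fin m) (Fin η × Fin p)) id)
    (C : Matrix (Fin p) ((Fin ε × Fin m) ⊕ (Fin η × Fin p)) (Polynomial F))
    (hC : C = -(Matrix.fromCols M21 Bhpᵀ)) :
    -- (a) `A(λ)` is unimodular
    IsUnit A.det ∧
    -- (b) the Schur complement of `A(λ)` in `C_K(λ)` is `P(λ)`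
    M22 + C * A⁻¹ * B = P ∧
    -- (c) `C_K(λ)` is a linearization of `P(λ)`
    (∃ (U₁ : Matrix (Fin p ⊕ ((Fin ε × Fin m) ⊕ (Fin η × Fin p)))
        ((Fin (η+1) × Fin p) ⊕ (Fin ε × Fin m)) (Polynomial F))
       (V₁ : Matrix ((Fin (ε+1) × Fin m) ⊕ (Fin η × Fin p))
        (Fin m ⊕ ((Fin ε × Fin m) ⊕ (Fin η × Fin p))) (Polynomial F)),
       IsUnit ((U₁.submatrix id
         (Sum.elim (fun i : Fin p => Sum.inl (Fin.last η, i))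
           (Sum.elim (fun em : Fin ε × Fin m => Sum.inr em)
             (fun hp : Fin η × Fin p => Sum.inl (hp.1.castSucc, hp.2))))).det) ∧
       IsUnit ((V₁.submatrix
         (Sum.elim (fun j : Fin m => Sum.inl (Fin.last ε, j))
           (Sum.elim (fun em : Fin ε × Fin m => Sum.inl (em.1.castSucc, em.2))
             (fun hp : Fin η × Fin p => Sum.inr hp)))
         id).det) ∧
       U₁ * CK * V₁ = Matrix.fromBlocks P 0 0
         (1 : Matrix ((Fin ε × Fin m) ⊕ (Fin η × Fin p))
            ((Fin ε × Fin m) ⊕ (Fin η × Fin p)) (Polynomial F))) := by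
    classical
  -- (a) A is unimodular
  have hAem' : Aem = ((Lpencil F ε).submatrix id Fin.castSucc).kronecker
      (1 : Matrix (Fin m) (Fin m) (Polynomial F)) := by
    rw [hAem]; rfl
  have hAhp' : Ahp = ((Lpencil F η).submatrix id Fin.castSucc).kronecker
      (1 : Matrix (Fin p) (Fin p) (Polynomial F)) := by
    rw [hAhp]; rfl
  have hdAem : IsUnit Aem.det := by
    rw [hAem']
    simp only [Matrix.kronecker]
    rw [Matrix.det_kronecker]
    simp only [Matrix.det_one, one_pow, mul_one, Fintype.card_fin]
    exact (Lsub_det_isUnit F ε).pow m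
  have hdAhpT : IsUnit Ahpᵀ.det := by
    rw [Matrix.det_transpose, hAhp']
    simp only [Matrix.kronecker]
    rw [Matrix.det_kronecker]
    simp only [Matrix.det_one, one_pow, mul_one, Fintype.card_fin]
    exact (Lsub_det_isUnit F η).pow p
  have hA' : A = Matrix.fromBlocks Aem 0 M11 Ahpᵀ := by
    rw [hA]; ext (x | x) (y | y) <;> rfl
  have ha : IsUnit A.det := by
    rw [hA', Matrix.det_fromBlocks_zero₁₂]
    exact hdAem.mul hdAhpT
  -- (b) the Schur complement
  set tc : Matrix (Fin ε × Fin m) (Fin m) (Polynomial F) :=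
    (lamCol F ε m).submatrix (fun rc : Fin ε × Fin m => (rc.1.castSucc, rc.2)) id with htc
  set rt : Matrix (Fin p) (Fin η × Fin p) (Polynomial F) :=
    (lamRow F η p).submatrix id (fun rc : Fin η × Fin p => (rc.1.castSucc, rc.2)) with hrt
  have hcol : Aem * tc = -Bem := by rw [hAem, hBem, htc]; exact colKey F ε m
  have hrow : rt * Ahpᵀ = -Bhpᵀ := by
    have h2 := congrArg Matrix.transpose (colKey F η p)
    rw [Matrix.transpose_mul, Matrix.transpose_neg] at h2
    rw [hAhp, hBhp, hrt, lamRow_eq_transpose]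
    simpa [Matrix.transpose_submatrix] using h2
  set X2 : Matrix (Fin η × Fin p) (Fin m) (Polynomial F) := Ahpᵀ⁻¹ * (M12 + M11 * tc) with hX2
  have hAhpX2 : Ahpᵀ * X2 = M12 + M11 * tc := by
    rw [hX2, ← Matrix.mul_assoc, Matrix.mul_nonsing_inv _ hdAhpT, Matrix.one_mul]
  have hB' : B = Matrix.fromRows Bem M12 := by
    rw [hB]; ext (x | x) y <;> rfl
  have hAX : A * Matrix.fromRows (-tc) X2 = B := by
    have harg : M11 * -tc + Ahpᵀ * X2 = M12 := by
      rw [Matrix.mul_neg, hAhpX2]; abel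
    rw [hA', hB', Matrix.fromBlocks_mul_fromRows, Matrix.mul_neg, hcol, neg_neg,
      Matrix.zero_mul, add_zero, harg]
  have hAinvB : A⁻¹ * B = Matrix.fromRows (-tc) X2 := by
    rw [← hAX, ← Matrix.mul_assoc, Matrix.nonsing_inv_mul _ ha, Matrix.one_mul]
  have e11 : (M.submatrix id (fun cj : Fin ε × Fin m => (cj.1.castSucc, cj.2))).submatrix
      (fun ri : Fin η × Fin p => (ri.1.castSucc, ri.2)) id = M11 := by rw [hM11]; rfl
  have e21 : (M.submatrix id (fun cj : Fin ε × Fin m => (cj.1.castSucc, cj.2))).submatrix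
      (fun i : Fin p => (Fin.last η, i)) id = M21 := by rw [hM21]; rfl
  have e12 : (M.submatrix id (fun j : Fin m => (Fin.last ε, j))).submatrix
      (fun ri : Fin η × Fin p => (ri.1.castSucc, ri.2)) id = M12 := by rw [hM12]; rfl
  have e22 : (M.submatrix id (fun j : Fin m => (Fin.last ε, j))).submatrix
      (fun i : Fin p => (Fin.last η, i)) id = M22 := by rw [hM22]; rfl
  have hPexp : lamRow F η p * M * lamCol F ε m
      = rt * (M11 * tc) + M21 * tc + rt * M12 + M22 := by
    rw [Matrix.mul_assoc, mul_lamCol_decomp M, Matrix.mul_add, ← Matrix.mul_assoc,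
      lamRow_mul_decomp (M.submatrix id (fun cj : Fin ε × Fin m => (cj.1.castSucc, cj.2))),
      lamRow_mul_decomp (M.submatrix id (fun j : Fin m => (Fin.last ε, j))),
      e11, e21, e12, e22, ← hrt, ← htc, Matrix.add_mul, Matrix.mul_assoc]
    abel
  have hb : M22 + C * A⁻¹ * B = P := by
    rw [Matrix.mul_assoc, hAinvB, hC, Matrix.neg_mul, Matrix.fromCols_mul_fromRows]
    have hBhpX2 : Bhpᵀ * X2 = -(rt * (M12 + M11 * tc)) := by
      have hne : Bhpᵀ = -(rt * Ahpᵀ) := by rw [hrow, neg_neg]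
      rw [hne, Matrix.neg_mul, Matrix.mul_assoc, hAhpX2]
    rw [Matrix.mul_neg, hBhpX2, hP, hPexp, Matrix.mul_add]
    abel
  refine ⟨ha, hb, ?_⟩
  -- (c) the linearization
  set er := erE p m η ε with her
  set ec := ecE p m η ε with hec
  have hS : CK.submatrix (⇑er) (⇑ec) = Matrix.fromBlocks M22 (-C) B A := by
    rw [hCK, hC, neg_neg, hA, hB, hM11, hM12, hM21, hM22, hAem, hBem, hAhp, hBhp]
    ext (i | (em | hp)) (j | (em' | hp')) <;>
      simp [her, erE, hec, ecE, Matrix.submatrix_apply, Matrix.one_apply, eq_comm,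
        Matrix.kroneckerMap_apply, Matrix.fromBlocks, Matrix.fromRows_apply_inl, Matrix.fromRows_apply_inr, Matrix.fromCols]
  set U : Matrix (Fin p ⊕ ((Fin ε × Fin m) ⊕ (Fin η × Fin p)))
      (Fin p ⊕ ((Fin ε × Fin m) ⊕ (Fin η × Fin p))) (Polynomial F) :=
    Matrix.fromBlocks 1 (C * A⁻¹) 0 A⁻¹ with hUdef
  set V : Matrix (Fin m ⊕ ((Fin ε × Fin m) ⊕ (Fin η × Fin p)))
      (Fin m ⊕ ((Fin ε × Fin m) ⊕ (Fin η × Fin p))) (Polynomial F) :=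
    Matrix.fromBlocks 1 0 (-(A⁻¹ * B)) 1 with hVdef
  have hU : IsUnit U.det := by
    rw [hUdef, Matrix.det_fromBlocks_zero₂₁, Matrix.det_one, one_mul, Matrix.det_nonsing_inv]
    exact isUnit_ringInverse.mpr ha
  have hV : IsUnit V.det := by
    rw [hVdef, Matrix.det_fromBlocks_zero₁₂, Matrix.det_one, one_mul, Matrix.det_one]
    exact isUnit_one
  have h1 : U * Matrix.fromBlocks M22 (-C) B A = Matrix.fromBlocks P 0 (A⁻¹ * B) 1 := by
    rw [hUdef, Matrix.fromBlocks_multiply, Matrix.one_mul, Matrix.one_mul, Matrix.zero_mul,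
      Matrix.zero_mul, zero_add, zero_add, hb, Matrix.mul_assoc, Matrix.nonsing_inv_mul _ ha,
      Matrix.mul_one, neg_add_cancel]
  have h2 : Matrix.fromBlocks P 0 (A⁻¹ * B) (1 : Matrix ((Fin ε × Fin m) ⊕ (Fin η × Fin p))
      ((Fin ε × Fin m) ⊕ (Fin η × Fin p)) (Polynomial F)) * V = Matrix.fromBlocks P 0 0 1 := by
    rw [hVdef, Matrix.fromBlocks_multiply]
    simp
  refine ⟨U.submatrix id ⇑er.symm, V.submatrix ⇑ec.symm id, ?_, ?_, ?_⟩
  · have hUU : (U.submatrix id ⇑er.symm).submatrix id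
        (Sum.elim (fun i : Fin p => Sum.inl (Fin.last η, i))
          (Sum.elim (fun em : Fin ε × Fin m => Sum.inr em)
            (fun hp : Fin η × Fin p => Sum.inl (hp.1.castSucc, hp.2)))) = U := by
      refine Matrix.ext fun i j => ?_
      simp only [Matrix.submatrix_apply, id_eq]
      show U i (er.symm (er j)) = U i j
      rw [Equiv.symm_apply_apply]
    rw [hUU]; exact hU
  · have hVV : (V.submatrix ⇑ec.symm id).submatrix
        (Sum.elim (fun j : Fin m => Sum.inl (Fin.last ε, j))
          (Sum.elim (fun em : Fin ε × Fin m => Sum.inl (em.1.castSucc, em.2))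
            (fun hp : Fin η × Fin p => Sum.inr hp))) id = V := by
      refine Matrix.ext fun i j => ?_
      simp only [Matrix.submatrix_apply, id_eq]
      show V (ec.symm (ec i)) j = V i j
      rw [Equiv.symm_apply_apply]
    rw [hVV]; exact hV
  · have key1 : U.submatrix id ⇑er.symm * CK = U * CK.submatrix (⇑er) id := by
      have hck : CK = (CK.submatrix (⇑er) id).submatrix (⇑er.symm) id := by
        ext i j; simp
      conv_lhs => rw [hck]
      rw [Matrix.submatrix_mul_equiv U (CK.submatrix (⇑er) id) id er.symm id,
        Matrix.submatrix_id_id]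
    have key2 : U * CK.submatrix (⇑er) id * V.submatrix ⇑ec.symm id
        = (U * CK.submatrix (⇑er) (⇑ec)) * V := by
      have hw : U * CK.submatrix (⇑er) id
          = (U * CK.submatrix (⇑er) (⇑ec)).submatrix id ⇑ec.symm := by
        ext i j
        simp [Matrix.mul_apply]
      rw [hw, Matrix.submatrix_mul_equiv (U * CK.submatrix (⇑er) (⇑ec)) V id ec.symm id,
        Matrix.submatrix_id_id]
    rw [key1, key2, hS, h1, h2]
end
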